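/- arXiv:2401.16296 — 11 statements merged into one kernel-verified Lean document; each statement's English description precedes it below -/
import Mathlib

section
/- Let G be a finite simple graph, let H be a graph containing neither K₃ nor P₃ as an induced subgraph, and suppose H is an induced subgraph of G. Then H is an induced subgraph of every graph G' obtainable from G via a single vertex split. -/
open SimpleGraph

/-- `G'` is obtained from the simple graph `G` by splitting the vertex `v` into the two
new nonadjacent vertices `v₁, v₂`: the remaining vertices are identified by `keep`,
adjacency among them is preserved, the neighborhoods of `v₁` and `v₂` are subsets of
(the copy of) `N_G(v)`, and together they cover `N_G(v)`. -/
structure VertexSplit {V : Type*} {W : Type*} (G : SimpleGraph V) (G' : SimpleGraph W)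
    (v : V) (v₁ v₂ : W) where
  keep : {u : V // u ≠ v} ≃ {w : W // w ≠ v₁ ∧ w ≠ v₂}
  ne : v₁ ≠ v₂
  newNotAdj : ¬ G'.Adj v₁ v₂
  adj_keep : ∀ a b : {u : V // u ≠ v}, G'.Adj (keep a).1 (keep b).1 ↔ G.Adj a.1 b.1
  adj_new₁ : ∀ a : {u : V // u ≠ v}, G'.Adj (keep a).1 v₁ → G.Adj a.1 v
  adj_new₂ : ∀ a : {u : V // u ≠ v}, G'.Adj (keep a).1 v₂ → G.Adj a.1 v
  adj_cover : ∀ a : {u : V // u ≠ v}, G.Adj a.1 v → G'.Adj (keep a).1 v₁ ∨ G'.Adj (keep a).1 v₂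

/-- `w` is a descendant of `u` with respect to the split `D`: the split vertex `v` has the
two descendants `v₁, v₂`, every other vertex is its own unique descendant. -/
def VertexSplit.Desc {V W : Type*} {G : SimpleGraph V} {G' : SimpleGraph W}
    {v : V} {v₁ v₂ : W} (D : VertexSplit G G' v v₁ v₂) (u : V) (w : W) : Prop :=
  (u = v ∧ (w = v₁ ∨ w = v₂)) ∨ ∃ h : u ≠ v, w = (D.keep ⟨u, h⟩).1

/-- If `H` contains neither `K₃` nor `P₃` as an induced subgraph and `H` is an induced
subgraph of `G`, then `H` is an induced subgraph of every graph obtained from `G`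
by a single vertex split. -/
theorem split_preserves_K3P3free_induced_subgraphs {α V W : Type}
    [Fintype α] [Fintype V] [Fintype W]
    (H : SimpleGraph α) (G : SimpleGraph V)
    (hK3free : ¬ Nonempty ((⊤ : SimpleGraph (Fin 3)) ↪g H))
    (hP3free : ¬ Nonempty (pathGraph 3 ↪g H))
    (hHG : Nonempty (H ↪g G))
    (G' : SimpleGraph W) (v : V) (v₁ v₂ : W) (D : VertexSplit G G' v v₁ v₂) :
    Nonempty (H ↪g G') := by
  classical
  obtain ⟨f⟩ := hHG
  -- H has maximum degree at most 1
  have hdeg : ∀ a b c : α, H.Adj a b → H.Adj a c → b = c := by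
    intro a b c hab hac
    by_contra hbc
    by_cases h : H.Adj b c
    · refine hK3free ⟨⟨⟨![a, b, c], ?_⟩, ?_⟩⟩
      · intro i j hij
        fin_cases i <;> fin_cases j <;>
          simp_all [hab.ne, hac.ne, hab.ne', hac.ne', h.ne, h.ne'] <;> tauto
      · intro i j
        fin_cases i <;> fin_cases j <;>
          simp [hab, hac, h, hab.symm, hac.symm, h.symm, SimpleGraph.irrefl] <;>
          first
            | exact (H.irrefl ·)
            | exact hab | exact hab.symm | exact hac | exact hac.symm | exact h | exact h.symm
            | decide
    · have hcb : ¬ H.Adj c b := fun hcb => h hcb.symm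
      refine hP3free ⟨⟨⟨![b, a, c], ?_⟩, ?_⟩⟩
      · intro i j hij
        fin_cases i <;> fin_cases j <;>
          simp_all [hab.ne, hac.ne, hab.ne', hac.ne'] <;> tauto
      · intro i j
        fin_cases i <;> fin_cases j <;>
          simp [pathGraph_adj, hab, hac, hab.symm, hac.symm, h, hcb] <;>
          first
            | exact (H.irrefl ·)
            | exact hab | exact hab.symm | exact hac | exact hac.symm | exact h | exact hcb
            | decide
  by_cases hv : ∃ a₀ : α, f a₀ = v
  · obtain ⟨a₀, ha₀⟩ := hv
    have hne : ∀ a : α, a ≠ a₀ → f a ≠ v :=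
      fun a h e => h (f.injective (e.trans ha₀.symm))
    have key : ∀ t : W, (t = v₁ ∨ t = v₂) →
        (∀ a : {u : V // u ≠ v}, G'.Adj (D.keep a).1 t → G.Adj a.1 v) →
        (∀ b (hb : b ≠ a₀), H.Adj a₀ b → G'.Adj (D.keep ⟨f b, hne b hb⟩).1 t) →
        Nonempty (H ↪g G') := by
      intro t htv ht hbt
      have hkt : ∀ x : {u : V // u ≠ v}, (D.keep x).1 ≠ t := by
        intro x
        rcases htv with rfl | rfl
        exacts [(D.keep x).2.1, (D.keep x).2.2]
      refine ⟨⟨⟨fun a => if h : a = a₀ then t else (D.keep ⟨f a, hne a h⟩).1, ?_⟩, ?_⟩⟩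
      · intro a b hab
        dsimp only at hab
        by_cases ha : a = a₀ <;> by_cases hb : b = a₀
        · rw [ha, hb]
        · rw [dif_pos ha, dif_neg hb] at hab
          exact absurd hab.symm (hkt _)
        · rw [dif_neg ha, dif_pos hb] at hab
          exact absurd hab (hkt _)
        · rw [dif_neg ha, dif_neg hb] at hab
          exact f.injective (Subtype.mk_eq_mk.mp (D.keep.injective (Subtype.ext hab)))
      · intro a b
        show G'.Adj (if h : a = a₀ then t else (D.keep ⟨f a, hne a h⟩).1)
          (if h : b = a₀ then t else (D.keep ⟨f b, hne b h⟩).1) ↔ H.Adj a b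
        by_cases ha : a = a₀ <;> by_cases hb : b = a₀
        · subst ha; subst hb
          rw [dif_pos rfl]
          simp [SimpleGraph.irrefl]
        · subst ha
          rw [dif_pos rfl, dif_neg hb]
          constructor
          · intro hadj
            have : G.Adj (f b) v := ht _ hadj.symm
            rw [← ha₀] at this
            exact (f.map_rel_iff.mp this).symm
          · intro hadj
            exact (hbt b hb hadj).symm
        · subst hb
          rw [dif_pos rfl, dif_neg ha]
          constructor
          · intro hadj
            have : G.Adj (f a) v := ht _ hadj
            rw [← ha₀] at this
            exact f.map_rel_iff.mp this
          · intro hadj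
            exact hbt a ha hadj.symm
        · rw [dif_neg ha, dif_neg hb]
          exact (D.adj_keep _ _).trans f.map_rel_iff
    by_cases hnb : ∃ b₀, H.Adj a₀ b₀
    · obtain ⟨b₀, hb₀⟩ := hnb
      have hGb : G.Adj (f b₀) v := by
        rw [← ha₀]; exact f.map_rel_iff.mpr hb₀.symm
      rcases D.adj_cover ⟨f b₀, hne b₀ hb₀.ne'⟩ hGb with h1 | h2
      · refine key v₁ (Or.inl rfl) D.adj_new₁ (fun b hb hab => ?_)
        have : b = b₀ := hdeg a₀ b b₀ hab hb₀
        subst this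
        exact h1
      · refine key v₂ (Or.inr rfl) D.adj_new₂ (fun b hb hab => ?_)
        have : b = b₀ := hdeg a₀ b b₀ hab hb₀
        subst this
        exact h2
    · exact key v₁ (Or.inl rfl) D.adj_new₁ (fun b hb hab => absurd ⟨b, hab⟩ hnb)
  · push_neg at hv
    refine ⟨⟨⟨fun a => (D.keep ⟨f a, hv a⟩).1, ?_⟩, ?_⟩⟩
    · intro a b h
      exact f.injective (Subtype.mk_eq_mk.mp (D.keep.injective (Subtype.ext h)))
    · intro a b
      exact (D.adj_keep _ _).trans f.map_rel_iff
end

section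
/- Let G = (V, E) be a finite simple graph, let I be its set of isolated vertices, and let k ∈ ℕ. Then there exists a splitting sequence G₀, …, G_ℓ with G₀ = G, ℓ ≤ k, and G_ℓ containing neither P₃ nor K₃ as an induced subgraph, if and only if k + |V| ≥ 2·|E| + |I|. -/
open SimpleGraph

/-- A finite simple graph with an arbitrary vertex type. -/
structure FinGraph : Type 1 where
  V : Type
  fin : Finite V
  G : SimpleGraph V

/-- `B` is obtained from `A` by a single vertex split. -/
def FinGraph.Step (A B : FinGraph) : Prop :=
  ∃ (v : A.V) (v₁ v₂ : B.V), Nonempty (VertexSplit A.G B.G v v₁ v₂)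

section Aux

open Finset

/-- The potential function: `Σ_w (deg w - 1)` (truncated subtraction). -/
noncomputable def gphi {W : Type} [Fintype W] (H : SimpleGraph W) : ℕ :=
  ∑ w : W, ((H.neighborSet w).ncard - 1)

lemma gphi_congr {W : Type} (i1 i2 : Fintype W) (H : SimpleGraph W) :
    @gphi W i1 H = @gphi W i2 H := by rw [Subsingleton.elim i1 i2]

noncomputable def gphiF (A : FinGraph) : ℕ :=
  @gphi A.V (@Fintype.ofFinite A.V A.fin) A.G

lemma gphiF_mk {W : Type} [Fintype W] (H : SimpleGraph W) (hf : Finite W) :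
    gphiF ⟨W, hf, H⟩ = gphi H := gphi_congr _ _ H

/-- A vertex split decreases the potential by at most one. -/
lemma gphi_le_of_split {V W : Type} [Fintype V] [Fintype W] {G : SimpleGraph V}
    {G' : SimpleGraph W} {v : V} {v₁ v₂ : W} (D : VertexSplit G G' v v₁ v₂) :
    gphi G ≤ gphi G' + 1 := by
  classical
  -- termwise bound for `u ≠ v`
  have hterm : ∀ (u : V) (hu : u ≠ v),
      (G.neighborSet u).ncard ≤ (G'.neighborSet (D.keep ⟨u, hu⟩).1).ncard := by
    intro u hu
    apply Set.ncard_le_ncard_of_injOn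
      (fun b => if hb : b = v then
          (if G'.Adj (D.keep ⟨u, hu⟩).1 v₁ then v₁ else v₂)
        else (D.keep ⟨b, hb⟩).1)
    · intro b hb
      rw [SimpleGraph.mem_neighborSet] at hb
      by_cases hbv : b = v
      · subst hbv
        simp only [dif_pos]
        have hc := D.adj_cover ⟨u, hu⟩ hb
        split_ifs with h1
        · exact h1
        · exact hc.resolve_left h1
      · simp only [dif_neg hbv]
        exact (D.adj_keep ⟨u, hu⟩ ⟨b, hbv⟩).mpr hb
    · intro b₁ h₁ b₂ h₂ heq
      by_cases hb1 : b₁ = v <;> by_cases hb2 : b₂ = v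
      · exact hb1.trans hb2.symm
      · simp only [dif_pos hb1, dif_neg hb2] at heq
        exfalso
        have := (D.keep ⟨b₂, hb2⟩).2
        split_ifs at heq
        · exact this.1 heq.symm
        · exact this.2 heq.symm
      · simp only [dif_neg hb1, dif_pos hb2] at heq
        exfalso
        have := (D.keep ⟨b₁, hb1⟩).2
        split_ifs at heq
        · exact this.1 heq
        · exact this.2 heq
      · simp only [dif_neg hb1, dif_neg hb2] at heq
        have := D.keep.injective (Subtype.coe_injective heq)
        exact congrArg Subtype.val this

  -- bound for `v`
  have hv : (G.neighborSet v).ncard ≤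
      (G'.neighborSet v₁).ncard + (G'.neighborSet v₂).ncard := by
    refine le_trans ?_ (Set.ncard_union_le _ _)
    apply Set.ncard_le_ncard_of_injOn
      (fun b => if hb : b = v then v₁ else (D.keep ⟨b, hb⟩).1)
    · intro b hb
      rw [SimpleGraph.mem_neighborSet] at hb
      have hbv : b ≠ v := fun h => G.irrefl (h ▸ hb)
      simp only [dif_neg hbv]
      have hc := D.adj_cover ⟨b, hbv⟩ (hb.symm)
      rcases hc with h | h
      · exact Or.inl h.symm
      · exact Or.inr h.symm
    · intro b₁ h₁ b₂ h₂ heq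
      rw [SimpleGraph.mem_neighborSet] at h₁ h₂
      have hb1 : b₁ ≠ v := fun h => G.irrefl (h ▸ h₁)
      have hb2 : b₂ ≠ v := fun h => G.irrefl (h ▸ h₂)
      simp only [dif_neg hb1, dif_neg hb2] at heq
      have := D.keep.injective (Subtype.coe_injective heq)
      exact congrArg Subtype.val this

  -- assemble
  set t : V → ℕ := fun u => (G.neighborSet u).ncard - 1 with ht
  set t' : W → ℕ := fun w => (G'.neighborSet w).ncard - 1 with ht'
  set F : V → W := fun u => if h : u = v then v₁ else (D.keep ⟨u, h⟩).1 with hF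
  have hG : gphi G = t v + ∑ u ∈ Finset.univ.erase v, t u :=
    (Finset.add_sum_erase _ t (Finset.mem_univ v)).symm
  have hsum1 : ∑ u ∈ Finset.univ.erase v, t u ≤ ∑ u ∈ Finset.univ.erase v, t' (F u) := by
    apply Finset.sum_le_sum
    intro u hu
    have hu' : u ≠ v := (Finset.mem_erase.mp hu).1
    have := hterm u hu'
    simp only [ht, ht', hF, dif_neg hu']
    omega
  have hinj : ∀ x ∈ Finset.univ.erase v, ∀ y ∈ Finset.univ.erase v, F x = F y → x = y := by
    intro x hx y hy hxy
    have hx' : x ≠ v := (Finset.mem_erase.mp hx).1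
    have hy' : y ≠ v := (Finset.mem_erase.mp hy).1
    simp only [hF, dif_neg hx', dif_neg hy'] at hxy
    have := D.keep.injective (Subtype.coe_injective hxy)
    exact congrArg Subtype.val this
  have hsum2 : ∑ u ∈ Finset.univ.erase v, t' (F u)
      = ∑ w ∈ (Finset.univ.erase v).image F, t' w := (Finset.sum_image hinj).symm
  set S : Finset W := (Finset.univ.erase v).image F with hS
  have hv₁S : v₁ ∉ S := by
    intro h
    obtain ⟨x, hx, hx'⟩ := Finset.mem_image.mp h
    have hxv : x ≠ v := (Finset.mem_erase.mp hx).1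
    simp only [hF, dif_neg hxv] at hx'
    exact (D.keep ⟨x, hxv⟩).2.1 hx'
  have hv₂S : v₂ ∉ S := by
    intro h
    obtain ⟨x, hx, hx'⟩ := Finset.mem_image.mp h
    have hxv : x ≠ v := (Finset.mem_erase.mp hx).1
    simp only [hF, dif_neg hxv] at hx'
    exact (D.keep ⟨x, hxv⟩).2.2 hx'
  have hfinal : t' v₁ + t' v₂ + ∑ w ∈ S, t' w ≤ gphi G' := by
    have h1 : t' v₂ + ∑ w ∈ S, t' w = ∑ w ∈ insert v₂ S, t' w :=
      (Finset.sum_insert hv₂S).symm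
    have hv₁' : v₁ ∉ insert v₂ S := by
      simp only [Finset.mem_insert]
      rintro (h | h)
      · exact D.ne h
      · exact hv₁S h
    have h2 : t' v₁ + (t' v₂ + ∑ w ∈ S, t' w) = ∑ w ∈ insert v₁ (insert v₂ S), t' w := by
      rw [h1]; exact (Finset.sum_insert hv₁').symm
    have h3 : ∑ w ∈ insert v₁ (insert v₂ S), t' w ≤ ∑ w : W, t' w :=
      Finset.sum_le_sum_of_subset (Finset.subset_univ _)
    calc t' v₁ + t' v₂ + ∑ w ∈ S, t' w = t' v₁ + (t' v₂ + ∑ w ∈ S, t' w) := by ring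
      _ = ∑ w ∈ insert v₁ (insert v₂ S), t' w := h2
      _ ≤ ∑ w : W, t' w := h3
      _ = gphi G' := rfl
  have htv : t v ≤ t' v₁ + t' v₂ + 1 := by
    simp only [ht, ht']
    omega
  calc gphi G = t v + ∑ u ∈ Finset.univ.erase v, t u := hG
    _ ≤ (t' v₁ + t' v₂ + 1) + ∑ w ∈ S, t' w := by
        have := hsum1.trans (le_of_eq hsum2)
        omega
    _ ≤ gphi G' + 1 := by omega

lemma gphiF_step {A B : FinGraph} (h : A.Step B) : gphiF A ≤ gphiF B + 1 := by
  obtain ⟨v, v₁, v₂, ⟨D⟩⟩ := h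
  have hA : Finite A.V := A.fin
  have hB : Finite B.V := B.fin
  letI iA := Fintype.ofFinite A.V
  letI iB := Fintype.ofFinite B.V
  have e1 : gphiF A = @gphi A.V iA A.G := gphi_congr _ _ _
  have e2 : gphiF B = @gphi B.V iB B.G := gphi_congr _ _ _
  rw [e1, e2]
  exact gphi_le_of_split D

/-- Adjacency for the graph obtained by splitting off the single neighbor `a` of `v`
to the new vertex `none`. -/
def splitAdj {W : Type} (H : SimpleGraph W) (v a : W) : Option W → Option W → Prop
  | some x, some y => H.Adj x y ∧ ¬(x = v ∧ y = a) ∧ ¬(x = a ∧ y = v)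
  | some x, none => x = a
  | none, some y => y = a
  | none, none => False

def splitGraph {W : Type} (H : SimpleGraph W) (v a : W) : SimpleGraph (Option W) where
  Adj := splitAdj H v a
  symm := by
    constructor
    rintro (_ | x) (_ | y) h
    · exact h.elim
    · exact h
    · exact h
    · exact ⟨h.1.symm, fun hc => h.2.2 ⟨hc.2, hc.1⟩, fun hc => h.2.1 ⟨hc.2, hc.1⟩⟩
  loopless := by
    constructor
    rintro (_ | x) h
    · exact h.elim
    · exact H.irrefl h.1

lemma splitGraph_adj_some_some {W : Type} (H : SimpleGraph W) (v a : W) (x y : W) :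
    (splitGraph H v a).Adj (some x) (some y) ↔
      H.Adj x y ∧ ¬(x = v ∧ y = a) ∧ ¬(x = a ∧ y = v) := Iff.rfl

lemma splitGraph_adj_some_none {W : Type} (H : SimpleGraph W) (v a : W) (x : W) :
    (splitGraph H v a).Adj (some x) none ↔ x = a := Iff.rfl

lemma splitGraph_adj_none_some {W : Type} (H : SimpleGraph W) (v a : W) (y : W) :
    (splitGraph H v a).Adj none (some y) ↔ y = a := Iff.rfl

/-- The splitting above is a `VertexSplit` of `v` into `some v` and `none`. -/
noncomputable def splitVS {W : Type} (H : SimpleGraph W) (v a : W) (hva : H.Adj v a) :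
    VertexSplit H (splitGraph H v a) v (some v) none where
  keep :=
    { toFun := fun u => ⟨some u.1, by simp [u.2], by simp⟩
      invFun := fun w => match w with
        | ⟨some x, hx⟩ => ⟨x, fun h => hx.1 (by rw [h])⟩
        | ⟨none, hx⟩ => absurd rfl hx.2
      left_inv := fun u => rfl
      right_inv := by rintro ⟨(_ | x), hx⟩
                      · exact absurd rfl hx.2
                      · rfl }
  ne := by simp
  newNotAdj := fun h => hva.ne h
  adj_keep := by
    rintro ⟨x, hx⟩ ⟨y, hy⟩
    show (splitGraph H v a).Adj (some x) (some y) ↔ H.Adj x y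
    rw [splitGraph_adj_some_some]
    constructor
    · exact fun h => h.1
    · intro h
      exact ⟨h, fun hc => hx hc.1, fun hc => hy hc.2⟩
  adj_new₁ := by
    rintro ⟨x, hx⟩ h
    exact ((splitGraph_adj_some_some H v a x v).mp h).1
  adj_new₂ := by
    rintro ⟨x, hx⟩ h
    have hxa : x = a := (splitGraph_adj_some_none H v a x).mp h
    show H.Adj x v
    subst hxa
    exact hva.symm
  adj_cover := by
    rintro ⟨x, hx⟩ h
    by_cases hxa : x = a
    · exact Or.inr ((splitGraph_adj_some_none H v a x).mpr hxa)
    · refine Or.inl ((splitGraph_adj_some_some H v a x v).mpr ⟨h, ?_, ?_⟩)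
      · rintro ⟨h1, _⟩; exact hx h1
      · rintro ⟨h1, _⟩; exact hxa h1

/-- Splitting off one neighbor of a vertex of degree at least two strictly decreases
the potential. -/
lemma gphi_split {W : Type} [Fintype W] (H : SimpleGraph W) (v a : W) (hva : H.Adj v a)
    (hdeg : 2 ≤ (H.neighborSet v).ncard) :
    gphi (splitGraph H v a) + 1 ≤ gphi H := by
  classical
  have hvna : v ≠ a := hva.ne
  have hmem_va : a ∈ H.neighborSet v := hva
  have hmem_av : v ∈ H.neighborSet a := hva.symm
  -- neighbor set computations
  have hnone : (splitGraph H v a).neighborSet none = {some a} := by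
    ext w
    cases w with
    | none =>
      simp only [SimpleGraph.mem_neighborSet, Set.mem_singleton_iff]
      constructor
      · intro h; exact ((splitGraph H v a).irrefl h).elim
      · intro h; exact absurd h (by simp)
    | some y =>
      simp only [SimpleGraph.mem_neighborSet, splitGraph_adj_none_some,
        Set.mem_singleton_iff, Option.some_inj]
  have hsomev : (splitGraph H v a).neighborSet (some v)
      = some '' (H.neighborSet v \ {a}) := by
    ext w
    cases w with
    | none =>
      simp only [SimpleGraph.mem_neighborSet, splitGraph_adj_some_none, Set.mem_image]
      constructor
      · intro h; exact absurd h hvna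
      · rintro ⟨x, _, hx⟩; exact absurd hx (by simp)
    | some y =>
      simp only [SimpleGraph.mem_neighborSet, splitGraph_adj_some_some, Set.mem_image,
        Set.mem_diff, Set.mem_singleton_iff]
      constructor
      · rintro ⟨h1, h2, _⟩
        exact ⟨y, ⟨h1, fun hy => h2 ⟨trivial, hy⟩⟩, rfl⟩
      · rintro ⟨x, ⟨hx1, hx2⟩, hx⟩
        obtain rfl : x = y := Option.some_inj.mp hx
        exact ⟨hx1, fun hc => hx2 hc.2, fun hc => hvna hc.1⟩
  have hsomex : ∀ x, x ≠ v → x ≠ a →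
      (splitGraph H v a).neighborSet (some x) = some '' (H.neighborSet x) := by
    intro x hxv hxa
    ext w
    cases w with
    | none =>
      simp only [SimpleGraph.mem_neighborSet, splitGraph_adj_some_none, Set.mem_image]
      constructor
      · intro h; exact absurd h hxa
      · rintro ⟨y, _, hy⟩; exact absurd hy (by simp)
    | some y =>
      simp only [SimpleGraph.mem_neighborSet, splitGraph_adj_some_some, Set.mem_image,
        Option.some_inj]
      constructor
      · rintro ⟨h1, _, _⟩; exact ⟨y, h1, rfl⟩
      · rintro ⟨z, hz, rfl⟩
        exact ⟨hz, fun hc => hxv hc.1, fun hc => hxa hc.1⟩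
  have hsomea : (splitGraph H v a).neighborSet (some a)
      = insert none (some '' (H.neighborSet a \ {v})) := by
    ext w
    cases w with
    | none =>
      simp only [SimpleGraph.mem_neighborSet, splitGraph_adj_some_none, Set.mem_insert_iff]
      simp
    | some y =>
      simp only [SimpleGraph.mem_neighborSet, splitGraph_adj_some_some, Set.mem_insert_iff,
        Set.mem_image, Set.mem_diff, Set.mem_singleton_iff]
      constructor
      · rintro ⟨h1, h2, h3⟩
        exact Or.inr ⟨y, ⟨h1, fun hy => h3 ⟨trivial, hy⟩⟩, rfl⟩
      · rintro (h | ⟨x, ⟨hx1, hx2⟩, hx⟩)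
        · exact absurd h (by simp)
        · obtain rfl : x = y := Option.some_inj.mp hx
          exact ⟨hx1, fun hc => hvna hc.1.symm, fun hc => hx2 hc.2⟩
  -- ncard computations
  have hinj : Function.Injective (some : W → Option W) := Option.some_injective W
  have hn_none : ((splitGraph H v a).neighborSet none).ncard = 1 := by
    rw [hnone]; exact Set.ncard_singleton _
  have hn_somev : ((splitGraph H v a).neighborSet (some v)).ncard
      = (H.neighborSet v).ncard - 1 := by
    rw [hsomev, Set.ncard_image_of_injective _ hinj,
      Set.ncard_diff_singleton_of_mem hmem_va]
  have hn_somex : ∀ x, x ≠ v → ((splitGraph H v a).neighborSet (some x)).ncard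
      = (H.neighborSet x).ncard := by
    intro x hxv
    by_cases hxa : x = a
    · subst hxa
      rw [hsomea, Set.ncard_insert_of_notMem (by simp),
        Set.ncard_image_of_injective _ hinj, Set.ncard_diff_singleton_of_mem hmem_av]
      have : 0 < (H.neighborSet x).ncard :=
        (Set.ncard_pos (Set.toFinite _)).mpr ⟨v, hmem_av⟩
      omega
    · rw [hsomex x hxv hxa, Set.ncard_image_of_injective _ hinj]
  -- assemble sums
  have hsum : gphi (splitGraph H v a)
      = (((splitGraph H v a).neighborSet (some v)).ncard - 1)
        + ∑ x ∈ Finset.univ.erase v, (((splitGraph H v a).neighborSet (some x)).ncard - 1) := by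
    show (∑ w : Option W, (((splitGraph H v a).neighborSet w).ncard - 1)) = _
    rw [Fintype.sum_option, hn_none]
    simp only [Nat.sub_self, zero_add]
    exact (Finset.add_sum_erase _ (fun x => (((splitGraph H v a).neighborSet (some x)).ncard - 1))
      (Finset.mem_univ v)).symm
  have hsumH : gphi H = ((H.neighborSet v).ncard - 1)
      + ∑ x ∈ Finset.univ.erase v, ((H.neighborSet x).ncard - 1) :=
    (Finset.add_sum_erase _ (fun x => ((H.neighborSet x).ncard - 1)) (Finset.mem_univ v)).symm
  have hcongr : ∑ x ∈ Finset.univ.erase v, (((splitGraph H v a).neighborSet (some x)).ncard - 1)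
      = ∑ x ∈ Finset.univ.erase v, ((H.neighborSet x).ncard - 1) := by
    apply Finset.sum_congr rfl
    intro x hx
    rw [hn_somex x (Finset.mem_erase.mp hx).1]
  rw [hsum, hcongr, hsumH, hn_somev]
  omega

lemma small_of_free {W : Type} [Finite W] (H : SimpleGraph W)
    (hP : ¬ Nonempty (pathGraph 3 ↪g H))
    (hK : ¬ Nonempty ((⊤ : SimpleGraph (Fin 3)) ↪g H)) :
    ∀ w, (H.neighborSet w).ncard ≤ 1 := by
  intro w
  by_contra hc
  push_neg at hc
  obtain ⟨a, ha, b, hb, hab⟩ := (Set.one_lt_ncard (Set.toFinite _)).mp hc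
  rw [SimpleGraph.mem_neighborSet] at ha hb
  have haw : a ≠ w := ha.ne'
  have hbw : b ≠ w := hb.ne'
  by_cases hadj : H.Adj a b
  · apply hK
    refine ⟨⟨⟨![a, b, w], ?_⟩, ?_⟩⟩
    · intro i j hij
      fin_cases i <;> fin_cases j <;>
        simp_all [hab, haw, hbw]
    · intro i j
      change H.Adj (![a, b, w] i) (![a, b, w] j) ↔ _
      fin_cases i <;> fin_cases j <;>
        simp [hadj, hadj.symm, ha, hb, ha.symm, hb.symm, hab, haw, hbw,
          Ne.symm hab, Ne.symm haw, Ne.symm hbw]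
  · apply hP
    have hadj' : ¬ H.Adj b a := fun hh => hadj (hh.symm)
    refine ⟨⟨⟨![a, w, b], ?_⟩, ?_⟩⟩
    · intro i j hij
      fin_cases i <;> fin_cases j <;> simp_all [hab, haw, hbw]
    · intro i j
      change H.Adj (![a, w, b] i) (![a, w, b] j) ↔ _
      fin_cases i <;> fin_cases j <;>
        simp [pathGraph_adj, hadj, hadj', ha, hb, ha.symm, hb.symm, hab, haw, hbw]

lemma free_of_small {W : Type} [Finite W] (H : SimpleGraph W)
    (h : ∀ w, (H.neighborSet w).ncard ≤ 1) :
    ¬ Nonempty (pathGraph 3 ↪g H) ∧ ¬ Nonempty ((⊤ : SimpleGraph (Fin 3)) ↪g H) := by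
  constructor
  · rintro ⟨e⟩
    have h01 : (pathGraph 3).Adj 0 1 := by rw [pathGraph_adj]; left; rfl
    have h12 : (pathGraph 3).Adj 1 2 := by rw [pathGraph_adj]; left; rfl
    have e01 : H.Adj (e 0) (e 1) := e.map_rel_iff.mpr h01
    have e12 : H.Adj (e 1) (e 2) := e.map_rel_iff.mpr h12
    have hne : e 0 ≠ e 2 := fun hcc =>
      absurd (e.injective hcc) (by decide)
    have h1 : 1 < (H.neighborSet (e 1)).ncard :=
      (Set.one_lt_ncard (Set.toFinite _)).mpr ⟨e 0, e01.symm, e 2, e12, hne⟩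
    exact absurd (h (e 1)) (by omega)
  · rintro ⟨e⟩
    have e01 : H.Adj (e 0) (e 1) := e.map_rel_iff.mpr (by decide)
    have e02 : H.Adj (e 0) (e 2) := e.map_rel_iff.mpr (by decide)
    have hne : e 1 ≠ e 2 := fun hcc =>
      absurd (e.injective hcc) (by decide)
    have h1 : 1 < (H.neighborSet (e 0)).ncard :=
      (Set.one_lt_ncard (Set.toFinite _)).mpr ⟨e 1, e01, e 2, e02, hne⟩
    exact absurd (h (e 0)) (by omega)

lemma gphiF_eq_zero {A : FinGraph} (h : ∀ w, (A.G.neighborSet w).ncard ≤ 1) :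
    gphiF A = 0 := by
  apply Finset.sum_eq_zero
  intro w _
  have := h w
  omega

lemma build : ∀ (n : ℕ) (W : Type) (iW : Fintype W) (H : SimpleGraph W),
    @gphi W iW H ≤ n →
    ∃ (ℓ : ℕ) (Gs : ℕ → FinGraph), ℓ ≤ n ∧ Gs 0 = ⟨W, Finite.of_fintype W, H⟩ ∧
      (∀ i < ℓ, (Gs i).Step (Gs (i + 1))) ∧
      (∀ w : (Gs ℓ).V, ((Gs ℓ).G.neighborSet w).ncard ≤ 1) := by
  intro n
  induction n with
  | zero =>
    intro W iW H h
    letI := iW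
    refine ⟨0, fun _ => ⟨W, Finite.of_fintype W, H⟩, le_refl 0, rfl,
      fun i hi => absurd hi (by omega), ?_⟩
    intro w
    show (H.neighborSet w).ncard ≤ 1
    have h0 : (∑ w : W, ((H.neighborSet w).ncard - 1)) = 0 := Nat.le_zero.mp h
    have := Finset.sum_eq_zero_iff.mp h0 w (Finset.mem_univ w)
    omega
  | succ n ih =>
    intro W iW H h
    letI := iW
    by_cases hle : gphi H ≤ n
    · obtain ⟨ℓ, Gs, h1, h2, h3, h4⟩ := ih W iW H hle
      exact ⟨ℓ, Gs, h1.trans (Nat.le_succ n), h2, h3, h4⟩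
    · have hg : gphi H = n + 1 := by omega
      have hex : ∃ v, 2 ≤ (H.neighborSet v).ncard := by
        by_contra hall
        push_neg at hall
        have hz : gphi H = 0 :=
          Finset.sum_eq_zero (fun w _ => by have := hall w; omega)
        omega
      obtain ⟨v, hv⟩ := hex
      have hne : (H.neighborSet v).Nonempty :=
        (Set.ncard_pos (Set.toFinite _)).mp (by omega)
      obtain ⟨a, ha⟩ := hne
      have ha' : H.Adj v a := ha
      have hsp := gphi_split H v a ha' hv
      obtain ⟨ℓ, Gs, h1, h2, h3, h4⟩ :=
        ih (Option W) inferInstance (splitGraph H v a) (by omega)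
      refine ⟨ℓ + 1, fun i => Nat.casesOn i ⟨W, Finite.of_fintype W, H⟩ (fun j => Gs j),
        by omega, rfl, ?_, h4⟩
      intro i hi
      cases i with
      | zero =>
        show FinGraph.Step ⟨W, Finite.of_fintype W, H⟩ (Gs 0)
        rw [h2]
        exact ⟨v, some v, none, ⟨splitVS H v a ha'⟩⟩
      | succ j => exact h3 j (by omega)

lemma ineq_iff {V : Type} [Fintype V] [DecidableEq V] (G : SimpleGraph V)
    [DecidableRel G.Adj] (k : ℕ) :
    2 * G.edgeFinset.card + (Finset.univ.filter (fun v => G.degree v = 0)).card ≤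
      k + Fintype.card V ↔ gphi G ≤ k := by
  have hd : ∀ v : V, (G.neighborSet v).ncard = G.degree v := by
    intro v
    rw [Set.ncard_eq_toFinset_card', Set.toFinset_card,
      SimpleGraph.card_neighborSet_eq_degree]
  have h1 : ∑ v, G.degree v = 2 * G.edgeFinset.card :=
    SimpleGraph.sum_degrees_eq_twice_card_edges G
  have h2 : (Finset.univ.filter (fun v => G.degree v = 0)).card
      = ∑ v : V, (if G.degree v = 0 then 1 else 0) := Finset.card_filter _ _
  have h3 : Fintype.card V = ∑ _v : V, 1 := by simp
  have h4 : gphi G = ∑ v : V, (G.degree v - 1) :=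
    Finset.sum_congr rfl (fun v _ => by rw [hd v])
  have key : ∑ v : V, (G.degree v + if G.degree v = 0 then 1 else 0)
      = ∑ v : V, ((G.degree v - 1) + 1) :=
    Finset.sum_congr rfl (fun v _ => by split_ifs with h0 <;> omega)
  have e : (∑ v, G.degree v) + (∑ v : V, (if G.degree v = 0 then 1 else 0))
      = (∑ v : V, (G.degree v - 1)) + ∑ _v : V, 1 := by
    rw [← Finset.sum_add_distrib, ← Finset.sum_add_distrib]
    exact key
  rw [← h1, h2, h3, h4]
  omega

/-- There is a splitting sequence of at most `k` splits turning `G` into a graph that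
contains neither `P₃` nor `K₃` as an induced subgraph iff `k + |V| ≥ 2·|E| + |I|`. -/
theorem split_to_P3K3_free_iff {V : Type} [Fintype V] [DecidableEq V]
    (G : SimpleGraph V) [DecidableRel G.Adj] (k : ℕ) :
    (∃ (ℓ : ℕ) (Gs : ℕ → FinGraph), ℓ ≤ k ∧ Gs 0 = ⟨V, inferInstance, G⟩ ∧
      (∀ i < ℓ, (Gs i).Step (Gs (i + 1))) ∧
      ¬ Nonempty (pathGraph 3 ↪g (Gs ℓ).G) ∧
      ¬ Nonempty ((⊤ : SimpleGraph (Fin 3)) ↪g (Gs ℓ).G)) ↔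
    2 * G.edgeFinset.card + (Finset.univ.filter (fun v => G.degree v = 0)).card ≤
      k + Fintype.card V := by
  rw [ineq_iff G k]
  constructor
  · rintro ⟨ℓ, Gs, hlk, h0, hstep, hP, hK⟩
    haveI hfin : Finite (Gs ℓ).V := (Gs ℓ).fin
    have hsmall := small_of_free (Gs ℓ).G hP hK
    have hend : gphiF (Gs ℓ) = 0 := gphiF_eq_zero hsmall
    have hchain : ∀ i, i ≤ ℓ → gphiF (Gs 0) ≤ gphiF (Gs i) + i := by
      intro i
      induction i with
      | zero => intro _; omega
      | succ j ihj =>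
        intro hj
        have hs := gphiF_step (hstep j (by omega))
        have := ihj (by omega)
        omega
    have h0' : gphiF (Gs 0) = gphi G := by rw [h0]; exact gphiF_mk G _
    have := hchain ℓ le_rfl
    omega
  · intro hk
    obtain ⟨ℓ, Gs, h1, h2, h3, h4⟩ := build k V ‹_› G hk
    haveI hfin : Finite (Gs ℓ).V := (Gs ℓ).fin
    obtain ⟨hP, hK⟩ := free_of_small (Gs ℓ).G h4
    exact ⟨ℓ, Gs, h1, h2, h3, hP, hK⟩

end Aux
end

section
/- Let G = (V, E) be a finite simple graph without isolated vertices and let M be the set of all vertices of G that occur as the midpoint (degree-2 vertex) of some induced P₃ in G. If {C₁, C₂} is a sigma clique cover of G with C₁ ⊄ C₂ and C₂ ⊄ C₁ (neither set contains the other), then M = C₁ ∩ C₂. -/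
open SimpleGraph

/-- The set of vertices of `G` that are the midpoint of some induced `P₃`. -/
def midpoints {V : Type} (G : SimpleGraph V) : Set V :=
  {v | ∃ a b, a ≠ b ∧ G.Adj v a ∧ G.Adj v b ∧ ¬ G.Adj a b}

/-- If `G` has no isolated vertices and `{C₁, C₂}` is a sigma clique cover of `G` with
neither set contained in the other, then the set of midpoints of induced `P₃`s
is exactly `C₁ ∩ C₂`. -/
theorem sigma_clique_cover_inter_eq_midpoints {V : Type} [Fintype V]
    (G : SimpleGraph V)
    (hiso : ∀ v, ∃ u, G.Adj v u)
    (C₁ C₂ : Set V)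
    (hc₁ : G.IsClique C₁) (hc₂ : G.IsClique C₂)
    (hcov : ∀ u w, G.Adj u w → (u ∈ C₁ ∧ w ∈ C₁) ∨ (u ∈ C₂ ∧ w ∈ C₂))
    (h12 : ¬ C₁ ⊆ C₂) (h21 : ¬ C₂ ⊆ C₁) :
    midpoints G = C₁ ∩ C₂ := by
  ext v
  constructor
  · rintro ⟨a, b, hab, hva, hvb, hnab⟩
    have h1 := hcov v a hva
    have h2 := hcov v b hvb
    rcases h1 with ⟨hv1, ha1⟩ | ⟨hv2, ha2⟩ <;> rcases h2 with ⟨hw1, hb1⟩ | ⟨hw2, hb2⟩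
    · exact absurd (hc₁ ha1 hb1 hab) hnab
    · exact ⟨hv1, hw2⟩
    · exact ⟨hw1, hv2⟩
    · exact absurd (hc₂ ha2 hb2 hab) hnab
  · rintro ⟨hv1, hv2⟩
    obtain ⟨x, hx1, hx2⟩ := Set.not_subset.mp h12
    obtain ⟨y, hy2, hy1⟩ := Set.not_subset.mp h21
    have hvx : v ≠ x := fun h => hx2 (h ▸ hv2)
    have hvy : v ≠ y := fun h => hy1 (h ▸ hv1)
    have hxy : x ≠ y := fun h => hy1 (h ▸ hx1)
    refine ⟨x, y, hxy, hc₁ hv1 hx1 hvx, hc₂ hv2 hy2 hvy, fun hadj => ?_⟩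
    rcases hcov x y hadj with ⟨_, h⟩ | ⟨h, _⟩
    · exact hy1 h
    · exact hx2 h
end

section
/- A finite simple graph G contains neither P₃ nor \overline{K₃} as an induced subgraph if and only if G is the disjoint union of at most two complete graphs. -/
open SimpleGraph

private def mkIndepEmb {V : Type} (G : SimpleGraph V) (a b c : V)
    (hab : a ≠ b) (hac : a ≠ c) (hbc : b ≠ c)
    (nab : ¬ G.Adj a b) (nac : ¬ G.Adj a c) (nbc : ¬ G.Adj b c) :
    (⊥ : SimpleGraph (Fin 3)) ↪g G := by
  have hba := hab.symm
  have hca := hac.symm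
  have hcb := hbc.symm
  have nba : ¬ G.Adj b a := fun h => nab h.symm
  have nca : ¬ G.Adj c a := fun h => nac h.symm
  have ncb : ¬ G.Adj c b := fun h => nbc h.symm
  have nxx : ∀ x : V, ¬ G.Adj x x := fun x => G.irrefl
  refine ⟨⟨![a,b,c], ?_⟩, ?_⟩
  · intro i j h
    fin_cases i <;> fin_cases j <;> simp_all
  · intro i j
    change G.Adj (![a,b,c] i) (![a,b,c] j) ↔ _
    fin_cases i <;> fin_cases j <;> simp_all

private def mkPathEmb {V : Type} (G : SimpleGraph V) (a b c : V)
    (hab : G.Adj a b) (hbc : G.Adj b c) (hac : a ≠ c) (nac : ¬ G.Adj a c) :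
    pathGraph 3 ↪g G := by
  have hab' := hab.ne
  have hba := hab.ne.symm
  have hbc' := hbc.ne
  have hcb := hbc.ne.symm
  have hca := hac.symm
  have hba2 := hab.symm
  have hcb2 := hbc.symm
  have nca : ¬ G.Adj c a := fun h => nac h.symm
  have nxx : ∀ x : V, ¬ G.Adj x x := fun x => G.irrefl
  refine ⟨⟨![a,b,c], ?_⟩, ?_⟩
  · intro i j h
    fin_cases i <;> fin_cases j <;> simp_all
  · intro i j
    change G.Adj (![a,b,c] i) (![a,b,c] j) ↔ _
    fin_cases i <;> fin_cases j <;> simp_all [pathGraph_adj]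

/-- A finite simple graph contains neither `P₃` nor `∁K₃` as an induced subgraph iff
it is the disjoint union of at most two complete graphs. -/
theorem P3K3c_free_iff_two_cliques {V : Type} [Fintype V] (G : SimpleGraph V) :
    (¬ Nonempty (pathGraph 3 ↪g G) ∧ ¬ Nonempty ((⊥ : SimpleGraph (Fin 3)) ↪g G)) ↔
    ∃ A B : Set V, A ∪ B = Set.univ ∧ A ∩ B = ∅ ∧
      G.IsClique A ∧ G.IsClique B ∧ ∀ a ∈ A, ∀ b ∈ B, ¬ G.Adj a b := by
  constructor
  · rintro ⟨hP, hI⟩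
    have trans : ∀ a b c : V, G.Adj a b → G.Adj b c → a ≠ c → G.Adj a c := by
      intro a b c hab hbc hac
      by_contra nac
      exact hP ⟨mkPathEmb G a b c hab hbc hac nac⟩
    by_cases hV : Nonempty V
    · obtain ⟨v⟩ := hV
      refine ⟨{u | u = v ∨ G.Adj v u}, {u | u = v ∨ G.Adj v u}ᶜ, by simp, by simp, ?_, ?_, ?_⟩
      · intro u hu w hw huw
        rcases hu with rfl | hu
        · rcases hw with rfl | hw
          · exact absurd rfl huw
          · exact hw
        · rcases hw with rfl | hw
          · exact hu.symm
          · exact trans u v w hu.symm hw huw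
      · intro u hu w hw huw
        simp only [Set.mem_compl_iff, Set.mem_setOf_eq, not_or] at hu hw
        by_contra nuw
        exact hI ⟨mkIndepEmb G v u w (Ne.symm hu.1) (Ne.symm hw.1) huw hu.2 hw.2 nuw⟩
      · intro a ha b hb hadj
        simp only [Set.mem_compl_iff, Set.mem_setOf_eq, not_or] at hb
        rcases ha with rfl | ha
        · exact hb.2 hadj
        · exact hb.2 (trans v a b ha hadj (Ne.symm hb.1))
    · exact ⟨∅, ∅, by ext x; exact absurd ⟨x⟩ hV, by simp, by simp [SimpleGraph.IsClique],
        by simp [SimpleGraph.IsClique], by simp⟩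
  · rintro ⟨A, B, hAB, hdisj, hA, hB, hsep⟩
    have mem : ∀ x : V, x ∈ A ∨ x ∈ B := by
      intro x
      have : x ∈ A ∪ B := hAB ▸ Set.mem_univ x
      exact this
    constructor
    · rintro ⟨f⟩
      have h01 : G.Adj (f 0) (f 1) := f.map_adj_iff.mpr (by simp [pathGraph_adj])
      have h12 : G.Adj (f 1) (f 2) := f.map_adj_iff.mpr (by simp [pathGraph_adj])
      have h02 : ¬ G.Adj (f 0) (f 2) := fun h => by
        have := f.map_adj_iff.mp h
        simp [pathGraph_adj] at this
      have hne02 : f 0 ≠ f 2 := fun h => by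
        have := f.injective h; exact absurd this (by decide)
      rcases mem (f 0) with h0 | h0 <;> rcases mem (f 2) with h2 | h2
      · exact h02 (hA h0 h2 hne02)
      · rcases mem (f 1) with h1 | h1
        · exact hsep _ h1 _ h2 h12
        · exact hsep _ h0 _ h1 h01
      · rcases mem (f 1) with h1 | h1
        · exact hsep _ h1 _ h0 (h01.symm)
        · exact hsep _ h2 _ h1 (h12.symm)
      · exact h02 (hB h0 h2 hne02)
    · rintro ⟨f⟩
      have inj : ∀ i j : Fin 3, f i = f j → i = j := fun i j h => f.injective h
      have nadj : ∀ i j : Fin 3, ¬ G.Adj (f i) (f j) := fun i j h => by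
        have := f.map_adj_iff.mp h; exact this.elim
      have same : ∀ i j : Fin 3, i ≠ j → (f i ∈ A → f j ∈ A → False) ∧
          (f i ∈ B → f j ∈ B → False) := by
        intro i j hij
        have hne : f i ≠ f j := fun h => hij (inj i j h)
        exact ⟨fun hi hj => nadj i j (hA hi hj hne), fun hi hj => nadj i j (hB hi hj hne)⟩
      rcases mem (f 0) with h0 | h0 <;> rcases mem (f 1) with h1 | h1 <;>
        rcases mem (f 2) with h2 | h2
      · exact (same 0 1 (by decide)).1 h0 h1
      · exact (same 0 1 (by decide)).1 h0 h1
      · exact (same 0 2 (by decide)).1 h0 h2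
      · exact (same 1 2 (by decide)).2 h1 h2
      · exact (same 1 2 (by decide)).1 h1 h2
      · exact (same 0 2 (by decide)).2 h0 h2
      · exact (same 0 1 (by decide)).2 h0 h1
      · exact (same 0 1 (by decide)).2 h0 h1
end

section
/- Let {a, v, b} induce a P₃ in a finite simple graph G with midpoint v (i.e., va, vb ∈ E(G) and ab ∉ E(G)), and let G' be obtained from G by splitting a vertex w ≠ v. Then there exist a descendant a' of a and a descendant b' of b such that {a', v, b'} induces a P₃ in G' with midpoint v. -/
open SimpleGraph

/-- If `{a, v, b}` induces a `P₃` in `G` with midpoint `v` and `G'` is obtained from `G`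
by splitting a vertex `w ≠ v`, then some descendants `a'` of `a` and `b'` of `b` form,
together with (the copy of) `v`, an induced `P₃` in `G'` with midpoint `v`. -/
theorem split_off_midpoint_preserves_P3 {V W : Type} [Fintype V] [Fintype W]
    (G : SimpleGraph V) (G' : SimpleGraph W) (w : V) (w₁ w₂ : W)
    (D : VertexSplit G G' w w₁ w₂)
    (a v b : V) (hvw : v ≠ w) (hab : a ≠ b)
    (hva : G.Adj v a) (hvb : G.Adj v b) (hnab : ¬ G.Adj a b) :
    ∃ a' b' : W, D.Desc a a' ∧ D.Desc b b' ∧ a' ≠ b' ∧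
      G'.Adj (D.keep ⟨v, hvw⟩).1 a' ∧ G'.Adj (D.keep ⟨v, hvw⟩).1 b' ∧
      ¬ G'.Adj a' b' := by
  by_cases haw : a = w
  · -- a is the split vertex; b ≠ w
    have hbw : b ≠ w := fun h => hab (h ▸ haw)
    subst haw
    have hcov := D.adj_cover ⟨v, hvw⟩ hva
    rcases hcov with h1 | h2
    · refine ⟨w₁, (D.keep ⟨b, hbw⟩).1, Or.inl ⟨rfl, Or.inl rfl⟩,
        Or.inr ⟨hbw, rfl⟩, ?_, h1, (D.adj_keep _ _).mpr hvb, ?_⟩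
      · exact fun h => (D.keep ⟨b, hbw⟩).2.1 h.symm
      · intro h
        exact hnab ((D.adj_new₁ ⟨b, hbw⟩ h.symm).symm)
    · refine ⟨w₂, (D.keep ⟨b, hbw⟩).1, Or.inl ⟨rfl, Or.inr rfl⟩,
        Or.inr ⟨hbw, rfl⟩, ?_, h2, (D.adj_keep _ _).mpr hvb, ?_⟩
      · exact fun h => (D.keep ⟨b, hbw⟩).2.2 h.symm
      · intro h
        exact hnab ((D.adj_new₂ ⟨b, hbw⟩ h.symm).symm)
  · by_cases hbw : b = w
    · subst hbw
      have hcov := D.adj_cover ⟨v, hvw⟩ hvb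
      rcases hcov with h1 | h2
      · refine ⟨(D.keep ⟨a, haw⟩).1, w₁, Or.inr ⟨haw, rfl⟩,
          Or.inl ⟨rfl, Or.inl rfl⟩, (D.keep ⟨a, haw⟩).2.1,
          (D.adj_keep _ _).mpr hva, h1, ?_⟩
        intro h
        exact hnab (D.adj_new₁ ⟨a, haw⟩ h)
      · refine ⟨(D.keep ⟨a, haw⟩).1, w₂, Or.inr ⟨haw, rfl⟩,
          Or.inl ⟨rfl, Or.inr rfl⟩, (D.keep ⟨a, haw⟩).2.2,
          (D.adj_keep _ _).mpr hva, h2, ?_⟩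
        intro h
        exact hnab (D.adj_new₂ ⟨a, haw⟩ h)
    · refine ⟨(D.keep ⟨a, haw⟩).1, (D.keep ⟨b, hbw⟩).1, Or.inr ⟨haw, rfl⟩,
        Or.inr ⟨hbw, rfl⟩, ?_, (D.adj_keep _ _).mpr hva,
        (D.adj_keep _ _).mpr hvb, fun h => hnab ((D.adj_keep _ _).mp h)⟩
      intro h
      have : (⟨a, haw⟩ : {u : V // u ≠ w}) = ⟨b, hbw⟩ :=
        D.keep.injective (Subtype.ext h)
      exact hab (congrArg Subtype.val this)
end

section
/- Let G be a finite simple graph, let H ∈ {P₃, K₃}, let X ⊆ V(G) induce a copy of H in G, and let v ∈ X. Let G' be obtained from G by splitting v into descendants v₁, v₂. If neither (X \ {v}) ∪ {v₁} nor (X \ {v}) ∪ {v₂} induces a copy of H in G', then G' contains \overline{P₃} (three vertices spanning exactly one edge) as an induced subgraph. -/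
open SimpleGraph

/-- The image in `W` of a set `X ⊆ V` of old vertices (minus the split vertex) under
the identification `keep` of a vertex split. -/
def VertexSplit.keepImage {V W : Type*} {G : SimpleGraph V} {G' : SimpleGraph W}
    {v : V} {v₁ v₂ : W} (D : VertexSplit G G' v v₁ v₂) (X : Set V) : Set W :=
  {w | ∃ (u : V) (hu : u ≠ v), u ∈ X ∧ w = (D.keep ⟨u, hu⟩).1}


lemma fin3_cases (i : Fin 3) : i = 0 ∨ i = 1 ∨ i = 2 := by fin_cases i <;> simp

lemma pg01 : (pathGraph 3).Adj 0 1 := by simp [pathGraph_adj]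
lemma pg12 : (pathGraph 3).Adj 1 2 := by simp [pathGraph_adj]
lemma pg02 : ¬ (pathGraph 3).Adj 0 2 := by simp [pathGraph_adj]

open Classical in
lemma iso_of_triple_path {W : Type*} (G' : SimpleGraph W) (x y z : W)
    (hxy : x ≠ y) (hyz : y ≠ z) (hxz : x ≠ z) (S : Set W)
    (hS : ∀ w, w ∈ S ↔ w = x ∨ w = y ∨ w = z)
    (axy : G'.Adj x y) (ayz : G'.Adj y z) (naxz : ¬ G'.Adj x z) :
    Nonempty ((G'.induce S) ≃g pathGraph 3) := by
  have naxz' : ¬ G'.Adj z x := fun h => naxz h.symm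
  have hx : x ∈ S := (hS x).2 (Or.inl rfl)
  have hy : y ∈ S := (hS y).2 (Or.inr (Or.inl rfl))
  have hz : z ∈ S := (hS z).2 (Or.inr (Or.inr rfl))
  refine ⟨{ toFun := fun w => if w.1 = x then 0 else if w.1 = y then 1 else 2,
            invFun := fun i => if i = 0 then ⟨x, hx⟩ else if i = 1 then ⟨y, hy⟩ else ⟨z, hz⟩,
            left_inv := ?_, right_inv := ?_, map_rel_iff' := ?_ }⟩
  · rintro ⟨w, hw⟩
    rcases (hS w).1 hw with rfl | rfl | rfl <;>
      simp [hxy, hyz, hxz, hxy.symm, hyz.symm, hxz.symm]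
  · intro i
    rcases fin3_cases i with rfl | rfl | rfl <;>
      simp [hxy, hyz, hxz, hxy.symm, hyz.symm, hxz.symm]
  · rintro ⟨w, hw⟩ ⟨w', hw'⟩
    rcases (hS w).1 hw with rfl | rfl | rfl <;>
      rcases (hS w').1 hw' with rfl | rfl | rfl <;>
        simp [hxy, hyz, hxz, hxy.symm, hyz.symm, hxz.symm, pathGraph_adj,
          axy, ayz, naxz, axy.symm, ayz.symm, naxz']

open Classical in
lemma iso_of_triple_top {W : Type*} (G' : SimpleGraph W) (x y z : W)
    (hxy : x ≠ y) (hyz : y ≠ z) (hxz : x ≠ z) (S : Set W)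
    (hS : ∀ w, w ∈ S ↔ w = x ∨ w = y ∨ w = z)
    (axy : G'.Adj x y) (ayz : G'.Adj y z) (axz : G'.Adj x z) :
    Nonempty ((G'.induce S) ≃g (⊤ : SimpleGraph (Fin 3))) := by
  have hx : x ∈ S := (hS x).2 (Or.inl rfl)
  have hy : y ∈ S := (hS y).2 (Or.inr (Or.inl rfl))
  have hz : z ∈ S := (hS z).2 (Or.inr (Or.inr rfl))
  refine ⟨{ toFun := fun w => if w.1 = x then 0 else if w.1 = y then 1 else 2,
            invFun := fun i => if i = 0 then ⟨x, hx⟩ else if i = 1 then ⟨y, hy⟩ else ⟨z, hz⟩,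
            left_inv := ?_, right_inv := ?_, map_rel_iff' := ?_ }⟩
  · rintro ⟨w, hw⟩
    rcases (hS w).1 hw with rfl | rfl | rfl <;>
      simp [hxy, hyz, hxz, hxy.symm, hyz.symm, hxz.symm]
  · intro i
    rcases fin3_cases i with rfl | rfl | rfl <;>
      simp [hxy, hyz, hxz, hxy.symm, hyz.symm, hxz.symm]
  · rintro ⟨w, hw⟩ ⟨w', hw'⟩
    rcases (hS w).1 hw with rfl | rfl | rfl <;>
      rcases (hS w').1 hw' with rfl | rfl | rfl <;>
        simp [hxy, hyz, hxz, hxy.symm, hyz.symm, hxz.symm,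
          axy, ayz, axz, axy.symm, ayz.symm, axz.symm]

lemma embed_of_triple {W : Type*} (G' : SimpleGraph W) (x y z : W)
    (hxy : x ≠ y) (hyz : y ≠ z)
    (axz : G'.Adj x z) (naxy : ¬ G'.Adj x y) (nayz : ¬ G'.Adj y z) :
    Nonempty ((pathGraph 3)ᶜ ↪g G') := by
  have hxz : x ≠ z := axz.ne
  have naxy' : ¬ G'.Adj y x := fun h => naxy h.symm
  have nayz' : ¬ G'.Adj z y := fun h => nayz h.symm
  have axz' : G'.Adj z x := axz.symm
  refine ⟨⟨⟨![x,y,z], ?_⟩, ?_⟩⟩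
  · intro i j
    fin_cases i <;> fin_cases j <;>
      simp [hxy, hyz, hxz, hxy.symm, hyz.symm, hxz.symm]
  · intro i j
    fin_cases i <;> fin_cases j <;>
      simp [compl_adj, pathGraph_adj, hxy, hyz, hxz, hxy.symm, hyz.symm, hxz.symm,
        axz, axz.symm, naxy, nayz, naxy', nayz'] <;> assumption

lemma core_K3 {W : Type*} (G' : SimpleGraph W) (a' b' v₁ v₂ : W) (S₁ S₂ : Set W)
    (hS₁ : ∀ w, w ∈ S₁ ↔ w = a' ∨ w = b' ∨ w = v₁)
    (hS₂ : ∀ w, w ∈ S₂ ↔ w = a' ∨ w = b' ∨ w = v₂)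
    (hab : a' ≠ b') (hav₁ : a' ≠ v₁) (hav₂ : a' ≠ v₂) (hbv₁ : b' ≠ v₁) (hbv₂ : b' ≠ v₂)
    (h12 : v₁ ≠ v₂) (nadj12 : ¬ G'.Adj v₁ v₂)
    (adjab : G'.Adj a' b')
    (cova : G'.Adj a' v₁ ∨ G'.Adj a' v₂) (covb : G'.Adj b' v₁ ∨ G'.Adj b' v₂)
    (h₁ : ¬ Nonempty ((G'.induce S₁) ≃g (⊤ : SimpleGraph (Fin 3))))
    (h₂ : ¬ Nonempty ((G'.induce S₂) ≃g (⊤ : SimpleGraph (Fin 3)))) :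
    Nonempty ((pathGraph 3)ᶜ ↪g G') := by
  rcases cova with ha1 | ha2
  · have nb1 : ¬ G'.Adj b' v₁ := fun hb1 =>
      h₁ (iso_of_triple_top G' a' b' v₁ hab hbv₁ hav₁ S₁ hS₁ adjab hb1 ha1)
    have hb2 : G'.Adj b' v₂ := covb.resolve_left nb1
    have na2 : ¬ G'.Adj a' v₂ := fun ha2 =>
      h₂ (iso_of_triple_top G' a' b' v₂ hab hbv₂ hav₂ S₂ hS₂ adjab hb2 ha2)
    exact embed_of_triple G' b' v₁ v₂ hbv₁ h12 hb2 nb1 nadj12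
  · have nb2 : ¬ G'.Adj b' v₂ := fun hb2 =>
      h₂ (iso_of_triple_top G' a' b' v₂ hab hbv₂ hav₂ S₂ hS₂ adjab hb2 ha2)
    have hb1 : G'.Adj b' v₁ := covb.resolve_right nb2
    exact embed_of_triple G' b' v₂ v₁ hbv₂ h12.symm hb1 nb2
      (fun h => nadj12 h.symm)

lemma core_P3_center {W : Type*} (G' : SimpleGraph W) (a' b' v₁ v₂ : W) (S₁ S₂ : Set W)
    (hS₁ : ∀ w, w ∈ S₁ ↔ w = a' ∨ w = b' ∨ w = v₁)
    (hS₂ : ∀ w, w ∈ S₂ ↔ w = a' ∨ w = b' ∨ w = v₂)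
    (hab : a' ≠ b') (hav₁ : a' ≠ v₁) (hav₂ : a' ≠ v₂) (hbv₁ : b' ≠ v₁) (hbv₂ : b' ≠ v₂)
    (nadjab : ¬ G'.Adj a' b')
    (cova : G'.Adj a' v₁ ∨ G'.Adj a' v₂)
    (h₁ : ¬ Nonempty ((G'.induce S₁) ≃g pathGraph 3))
    (h₂ : ¬ Nonempty ((G'.induce S₂) ≃g pathGraph 3)) :
    Nonempty ((pathGraph 3)ᶜ ↪g G') := by
  rcases cova with ha1 | ha2
  · have nb1 : ¬ G'.Adj b' v₁ := fun hb1 =>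
      h₁ (iso_of_triple_path G' a' v₁ b' hav₁ (Ne.symm hbv₁) hab S₁
        (fun w => by rw [hS₁ w]; tauto) ha1 hb1.symm nadjab)
    exact embed_of_triple G' a' b' v₁ hab hbv₁ ha1 nadjab nb1
  · have nb2 : ¬ G'.Adj b' v₂ := fun hb2 =>
      h₂ (iso_of_triple_path G' a' v₂ b' hav₂ (Ne.symm hbv₂) hab S₂
        (fun w => by rw [hS₂ w]; tauto) ha2 hb2.symm nadjab)
    exact embed_of_triple G' a' b' v₂ hab hbv₂ ha2 nadjab nb2

lemma core_P3_endpoint {W : Type*} (G' : SimpleGraph W) (a' b' v₁ v₂ : W) (S₁ S₂ : Set W)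
    (hS₁ : ∀ w, w ∈ S₁ ↔ w = a' ∨ w = b' ∨ w = v₁)
    (hS₂ : ∀ w, w ∈ S₂ ↔ w = a' ∨ w = b' ∨ w = v₂)
    (hab : a' ≠ b') (hav₁ : a' ≠ v₁) (hav₂ : a' ≠ v₂) (hbv₁ : b' ≠ v₁) (hbv₂ : b' ≠ v₂)
    (adjab : G'.Adj a' b') (nbv₁ : ¬ G'.Adj b' v₁) (nbv₂ : ¬ G'.Adj b' v₂)
    (cova : G'.Adj a' v₁ ∨ G'.Adj a' v₂)
    (h₁ : ¬ Nonempty ((G'.induce S₁) ≃g pathGraph 3))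
    (h₂ : ¬ Nonempty ((G'.induce S₂) ≃g pathGraph 3)) :
    Nonempty ((pathGraph 3)ᶜ ↪g G') := by
  rcases cova with ha1 | ha2
  · exact absurd (iso_of_triple_path G' v₁ a' b' (Ne.symm hav₁) hab (Ne.symm hbv₁) S₁
      (fun w => by rw [hS₁ w]; tauto) ha1.symm adjab (fun h => nbv₁ h.symm)) h₁
  · exact absurd (iso_of_triple_path G' v₂ a' b' (Ne.symm hav₂) hab (Ne.symm hbv₂) S₂
      (fun w => by rw [hS₂ w]; tauto) ha2.symm adjab (fun h => nbv₂ h.symm)) h₂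

section Bridge
variable {V W : Type*} {G : SimpleGraph V} {G' : SimpleGraph W} {v : V} {v₁ v₂ : W}

lemma setup_facts (D : VertexSplit G G' v v₁ v₂) (X : Set V) (a b : V)
    (hav : a ≠ v) (hbv : b ≠ v) (hab : a ≠ b)
    (hXeq : ∀ u, u ∈ X ↔ u = v ∨ u = a ∨ u = b) :
    (∀ w, w ∈ D.keepImage X ∪ {v₁} ↔
        w = (D.keep ⟨a, hav⟩).1 ∨ w = (D.keep ⟨b, hbv⟩).1 ∨ w = v₁) ∧
    (∀ w, w ∈ D.keepImage X ∪ {v₂} ↔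
        w = (D.keep ⟨a, hav⟩).1 ∨ w = (D.keep ⟨b, hbv⟩).1 ∨ w = v₂) ∧
    (D.keep ⟨a, hav⟩).1 ≠ (D.keep ⟨b, hbv⟩).1 := by
  have key : ∀ c : W, ∀ w, w ∈ D.keepImage X ∪ {c} ↔
      w = (D.keep ⟨a, hav⟩).1 ∨ w = (D.keep ⟨b, hbv⟩).1 ∨ w = c := by
    intro c w
    simp only [Set.mem_union, Set.mem_singleton_iff, VertexSplit.keepImage,
      Set.mem_setOf_eq]
    constructor
    · rintro (⟨u, hu, huX, rfl⟩ | rfl)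
      · rcases (hXeq u).1 huX with rfl | rfl | rfl
        · exact absurd rfl hu
        · exact Or.inl rfl
        · exact Or.inr (Or.inl rfl)
      · exact Or.inr (Or.inr rfl)
    · rintro (rfl | rfl | rfl)
      · exact Or.inl ⟨a, hav, (hXeq a).2 (Or.inr (Or.inl rfl)), rfl⟩
      · exact Or.inl ⟨b, hbv, (hXeq b).2 (Or.inr (Or.inr rfl)), rfl⟩
      · exact Or.inr rfl
  refine ⟨key v₁, key v₂, fun h => hab ?_⟩
  have := D.keep.injective (Subtype.ext h)
  exact Subtype.mk_eq_mk.mp this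

lemma main_K3 (D : VertexSplit G G' v v₁ v₂) (X : Set V) (a b : V)
    (hav : a ≠ v) (hbv : b ≠ v) (hab : a ≠ b)
    (hXeq : ∀ u, u ∈ X ↔ u = v ∨ u = a ∨ u = b)
    (hva : G.Adj v a) (hvb : G.Adj v b) (hab2 : G.Adj a b)
    (h₁ : ¬ Nonempty ((G'.induce (D.keepImage X ∪ {v₁})) ≃g (⊤ : SimpleGraph (Fin 3))))
    (h₂ : ¬ Nonempty ((G'.induce (D.keepImage X ∪ {v₂})) ≃g (⊤ : SimpleGraph (Fin 3)))) :
    Nonempty ((pathGraph 3)ᶜ ↪g G') := by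
  obtain ⟨hS₁, hS₂, hab'⟩ := setup_facts D X a b hav hbv hab hXeq
  exact core_K3 G' (D.keep ⟨a, hav⟩).1 (D.keep ⟨b, hbv⟩).1 v₁ v₂ _ _ hS₁ hS₂ hab'
    (D.keep ⟨a, hav⟩).2.1 (D.keep ⟨a, hav⟩).2.2 (D.keep ⟨b, hbv⟩).2.1
    (D.keep ⟨b, hbv⟩).2.2 D.ne D.newNotAdj
    ((D.adj_keep ⟨a, hav⟩ ⟨b, hbv⟩).2 hab2)
    (D.adj_cover ⟨a, hav⟩ hva.symm) (D.adj_cover ⟨b, hbv⟩ hvb.symm) h₁ h₂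

lemma main_P3_center (D : VertexSplit G G' v v₁ v₂) (X : Set V) (a b : V)
    (hav : a ≠ v) (hbv : b ≠ v) (hab : a ≠ b)
    (hXeq : ∀ u, u ∈ X ↔ u = v ∨ u = a ∨ u = b)
    (hva : G.Adj v a) (hvb : G.Adj v b) (hnab : ¬ G.Adj a b)
    (h₁ : ¬ Nonempty ((G'.induce (D.keepImage X ∪ {v₁})) ≃g pathGraph 3))
    (h₂ : ¬ Nonempty ((G'.induce (D.keepImage X ∪ {v₂})) ≃g pathGraph 3)) :
    Nonempty ((pathGraph 3)ᶜ ↪g G') := by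
  obtain ⟨hS₁, hS₂, hab'⟩ := setup_facts D X a b hav hbv hab hXeq
  exact core_P3_center G' (D.keep ⟨a, hav⟩).1 (D.keep ⟨b, hbv⟩).1 v₁ v₂ _ _ hS₁ hS₂ hab'
    (D.keep ⟨a, hav⟩).2.1 (D.keep ⟨a, hav⟩).2.2 (D.keep ⟨b, hbv⟩).2.1
    (D.keep ⟨b, hbv⟩).2.2
    (fun h => hnab ((D.adj_keep ⟨a, hav⟩ ⟨b, hbv⟩).1 h))
    (D.adj_cover ⟨a, hav⟩ hva.symm) h₁ h₂

lemma main_P3_endpoint (D : VertexSplit G G' v v₁ v₂) (X : Set V) (a b : V)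
    (hav : a ≠ v) (hbv : b ≠ v) (hab : a ≠ b)
    (hXeq : ∀ u, u ∈ X ↔ u = v ∨ u = a ∨ u = b)
    (hva : G.Adj v a) (hab2 : G.Adj a b) (hnvb : ¬ G.Adj v b)
    (h₁ : ¬ Nonempty ((G'.induce (D.keepImage X ∪ {v₁})) ≃g pathGraph 3))
    (h₂ : ¬ Nonempty ((G'.induce (D.keepImage X ∪ {v₂})) ≃g pathGraph 3)) :
    Nonempty ((pathGraph 3)ᶜ ↪g G') := by
  obtain ⟨hS₁, hS₂, hab'⟩ := setup_facts D X a b hav hbv hab hXeq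
  exact core_P3_endpoint G' (D.keep ⟨a, hav⟩).1 (D.keep ⟨b, hbv⟩).1 v₁ v₂ _ _ hS₁ hS₂ hab'
    (D.keep ⟨a, hav⟩).2.1 (D.keep ⟨a, hav⟩).2.2 (D.keep ⟨b, hbv⟩).2.1
    (D.keep ⟨b, hbv⟩).2.2
    ((D.adj_keep ⟨a, hav⟩ ⟨b, hbv⟩).2 hab2)
    (fun h => hnvb (D.adj_new₁ ⟨b, hbv⟩ h).symm)
    (fun h => hnvb (D.adj_new₂ ⟨b, hbv⟩ h).symm)
    (D.adj_cover ⟨a, hav⟩ hva.symm) h₁ h₂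

end Bridge

/-- Let `X` induce a copy of `H ∈ {P₃, K₃}` in `G` and let `v ∈ X`. If after splitting
`v` into `v₁, v₂` neither `(X \ {v}) ∪ {v₁}` nor `(X \ {v}) ∪ {v₂}` induces a copy of
`H`, then the resulting graph contains `∁P₃` as an induced subgraph. -/
theorem destroying_P3_or_K3_creates_P3c {V W : Type} [Fintype V] [Fintype W]
    (G : SimpleGraph V) (G' : SimpleGraph W) (H : SimpleGraph (Fin 3))
    (hH : Nonempty (H ≃g pathGraph 3) ∨ Nonempty (H ≃g (⊤ : SimpleGraph (Fin 3))))
    (X : Set V) (hX : Nonempty ((G.induce X) ≃g H))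
    (v : V) (hv : v ∈ X) (v₁ v₂ : W) (D : VertexSplit G G' v v₁ v₂)
    (h₁ : ¬ Nonempty ((G'.induce (D.keepImage X ∪ {v₁})) ≃g H))
    (h₂ : ¬ Nonempty ((G'.induce (D.keepImage X ∪ {v₂})) ≃g H)) :
    Nonempty ((pathGraph 3)ᶜ ↪g G') := by
  obtain ⟨e0⟩ := hX
  obtain (heH | heH) := hH
  · -- H ≅ P₃
    obtain ⟨eH⟩ := heH
    have h₁' : ¬ Nonempty ((G'.induce (D.keepImage X ∪ {v₁})) ≃g pathGraph 3) :=
      fun hn => h₁ (hn.elim fun f => ⟨f.trans eH.symm⟩)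
    have h₂' : ¬ Nonempty ((G'.induce (D.keepImage X ∪ {v₂})) ≃g pathGraph 3) :=
      fun hn => h₂ (hn.elim fun f => ⟨f.trans eH.symm⟩)
    let ψ : G.induce X ≃g pathGraph 3 := e0.trans eH
    have hadj : ∀ i j : Fin 3,
        G.Adj (ψ.symm i).1 (ψ.symm j).1 ↔ (pathGraph 3).Adj i j := by
      intro i j
      rw [← ψ.symm.map_adj_iff]
      rfl
    have hNe : ∀ i j : Fin 3, i ≠ j → (ψ.symm i).1 ≠ (ψ.symm j).1 :=
      fun i j h hc => h (ψ.symm.toEquiv.injective (Subtype.ext hc))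
    have hXeq : ∀ u, u ∈ X ↔
        u = (ψ.symm 0).1 ∨ u = (ψ.symm 1).1 ∨ u = (ψ.symm 2).1 := by
      intro u
      constructor
      · intro hu
        have huu : u = (ψ.symm (ψ ⟨u, hu⟩)).1 := by simp
        rcases fin3_cases (ψ ⟨u, hu⟩) with h | h | h <;> rw [h] at huu <;> tauto
      · rintro (rfl | rfl | rfl) <;> exact (ψ.symm _).2
    have hvv : (ψ.symm (ψ ⟨v, hv⟩)).1 = v := by simp
    rcases fin3_cases (ψ ⟨v, hv⟩) with hvi | hvi | hvi <;> rw [hvi] at hvv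
    · -- v at position 0 : endpoint, center is ψ.symm 1
      refine main_P3_endpoint D X (ψ.symm 1).1 (ψ.symm 2).1 ?_ ?_
        (hNe 1 2 (by decide)) ?_ ?_ ?_ ?_ h₁' h₂'
      · rw [← hvv]; exact hNe 1 0 (by decide)
      · rw [← hvv]; exact hNe 2 0 (by decide)
      · intro u; rw [hXeq u, hvv]; try tauto
      · rw [← hvv]; exact (hadj 0 1).2 pg01
      · exact (hadj 1 2).2 pg12
      · rw [← hvv]; exact fun h => pg02 ((hadj 0 2).1 h)
    · -- v at position 1 : center
      refine main_P3_center D X (ψ.symm 0).1 (ψ.symm 2).1 ?_ ?_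
        (hNe 0 2 (by decide)) ?_ ?_ ?_ ?_ h₁' h₂'
      · rw [← hvv]; exact hNe 0 1 (by decide)
      · rw [← hvv]; exact hNe 2 1 (by decide)
      · intro u; rw [hXeq u, hvv]; try tauto
      · rw [← hvv]; exact (hadj 1 0).2 pg01.symm
      · rw [← hvv]; exact (hadj 1 2).2 pg12
      · exact fun h => pg02 ((hadj 0 2).1 h)
    · -- v at position 2 : endpoint, center is ψ.symm 1
      refine main_P3_endpoint D X (ψ.symm 1).1 (ψ.symm 0).1 ?_ ?_
        (hNe 1 0 (by decide)) ?_ ?_ ?_ ?_ h₁' h₂'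
      · rw [← hvv]; exact hNe 1 2 (by decide)
      · rw [← hvv]; exact hNe 0 2 (by decide)
      · intro u; rw [hXeq u, hvv]; try tauto
      · rw [← hvv]; exact (hadj 2 1).2 pg12.symm
      · exact (hadj 1 0).2 pg01.symm
      · rw [← hvv]; exact fun h => pg02 (((hadj 2 0).1 h).symm)
  · -- H ≅ K₃
    obtain ⟨eH⟩ := heH
    have h₁' : ¬ Nonempty ((G'.induce (D.keepImage X ∪ {v₁})) ≃g (⊤ : SimpleGraph (Fin 3))) :=
      fun hn => h₁ (hn.elim fun f => ⟨f.trans eH.symm⟩)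
    have h₂' : ¬ Nonempty ((G'.induce (D.keepImage X ∪ {v₂})) ≃g (⊤ : SimpleGraph (Fin 3))) :=
      fun hn => h₂ (hn.elim fun f => ⟨f.trans eH.symm⟩)
    let ψ : G.induce X ≃g (⊤ : SimpleGraph (Fin 3)) := e0.trans eH
    have hadj : ∀ i j : Fin 3, i ≠ j → G.Adj (ψ.symm i).1 (ψ.symm j).1 := by
      intro i j hij
      have := ψ.symm.map_adj_iff (v := i) (w := j)
      rw [top_adj] at this
      exact this.2 hij
    have hNe : ∀ i j : Fin 3, i ≠ j → (ψ.symm i).1 ≠ (ψ.symm j).1 :=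
      fun i j h hc => h (ψ.symm.toEquiv.injective (Subtype.ext hc))
    have hXeq : ∀ u, u ∈ X ↔
        u = (ψ.symm 0).1 ∨ u = (ψ.symm 1).1 ∨ u = (ψ.symm 2).1 := by
      intro u
      constructor
      · intro hu
        have huu : u = (ψ.symm (ψ ⟨u, hu⟩)).1 := by simp
        rcases fin3_cases (ψ ⟨u, hu⟩) with h | h | h <;> rw [h] at huu <;> tauto
      · rintro (rfl | rfl | rfl) <;> exact (ψ.symm _).2
    have hvv : (ψ.symm (ψ ⟨v, hv⟩)).1 = v := by simp
    rcases fin3_cases (ψ ⟨v, hv⟩) with hvi | hvi | hvi <;> rw [hvi] at hvv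
    · refine main_K3 D X (ψ.symm 1).1 (ψ.symm 2).1 ?_ ?_ (hNe 1 2 (by decide))
        ?_ ?_ ?_ (hadj 1 2 (by decide)) h₁' h₂'
      · rw [← hvv]; exact hNe 1 0 (by decide)
      · rw [← hvv]; exact hNe 2 0 (by decide)
      · intro u; rw [hXeq u, hvv]; try tauto
      · rw [← hvv]; exact hadj 0 1 (by decide)
      · rw [← hvv]; exact hadj 0 2 (by decide)
    · refine main_K3 D X (ψ.symm 0).1 (ψ.symm 2).1 ?_ ?_ (hNe 0 2 (by decide))
        ?_ ?_ ?_ (hadj 0 2 (by decide)) h₁' h₂'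
      · rw [← hvv]; exact hNe 0 1 (by decide)
      · rw [← hvv]; exact hNe 2 1 (by decide)
      · intro u; rw [hXeq u, hvv]; try tauto
      · rw [← hvv]; exact hadj 1 0 (by decide)
      · rw [← hvv]; exact hadj 1 2 (by decide)
    · refine main_K3 D X (ψ.symm 0).1 (ψ.symm 1).1 ?_ ?_ (hNe 0 1 (by decide))
        ?_ ?_ ?_ (hadj 0 1 (by decide)) h₁' h₂'
      · rw [← hvv]; exact hNe 0 2 (by decide)
      · rw [← hvv]; exact hNe 1 2 (by decide)
      · intro u; rw [hXeq u, hvv]; try tauto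
      · rw [← hvv]; exact hadj 2 0 (by decide)
      · rw [← hvv]; exact hadj 2 1 (by decide)
end

section
/- Let G be a finite simple graph, let F ∈ {P₄, C₄, C₅} (the path on 4 vertices, the cycle on 4 vertices, or the cycle on 5 vertices), let X ⊆ V(G) induce a copy of F in G, and let v ∈ X. Let G' be obtained from G by splitting v into descendants v₁, v₂. If neither (X \ {v}) ∪ {v₁} nor (X \ {v}) ∪ {v₂} induces a copy of F in G', then G' contains \overline{C₄} (the disjoint union of two edges, 2K₂) as an induced subgraph. -/
open SimpleGraph

lemma split_iso {V W : Type*} {G : SimpleGraph V} {G' : SimpleGraph W}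
    {v : V} {v₁ v₂ : W} (D : VertexSplit G G' v v₁ v₂) (X : Set V) (hv : v ∈ X)
    (w₀ : W) (hw₀ : ∀ a : {u : V // u ≠ v}, (D.keep a).1 ≠ w₀)
    (hsub : ∀ a : {u : V // u ≠ v}, G'.Adj (D.keep a).1 w₀ → G.Adj a.1 v)
    (hsup : ∀ a : {u : V // u ≠ v}, a.1 ∈ X → G.Adj a.1 v → G'.Adj (D.keep a).1 w₀) :
    Nonempty ((G.induce X) ≃g (G'.induce (D.keepImage X ∪ {w₀}))) := by
  classical
  have mem₀ : w₀ ∈ D.keepImage X ∪ {w₀} := Or.inr rfl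
  have memk : ∀ (u : V) (h : u ≠ v), u ∈ X → (D.keep ⟨u, h⟩).1 ∈ D.keepImage X ∪ {w₀} :=
    fun u h hu => Or.inl ⟨u, h, hu, rfl⟩
  let ψ : ↥X → ↥(D.keepImage X ∪ {w₀}) := fun u =>
    if h : u.1 = v then ⟨w₀, mem₀⟩ else ⟨(D.keep ⟨u.1, h⟩).1, memk u.1 h u.2⟩
  have hψv : ∀ (u : ↥X) (h : u.1 = v), ψ u = ⟨w₀, mem₀⟩ := fun u h => dif_pos h
  have hψk : ∀ (u : ↥X) (h : u.1 ≠ v), ψ u = ⟨(D.keep ⟨u.1, h⟩).1, memk u.1 h u.2⟩ :=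
    fun u h => dif_neg h
  have hbij : Function.Bijective ψ := by
    constructor
    · intro u u' h
      by_cases h1 : u.1 = v <;> by_cases h2 : u'.1 = v
      · exact Subtype.ext (h1.trans h2.symm)
      · rw [hψv u h1, hψk u' h2] at h
        exact absurd (congrArg Subtype.val h).symm (hw₀ _)
      · rw [hψk u h1, hψv u' h2] at h
        exact absurd (congrArg Subtype.val h) (hw₀ _)
      · rw [hψk u h1, hψk u' h2] at h
        simp only [Subtype.mk.injEq] at h
        have := D.keep.injective (Subtype.ext h)
        simp only [Subtype.mk.injEq] at this
        exact Subtype.ext this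
    · rintro ⟨w, hw | hw⟩
      · obtain ⟨u, hu, huX, rfl⟩ := hw
        exact ⟨⟨u, huX⟩, hψk ⟨u, huX⟩ hu⟩
      · exact ⟨⟨v, hv⟩, by rw [hψv ⟨v, hv⟩ rfl]; exact Subtype.ext hw.symm⟩
  have hadj : ∀ u u' : ↥X, G'.Adj (ψ u).1 (ψ u').1 ↔ G.Adj u.1 u'.1 := by
    intro u u'
    by_cases h1 : u.1 = v <;> by_cases h2 : u'.1 = v
    · rw [hψv u h1, hψv u' h2]
      simp only [h1, h2]
      exact ⟨fun h => absurd h (G'.loopless.irrefl _), fun h => absurd h (G.loopless.irrefl _)⟩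
    · rw [hψv u h1, hψk u' h2]
      constructor
      · intro h
        rw [h1]
        exact (hsub ⟨u'.1, h2⟩ h.symm).symm
      · intro h
        exact (hsup ⟨u'.1, h2⟩ u'.2 (h1 ▸ h.symm)).symm
    · rw [hψk u h1, hψv u' h2]
      constructor
      · intro h
        rw [h2]
        exact hsub ⟨u.1, h1⟩ h
      · intro h
        exact hsup ⟨u.1, h1⟩ u.2 (h2 ▸ h)
    · rw [hψk u h1, hψk u' h2]
      exact D.adj_keep ⟨u.1, h1⟩ ⟨u'.1, h2⟩
  exact ⟨⟨Equiv.ofBijective ψ hbij, fun {u u'} => hadj u u'⟩⟩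

/-- Let `X` induce a copy of `F ∈ {P₄, C₄, C₅}` in `G` and let `v ∈ X`. If after
splitting `v` into `v₁, v₂` neither `(X \ {v}) ∪ {v₁}` nor `(X \ {v}) ∪ {v₂}` induces a
copy of `F`, then the resulting graph contains `∁C₄ = 2K₂` as an induced subgraph. -/
theorem destroying_P4_C4_C5_creates_C4c {α V W : Type} [Fintype α] [Fintype V] [Fintype W]
    (G : SimpleGraph V) (G' : SimpleGraph W) (F : SimpleGraph α)
    (hF : Nonempty (F ≃g pathGraph 4) ∨ Nonempty (F ≃g cycleGraph 4) ∨
      Nonempty (F ≃g cycleGraph 5))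
    (X : Set V) (hX : Nonempty ((G.induce X) ≃g F))
    (v : V) (hv : v ∈ X) (v₁ v₂ : W) (D : VertexSplit G G' v v₁ v₂)
    (h₁ : ¬ Nonempty ((G'.induce (D.keepImage X ∪ {v₁})) ≃g F))
    (h₂ : ¬ Nonempty ((G'.induce (D.keepImage X ∪ {v₂})) ≃g F)) :
    Nonempty ((cycleGraph 4)ᶜ ↪g G') := by
  classical
  obtain ⟨e⟩ := hX
  -- F is triangle-free
  have htf : ∀ x y z : α, F.Adj x y → F.Adj y z → F.Adj x z → False := by
    intro x y z hxy hyz hxz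
    rcases hF with h | h | h
    · obtain ⟨f⟩ := h
      have h1 := f.map_rel_iff.mpr hxy
      have h2 := f.map_rel_iff.mpr hyz
      have h3 := f.map_rel_iff.mpr hxz
      rw [pathGraph_adj] at h1 h2 h3
      omega
    · obtain ⟨f⟩ := h
      have this4 : ∀ x y z : Fin 4, (cycleGraph 4).Adj x y → (cycleGraph 4).Adj y z →
          (cycleGraph 4).Adj x z → False := by decide
      exact this4 _ _ _ (f.map_rel_iff.mpr hxy) (f.map_rel_iff.mpr hyz) (f.map_rel_iff.mpr hxz)
    · obtain ⟨f⟩ := h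
      have this5 : ∀ x y z : Fin 5, (cycleGraph 5).Adj x y → (cycleGraph 5).Adj y z →
          (cycleGraph 5).Adj x z → False := by decide
      exact this5 _ _ _ (f.map_rel_iff.mpr hxy) (f.map_rel_iff.mpr hyz) (f.map_rel_iff.mpr hxz)
  -- extract missing neighbors of v₁ and v₂
  have key : ∀ w₀ : W, (∀ a : {u : V // u ≠ v}, (D.keep a).1 ≠ w₀) →
      (∀ a : {u : V // u ≠ v}, G'.Adj (D.keep a).1 w₀ → G.Adj a.1 v) →
      ¬ Nonempty ((G'.induce (D.keepImage X ∪ {w₀})) ≃g F) →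
      ∃ a : {u : V // u ≠ v}, a.1 ∈ X ∧ G.Adj a.1 v ∧ ¬ G'.Adj (D.keep a).1 w₀ := by
    intro w₀ hne hsub hni
    by_contra hcon
    push_neg at hcon
    obtain ⟨j⟩ := split_iso D X hv w₀ hne hsub hcon
    exact hni ⟨j.symm.trans e⟩
  obtain ⟨a, haX, hav, ha1⟩ := key v₁ (fun a => (D.keep a).2.1) D.adj_new₁ h₁
  obtain ⟨b, hbX, hbv, hb2⟩ := key v₂ (fun a => (D.keep a).2.2) D.adj_new₂ h₂
  have ha2 : G'.Adj (D.keep a).1 v₂ := (D.adj_cover a hav).resolve_left ha1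
  have hb1 : G'.Adj (D.keep b).1 v₁ := (D.adj_cover b hbv).resolve_right hb2
  -- a and b are not adjacent in G (otherwise triangle a-v-b in F)
  have hab : ¬ G.Adj a.1 b.1 := by
    intro h
    exact htf (e ⟨a.1, haX⟩) (e ⟨v, hv⟩) (e ⟨b.1, hbX⟩)
      (e.map_rel_iff.mpr hav) (e.map_rel_iff.mpr hbv.symm) (e.map_rel_iff.mpr h)
  have hab' : ¬ G'.Adj (D.keep a).1 (D.keep b).1 := fun h => hab ((D.adj_keep a b).mp h)
  have hkne : (D.keep a).1 ≠ (D.keep b).1 := fun h => ha1 (h ▸ hb1)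
  -- the embedding of (C₄)ᶜ = 2K₂ : 0 ↦ keep a, 1 ↦ keep b, 2 ↦ v₂, 3 ↦ v₁
  refine ⟨⟨⟨![(D.keep a).1, (D.keep b).1, v₂, v₁], ?_⟩, ?_⟩⟩
  · intro x y h
    fin_cases x <;> fin_cases y
    · rfl
    · exact absurd h hkne
    · exact absurd h (D.keep a).2.2
    · exact absurd h (D.keep a).2.1
    · exact absurd (h.symm) hkne
    · rfl
    · exact absurd h (D.keep b).2.2
    · exact absurd h (D.keep b).2.1
    · exact absurd (h.symm) (D.keep a).2.2
    · exact absurd (h.symm) (D.keep b).2.2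
    · rfl
    · exact absurd (h.symm) D.ne
    · exact absurd (h.symm) (D.keep a).2.1
    · exact absurd (h.symm) (D.keep b).2.1
    · exact absurd h D.ne
    · rfl
  · intro x y
    fin_cases x <;> fin_cases y
    · exact iff_of_false (G'.loopless.irrefl _) (by decide)
    · exact iff_of_false hab' (by decide)
    · exact iff_of_true ha2 (by decide)
    · exact iff_of_false ha1 (by decide)
    · exact iff_of_false (fun hh => hab' hh.symm) (by decide)
    · exact iff_of_false (G'.loopless.irrefl _) (by decide)
    · exact iff_of_false hb2 (by decide)
    · exact iff_of_true hb1 (by decide)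
    · exact iff_of_true ha2.symm (by decide)
    · exact iff_of_false (fun hh => hb2 hh.symm) (by decide)
    · exact iff_of_false (G'.loopless.irrefl _) (by decide)
    · exact iff_of_false (fun hh => D.newNotAdj hh.symm) (by decide)
    · exact iff_of_false (fun hh => ha1 hh.symm) (by decide)
    · exact iff_of_true hb1.symm (by decide)
    · exact iff_of_false D.newNotAdj (by decide)
    · exact iff_of_false (G'.loopless.irrefl _) (by decide)
end

section
/- Let G be a finite cubic (3-regular) simple graph, let ℓ, k ∈ ℕ, and let G* be the 2ℓ-subdivision of G. Then G has a vertex cover of size at most k if and only if G* has a vertex cover of size at most k + ℓ·|E(G)|. -/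
open SimpleGraph

/-- The `m`-subdivision of `G`: each edge `uv` (oriented via the linear order) is replaced
by a path `u, p₁, …, p_m, v` through `m` new internal vertices. -/
def subdivision {V : Type} [LinearOrder V] (G : SimpleGraph V) (m : ℕ) :
    SimpleGraph (V ⊕ ({p : V × V // G.Adj p.1 p.2 ∧ p.1 < p.2} × Fin m)) :=
  SimpleGraph.fromRel (fun a b =>
    match a, b with
    | Sum.inl u, Sum.inl v => m = 0 ∧ G.Adj u v
    | Sum.inl u, Sum.inr (e, i) => (i.1 = 0 ∧ u = e.1.1) ∨ (i.1 = m - 1 ∧ u = e.1.2)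
    | Sum.inr (e, i), Sum.inr (f, j) => e = f ∧ i.1 + 1 = j.1
    | _, _ => False)

/-- `S` is a vertex cover of `G`. -/
def IsVertexCover {V : Type} (G : SimpleGraph V) (S : Set V) : Prop :=
  ∀ ⦃u v⦄, G.Adj u v → u ∈ S ∨ v ∈ S

lemma range_parity (ℓ r : ℕ) (hr : r < 2) :
    ((Finset.range (2*ℓ)).filter fun i => i % 2 = r).card = ℓ := by
  induction ℓ with
  | zero => simp
  | succ n ih =>
    have : 2 * (n+1) = (2*n + 1) + 1 := by ring
    rw [this, Finset.range_add_one, Finset.range_add_one, Finset.filter_insert, Finset.filter_insert]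
    interval_cases r
    · rw [if_neg (by omega), if_pos (by omega), Finset.card_insert_of_notMem (by simp), ih]
    · rw [if_pos (by omega), Finset.card_insert_of_notMem (by simp), if_neg (by omega), ih]

lemma fin_parity (ℓ r : ℕ) (hr : r < 2) :
    (Finset.univ.filter fun i : Fin (2*ℓ) => i.1 % 2 = r).card = ℓ := by
  have : (Finset.univ.filter fun i : Fin (2*ℓ) => i.1 % 2 = r).card
      = ((Finset.range (2*ℓ)).filter fun i => i % 2 = r).card := by
    apply Finset.card_bij (fun i _ => i.1)
    · intro a ha; simp at ha ⊢; omega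
    · intro a _ b _ h; exact Fin.ext h
    · intro b hb; simp at hb; exact ⟨⟨b, hb.1⟩, by simp [hb.2]⟩
  rw [this, range_parity ℓ r hr]

variable {V : Type} [Fintype V] [LinearOrder V] (G : SimpleGraph V) [DecidableRel G.Adj]

lemma card_orientedEdges :
    Fintype.card {p : V × V // G.Adj p.1 p.2 ∧ p.1 < p.2} = G.edgeFinset.card := by
  rw [← Fintype.card_coe G.edgeFinset]
  apply Fintype.card_of_bijective (f := fun e => (⟨s(e.1.1, e.1.2), by
    simp [mem_edgeFinset]; exact e.2.1⟩ : G.edgeFinset))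
  constructor
  · rintro ⟨⟨a,b⟩,hab⟩ ⟨⟨c,d⟩,hcd⟩ h
    simp only [Subtype.mk.injEq, Sym2.eq, Sym2.rel_iff', Prod.mk.injEq, Prod.swap_prod_mk] at h
    rcases h with ⟨h1,h2⟩|⟨h1,h2⟩
    · simp [h1, h2]
    · exact absurd (h1 ▸ h2 ▸ hab.2) (by simp; exact le_of_lt hcd.2)
  · rintro ⟨x, hx⟩
    induction x with
    | _ u v =>
      rw [mem_edgeFinset, mem_edgeSet] at hx
      rcases lt_or_gt_of_ne hx.ne with h | h
      · exact ⟨⟨(u,v), hx, h⟩, rfl⟩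
      · exact ⟨⟨(v,u), hx.symm, h⟩, by simp [Sym2.eq_swap]⟩

lemma forward (ℓ k : ℕ) (S : Set V) (hS : _root_.IsVertexCover G S) (hcard : S.ncard ≤ k) :
    ∃ T : Set (V ⊕ ({p : V × V // G.Adj p.1 p.2 ∧ p.1 < p.2} × Fin (2 * ℓ))),
      _root_.IsVertexCover (subdivision G (2 * ℓ)) T ∧ T.ncard ≤ k + ℓ * G.edgeFinset.card := by
  classical
  set E := {p : V × V // G.Adj p.1 p.2 ∧ p.1 < p.2}
  set par : E → ℕ := fun e => if e.1.1 ∈ S then 1 else 0 with hpar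
  have hpar2 : ∀ e, par e < 2 := by intro e; simp only [hpar]; split <;> omega
  set Tin : Finset (V ⊕ E × Fin (2*ℓ)) := S.toFinset.image Sum.inl with hTin
  set Tmid : Finset (V ⊕ E × Fin (2*ℓ)) := Finset.univ.biUnion
      (fun e : E => (Finset.univ.filter fun i : Fin (2*ℓ) => i.1 % 2 = par e).image
        (fun i => Sum.inr (e, i))) with hTmid
  have memTin : ∀ u : V, Sum.inl u ∈ Tin ↔ u ∈ S := by
    intro u; simp [hTin]
  have memTmid : ∀ (e : E) (i : Fin (2*ℓ)),
      (Sum.inr (e, i) : V ⊕ E × Fin (2*ℓ)) ∈ Tmid ↔ i.1 % 2 = par e := by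
    intro e i
    simp only [hTmid, Finset.mem_biUnion, Finset.mem_image, Finset.mem_filter,
      Finset.mem_univ, true_and]
    constructor
    · rintro ⟨f, j, hj, h⟩
      have h' := Sum.inr.inj h
      have hf : f = e := congrArg Prod.fst h'
      have hji : j = i := congrArg Prod.snd h'
      subst hf; subst hji; exact hj
    · intro h; exact ⟨e, i, h, rfl⟩
  refine ⟨↑(Tin ∪ Tmid), ?_, ?_⟩
  · have core : ∀ (u : V) (f : E) (j : Fin (2*ℓ)),
        ((j.1 = 0 ∧ u = f.1.1) ∨ (j.1 = 2*ℓ-1 ∧ u = f.1.2)) →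
        Sum.inl u ∈ Tin ∪ Tmid ∨ (Sum.inr (f, j) : V ⊕ E × Fin (2*ℓ)) ∈ Tin ∪ Tmid := by
      rintro u f j hr
      have hl : 0 < ℓ := by have := j.2; omega
      rcases hr with ⟨hj0, rfl⟩ | ⟨hjl, rfl⟩
      · by_cases hu : f.1.1 ∈ S
        · exact Or.inl (Finset.mem_union_left _ ((memTin _).2 hu))
        · refine Or.inr (Finset.mem_union_right _ ((memTmid f j).2 ?_))
          simp [hpar, hu, hj0]
      · by_cases hu : f.1.1 ∈ S
        · refine Or.inr (Finset.mem_union_right _ ((memTmid f j).2 ?_))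
          have : j.1 % 2 = 1 := by omega
          simp [hpar, hu, this]
        · rcases hS f.2.1 with h' | h'
          · exact absurd h' hu
          · exact Or.inl (Finset.mem_union_left _ ((memTin _).2 h'))
    have core2 : ∀ (e : E) (i j : Fin (2*ℓ)), i.1 + 1 = j.1 →
        (Sum.inr (e, i) : V ⊕ E × Fin (2*ℓ)) ∈ Tin ∪ Tmid ∨
        (Sum.inr (e, j) : V ⊕ E × Fin (2*ℓ)) ∈ Tin ∪ Tmid := by
      intro e i j hij
      by_cases hp : i.1 % 2 = par e
      · exact Or.inl (Finset.mem_union_right _ ((memTmid e i).2 hp))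
      · refine Or.inr (Finset.mem_union_right _ ((memTmid e j).2 ?_))
        have := hpar2 e; omega
    rintro (u | ⟨e, i⟩) (v | ⟨f, j⟩) hab <;>
      rw [subdivision, SimpleGraph.fromRel_adj] at hab <;>
      obtain ⟨hne, h | h⟩ := hab
    · rcases hS h.2 with h' | h'
      · exact Or.inl (Finset.mem_union_left _ ((memTin u).2 h'))
      · exact Or.inr (Finset.mem_union_left _ ((memTin v).2 h'))
    · rcases hS h.2 with h' | h'
      · exact Or.inr (Finset.mem_union_left _ ((memTin v).2 h'))
      · exact Or.inl (Finset.mem_union_left _ ((memTin u).2 h'))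
    · exact core u f j h
    · exact h.elim
    · exact h.elim
    · exact (core v e i h).symm
    · obtain ⟨rfl, hij⟩ := h
      exact core2 e i j hij
    · obtain ⟨rfl, hij⟩ := h
      exact (core2 f j i hij).symm
  · rw [Set.ncard_coe_finset]
    calc (Tin ∪ Tmid).card ≤ Tin.card + Tmid.card := Finset.card_union_le _ _
      _ ≤ k + ℓ * G.edgeFinset.card := by
        have h1 : Tin.card ≤ k := by
          rw [hTin, Finset.card_image_of_injective _ Sum.inl_injective]
          rwa [Set.ncard_eq_toFinset_card'] at hcard
        have h2 : Tmid.card = ℓ * G.edgeFinset.card := by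
          rw [hTmid, Finset.card_biUnion]
          · have : ∀ e : E, ((Finset.univ.filter fun i : Fin (2*ℓ) => i.1 % 2 = par e).image
                (fun i => (Sum.inr (e, i) : V ⊕ E × Fin (2*ℓ)))).card = ℓ := by
              intro e
              rw [Finset.card_image_of_injective _ (by
                intro a b h; injection h with h'; simpa using congrArg Prod.snd h'),
                fin_parity _ _ (hpar2 e)]
            rw [Finset.sum_congr rfl (fun e _ => this e), Finset.sum_const, smul_eq_mul,
              Finset.card_univ, card_orientedEdges, mul_comm]
          · intro e _ f _ hef
            simp only [Finset.disjoint_left, Finset.mem_image, Finset.mem_filter]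
            rintro x ⟨i, _, rfl⟩ ⟨j, _, hj⟩
            exact hef (congrArg Prod.fst (Sum.inr.inj hj)).symm
        omega

lemma backward (ℓ k : ℕ)
    (T : Set (V ⊕ ({p : V × V // G.Adj p.1 p.2 ∧ p.1 < p.2} × Fin (2 * ℓ))))
    (hT : _root_.IsVertexCover (subdivision G (2 * ℓ)) T)
    (hcard : T.ncard ≤ k + ℓ * G.edgeFinset.card) :
    ∃ S : Set V, _root_.IsVertexCover G S ∧ S.ncard ≤ k := by
  classical
  let E := {p : V × V // G.Adj p.1 p.2 ∧ p.1 < p.2}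
  set t : E → Finset (Fin (2*ℓ)) :=
    fun e => Finset.univ.filter fun i => (Sum.inr (e,i) : V ⊕ E × Fin (2*ℓ)) ∈ T with ht
  set A : Finset V := Finset.univ.filter fun v => (Sum.inl v : V ⊕ E × Fin (2*ℓ)) ∈ T with hA
  set H : Finset E := Finset.univ.filter fun e =>
    (Sum.inl e.1.1 : V ⊕ E × Fin (2*ℓ)) ∉ T ∧ (Sum.inl e.1.2 : V ⊕ E × Fin (2*ℓ)) ∉ T with hH
  -- adjacency helpers
  have adjMid : ∀ (e : E) (i j : Fin (2*ℓ)), i.1 + 1 = j.1 →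
      (subdivision G (2*ℓ)).Adj (Sum.inr (e,i)) (Sum.inr (e,j)) := by
    intro e i j hij
    rw [subdivision, SimpleGraph.fromRel_adj]
    refine ⟨?_, Or.inl ⟨rfl, hij⟩⟩
    intro h
    have h2 : i = j := congrArg Prod.snd (Sum.inr.inj h)
    have : i.1 = j.1 := congrArg Fin.val h2
    omega
  have adjL : ∀ (e : E) (h : 0 < 2*ℓ),
      (subdivision G (2*ℓ)).Adj (Sum.inl e.1.1) (Sum.inr (e, ⟨0, h⟩)) := by
    intro e h
    rw [subdivision, SimpleGraph.fromRel_adj]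
    exact ⟨by simp, Or.inl (Or.inl ⟨rfl, rfl⟩)⟩
  have adjR : ∀ (e : E) (h : 0 < 2*ℓ),
      (subdivision G (2*ℓ)).Adj (Sum.inl e.1.2) (Sum.inr (e, ⟨2*ℓ-1, by omega⟩)) := by
    intro e h
    rw [subdivision, SimpleGraph.fromRel_adj]
    exact ⟨by simp, Or.inl (Or.inr ⟨rfl, rfl⟩)⟩
  -- every edge uses at least ℓ internal vertices
  have claimA : ∀ e : E, ℓ ≤ (t e).card := by
    intro e
    set f : Fin ℓ → Fin (2*ℓ) := fun j =>
      if (Sum.inr (e, (⟨2*j.1, by have := j.2; omega⟩ : Fin (2*ℓ))) : V ⊕ E × Fin (2*ℓ)) ∈ T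
      then ⟨2*j.1, by have := j.2; omega⟩ else ⟨2*j.1+1, by have := j.2; omega⟩ with hf
    have hval : ∀ j : Fin ℓ, (f j).1 = 2*j.1 ∨ (f j).1 = 2*j.1+1 := by
      intro j; rw [hf]; dsimp only; split_ifs <;> simp
    have hmem : ∀ j : Fin ℓ, f j ∈ t e := by
      intro j
      rw [ht]; simp only [Finset.mem_filter, Finset.mem_univ, true_and]
      rw [hf]; dsimp only; split_ifs with h
      · exact h
      · rcases hT (adjMid e ⟨2*j.1, by have := j.2; omega⟩ ⟨2*j.1+1, by have := j.2; omega⟩ rfl)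
          with h' | h'
        · exact absurd h' h
        · exact h'
    calc ℓ = (Finset.univ : Finset (Fin ℓ)).card := by simp
      _ ≤ (t e).card := by
        apply Finset.card_le_card_of_injOn f (fun j _ => hmem j)
        intro j1 _ j2 _ hj
        have h1 := hval j1; have h2 := hval j2
        have : (f j1).1 = (f j2).1 := congrArg Fin.val hj
        exact Fin.ext (by omega)
  have hH0 : ∀ e ∈ H, 0 < ℓ := by
    intro e he
    rw [hH] at he; simp only [Finset.mem_filter, Finset.mem_univ, true_and] at he
    by_contra hl
    have hl0 : 2 * ℓ = 0 := by omega
    have hadj : (subdivision G (2*ℓ)).Adj (Sum.inl e.1.1) (Sum.inl e.1.2) := by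
      rw [subdivision, SimpleGraph.fromRel_adj]
      refine ⟨?_, Or.inl ⟨hl0, e.2.1⟩⟩
      intro h
      exact absurd (Sum.inl.inj h) (ne_of_lt e.2.2)
    rcases hT hadj with h' | h'
    · exact he.1 h'
    · exact he.2 h'
  -- edges with both endpoints uncovered use at least ℓ+1 internal vertices
  have claimB : ∀ e ∈ H, ℓ + 1 ≤ (t e).card := by
    intro e he
    have hl := hH0 e he
    rw [hH] at he; simp only [Finset.mem_filter, Finset.mem_univ, true_and] at he
    set g : Fin (ℓ+1) → Fin (2*ℓ) := fun j =>
      if _h0 : j.1 = 0 then ⟨0, by omega⟩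
      else if _hL : j.1 = ℓ then ⟨2*ℓ-1, by omega⟩
      else if (Sum.inr (e, (⟨2*j.1-1, by have := j.2; omega⟩ : Fin (2*ℓ))) : V ⊕ E × Fin (2*ℓ)) ∈ T
      then ⟨2*j.1-1, by have := j.2; omega⟩ else ⟨2*j.1, by have := j.2; omega⟩ with hg
    have hval : ∀ j : Fin (ℓ+1), ((g j).1 + 1) / 2 = j.1 := by
      intro j; rw [hg]; dsimp only; split_ifs with h1 h2 h3 <;> simp <;> omega
    have hmem : ∀ j : Fin (ℓ+1), g j ∈ t e := by
      intro j
      rw [ht]; simp only [Finset.mem_filter, Finset.mem_univ, true_and]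
      rw [hg]; dsimp only; split_ifs with h1 h2 h3
      · rcases hT (adjL e (by omega)) with h' | h'
        · exact absurd h' he.1
        · exact h'
      · rcases hT (adjR e (by omega)) with h' | h'
        · exact absurd h' he.2
        · exact h'
      · exact h3
      · have h4 : 0 < j.1 ∧ j.1 < ℓ := ⟨by omega, by have := j.2; omega⟩
        rcases hT (adjMid e ⟨2*j.1-1, by omega⟩ ⟨2*j.1, by omega⟩ (by simp; omega)) with h' | h'
        · exact absurd h' h3
        · exact h'
    calc ℓ + 1 = (Finset.univ : Finset (Fin (ℓ+1))).card := by simp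
      _ ≤ (t e).card := by
        apply Finset.card_le_card_of_injOn g (fun j _ => hmem j)
        intro j1 _ j2 _ hj
        have := hval j1
        rw [hj, hval j2] at this
        exact (Fin.ext this).symm
  -- counting
  set D : Finset (V ⊕ E × Fin (2*ℓ)) := A.image Sum.inl ∪
    Finset.univ.biUnion (fun e => (t e).image (fun i => Sum.inr (e,i))) with hD
  have hDsub : D ⊆ T.toFinset := by
    intro x hx
    rw [hD, Finset.mem_union] at hx
    rw [Set.mem_toFinset]
    rcases hx with hx | hx
    · obtain ⟨v, hv, rfl⟩ := Finset.mem_image.1 hx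
      rw [hA] at hv; simp only [Finset.mem_filter] at hv; exact hv.2
    · obtain ⟨e, _, hx⟩ := Finset.mem_biUnion.1 hx
      obtain ⟨i, hi, rfl⟩ := Finset.mem_image.1 hx
      rw [ht] at hi; simp only [Finset.mem_filter] at hi; exact hi.2
  have hDcard : D.card = A.card + ∑ e : E, (t e).card := by
    rw [hD, Finset.card_union_of_disjoint, Finset.card_image_of_injective _ Sum.inl_injective,
      Finset.card_biUnion]
    · congr 1
      exact Finset.sum_congr rfl (fun e _ => Finset.card_image_of_injective _ (by
        intro a b h; exact congrArg Prod.snd (Sum.inr.inj h)))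
    · intro e _ f _ hef
      simp only [Finset.disjoint_left, Finset.mem_image]
      rintro x ⟨i, _, rfl⟩ ⟨j, _, hj⟩
      exact hef (congrArg Prod.fst (Sum.inr.inj hj)).symm
    · simp only [Finset.disjoint_left, Finset.mem_image, Finset.mem_biUnion]
      rintro x ⟨v, _, rfl⟩ ⟨e, _, i, _, h⟩
      exact Sum.inl_ne_inr h.symm
  have hsum : ℓ * G.edgeFinset.card + H.card ≤ ∑ e : E, (t e).card := by
    have step : ∀ e : E, (if e ∈ H then ℓ + 1 else ℓ) ≤ (t e).card := by
      intro e; split_ifs with h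
      · exact claimB e h
      · exact claimA e
    calc ℓ * G.edgeFinset.card + H.card
        = ∑ e : E, (if e ∈ H then ℓ + 1 else ℓ) := by
          have heq : ∀ e : E, (if e ∈ H then ℓ + 1 else ℓ) = ℓ + (if e ∈ H then 1 else 0) := by
            intro e; split_ifs <;> omega
          rw [Finset.sum_congr rfl fun e _ => heq e, Finset.sum_add_distrib, Finset.sum_const,
            Finset.sum_ite_mem, Finset.univ_inter, Finset.sum_const, smul_eq_mul, smul_eq_mul,
            mul_one, Finset.card_univ, card_orientedEdges, mul_comm]
      _ ≤ ∑ e : E, (t e).card := Finset.sum_le_sum (fun e _ => step e)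
  have hTcard : D.card ≤ T.ncard := by
    rw [Set.ncard_eq_toFinset_card']
    exact Finset.card_le_card hDsub
  have hAH : A.card + H.card ≤ k := by
    have := hDcard ▸ hTcard
    omega
  -- build the cover
  refine ⟨↑(A ∪ H.image (fun e => e.1.1)), ?_, ?_⟩
  · have main : ∀ u v : V, G.Adj u v → u < v →
        u ∈ (A ∪ H.image (fun e => e.1.1)) ∨ v ∈ (A ∪ H.image (fun e => e.1.1)) := by
      intro u v huv hlt
      set e : E := ⟨(u,v), huv, hlt⟩ with he
      by_cases h1 : (Sum.inl u : V ⊕ E × Fin (2*ℓ)) ∈ T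
      · exact Or.inl (Finset.mem_union_left _ (by rw [hA]; simp [h1]))
      · by_cases h2 : (Sum.inl v : V ⊕ E × Fin (2*ℓ)) ∈ T
        · exact Or.inr (Finset.mem_union_left _ (by rw [hA]; simp [h2]))
        · refine Or.inl (Finset.mem_union_right _ (Finset.mem_image.2 ⟨e, ?_, rfl⟩))
          rw [hH]; simp only [Finset.mem_filter, Finset.mem_univ, true_and]
          exact ⟨h1, h2⟩
    intro u v huv
    rcases lt_or_gt_of_ne huv.ne with h | h
    · exact main u v huv h
    · exact (main v u huv.symm h).symm
  · rw [Set.ncard_coe_finset]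
    calc (A ∪ H.image (fun e => e.1.1)).card
        ≤ A.card + (H.image (fun e => e.1.1)).card := Finset.card_union_le _ _
      _ ≤ A.card + H.card := by gcongr; exact Finset.card_image_le
      _ ≤ k := hAH

/-- For a cubic graph `G`, `G` has a vertex cover of size at most `k` iff its
`2ℓ`-subdivision has a vertex cover of size at most `k + ℓ·|E(G)|`. -/
theorem cubic_vertexCover_iff_subdivision_vertexCover {V : Type} [Fintype V]
    [LinearOrder V] (G : SimpleGraph V) [DecidableRel G.Adj]
    (hcubic : ∀ v, G.degree v = 3) (ℓ k : ℕ) :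
    (∃ S : Set V, _root_.IsVertexCover G S ∧ S.ncard ≤ k) ↔
    (∃ S : Set (V ⊕ ({p : V × V // G.Adj p.1 p.2 ∧ p.1 < p.2} × Fin (2 * ℓ))),
      _root_.IsVertexCover (subdivision G (2 * ℓ)) S ∧
      S.ncard ≤ k + ℓ * G.edgeFinset.card) := by
  constructor
  · rintro ⟨S, hS, hc⟩
    exact forward G ℓ k S hS hc
  · rintro ⟨T, hT, hc⟩
    exact backward G ℓ k T hT hc
end

section
/- Let F be a biconnected finite simple graph (i.e., F is connected, has at least three vertices, and F − v is connected for every vertex v). If F' is a graph obtained from F by performing at least one and at most two non-trivial disjoint vertex splits, then F is not a subgraph of F', i.e., there is no injection f : V(F) → V(F') with uv ∈ E(F) ⟹ f(u)f(v) ∈ E(F'). -/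
open SimpleGraph

/-- The split is disjoint: no kept vertex is adjacent to both new vertices. -/
def VertexSplit.IsDisjoint {V W : Type*} {G : SimpleGraph V} {G' : SimpleGraph W}
    {v : V} {v₁ v₂ : W} (D : VertexSplit G G' v v₁ v₂) : Prop :=
  ∀ a : {u : V // u ≠ v}, ¬ (G'.Adj (D.keep a).1 v₁ ∧ G'.Adj (D.keep a).1 v₂)

/-- The split is non-trivial: both new vertices have nonempty neighborhoods. -/
def VertexSplit.IsNontrivial {V W : Type*} {G : SimpleGraph V} {G' : SimpleGraph W}
    {v : V} {v₁ v₂ : W} (D : VertexSplit G G' v v₁ v₂) : Prop :=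
  (∃ w, G'.Adj v₁ w) ∧ (∃ w, G'.Adj v₂ w)

namespace VertexSplit

variable {V W : Type*} {G : SimpleGraph V} {G' : SimpleGraph W}
  {v : V} {v₁ v₂ : W} (D : VertexSplit G G' v v₁ v₂)

include D

open Classical in
/-- Map each vertex of `G'` back to the vertex of `G` it came from. -/
noncomputable def back (w : W) : V :=
  if h : w = v₁ ∨ w = v₂ then v else (D.keep.symm ⟨w, not_or.mp h⟩).1

lemma back_new {w : W} (h : w = v₁ ∨ w = v₂) : D.back w = v := dif_pos h

lemma back_kept {w : W} (h : ¬ (w = v₁ ∨ w = v₂)) :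
    D.back w = (D.keep.symm ⟨w, not_or.mp h⟩).1 := dif_neg h

lemma back_ne {w : W} (h : ¬ (w = v₁ ∨ w = v₂)) : D.back w ≠ v := by
  rw [D.back_kept h]; exact (D.keep.symm ⟨w, not_or.mp h⟩).2

lemma keep_symm_val {w : W} (h : ¬ (w = v₁ ∨ w = v₂)) :
    (D.keep (D.keep.symm ⟨w, not_or.mp h⟩)).1 = w := by
  rw [Equiv.apply_symm_apply]

/-- In a `G'`-edge, at most one endpoint is new. -/
lemma not_both_new {w x : W} (h : G'.Adj w x) (hw : w = v₁ ∨ w = v₂) :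
    ¬ (x = v₁ ∨ x = v₂) := by
  rintro hx
  rcases hw with rfl | rfl <;> rcases hx with rfl | rfl
  · exact h.ne rfl
  · exact D.newNotAdj h
  · exact D.newNotAdj h.symm
  · exact h.ne rfl

lemma back_adj_aux {w x : W} (h : G'.Adj w x) (hw : w = v₁ ∨ w = v₂) :
    G.Adj (D.back w) (D.back x) := by
  have hx : ¬ (x = v₁ ∨ x = v₂) := D.not_both_new h hw
  rw [D.back_new hw, D.back_kept hx]
  set a := D.keep.symm ⟨x, not_or.mp hx⟩ with ha
  have hxa : (D.keep a).1 = x := D.keep_symm_val hx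
  rcases hw with rfl | rfl
  · exact (D.adj_new₁ a (by rw [hxa]; exact h.symm)).symm
  · exact (D.adj_new₂ a (by rw [hxa]; exact h.symm)).symm

lemma back_adj {w x : W} (h : G'.Adj w x) : G.Adj (D.back w) (D.back x) := by
  by_cases hw : w = v₁ ∨ w = v₂
  · exact D.back_adj_aux h hw
  · by_cases hx : x = v₁ ∨ x = v₂
    · exact (D.back_adj_aux h.symm hx).symm
    · rw [D.back_kept hw, D.back_kept hx]
      refine (D.adj_keep _ _).mp ?_
      rw [D.keep_symm_val hw, D.keep_symm_val hx]; exact h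

/-- Partial injectivity of `back`. -/
lemma back_eq {w w' : W} (h : D.back w = D.back w') :
    w = w' ∨ ((w = v₁ ∨ w = v₂) ∧ (w' = v₁ ∨ w' = v₂)) := by
  by_cases hw : w = v₁ ∨ w = v₂
  · by_cases hw' : w' = v₁ ∨ w' = v₂
    · exact Or.inr ⟨hw, hw'⟩
    · have hc : D.back w' = v := by rw [← h, D.back_new hw]
      exact absurd hc (D.back_ne hw')
  · by_cases hw' : w' = v₁ ∨ w' = v₂
    · have hc : D.back w = v := by rw [h, D.back_new hw']
      exact absurd hc (D.back_ne hw)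
    · left
      rw [D.back_kept hw, D.back_kept hw'] at h
      have := D.keep.symm.injective (Subtype.ext h)
      exact congrArg Subtype.val this

/-- A kept vertex is not adjacent to two distinct new vertices (disjointness). -/
lemma not_adj_two_new (hd : D.IsDisjoint) {w x x' : W}
    (hw : ¬ (w = v₁ ∨ w = v₂)) (hx : x = v₁ ∨ x = v₂) (hx' : x' = v₁ ∨ x' = v₂)
    (hxx : x ≠ x') (h1 : G'.Adj w x) (h2 : G'.Adj w x') : False := by
  set a := D.keep.symm ⟨w, not_or.mp hw⟩ with ha
  have hwa : (D.keep a).1 = w := D.keep_symm_val hw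
  refine hd a ?_
  rw [hwa]
  rcases hx with rfl | rfl <;> rcases hx' with rfl | rfl
  · exact absurd rfl hxx
  · exact ⟨h1, h2⟩
  · exact ⟨h2, h1⟩
  · exact absurd rfl hxx

lemma back_inj_pair (hd : D.IsDisjoint) {w x w' x' : W}
    (h : G'.Adj w x) (h' : G'.Adj w' x')
    (e1 : D.back w = D.back w') (e2 : D.back x = D.back x') :
    w = w' ∧ x = x' := by
  rcases D.back_eq e1 with rfl | ⟨hw, hw'⟩
  · refine ⟨rfl, ?_⟩
    rcases D.back_eq e2 with rfl | ⟨hx, hx'⟩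
    · rfl
    · by_contra hxx
      exact D.not_adj_two_new hd (D.not_both_new h.symm hx) hx hx' (Ne.symm (fun hh => hxx hh.symm)) h h'
  · -- w, w' are both new; then x, x' are kept
    have hx : ¬ (x = v₁ ∨ x = v₂) := D.not_both_new h hw
    have hx' : ¬ (x' = v₁ ∨ x' = v₂) := D.not_both_new h' hw'
    rcases D.back_eq e2 with rfl | ⟨hc, _⟩
    · refine ⟨?_, rfl⟩
      by_contra hww
      exact D.not_adj_two_new hd hx hw hw' (Ne.symm (fun hh => hww hh.symm)) h.symm h'.symm
    · exact absurd hc hx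

/-- A disjoint split does not increase the number of edges. -/
lemma edge_card_le (hd : D.IsDisjoint) [Finite W] [Finite V] :
    Nat.card G'.edgeSet ≤ Nat.card G.edgeSet := by
  refine Nat.card_le_card_of_injective
    (fun e => ⟨Sym2.map D.back e.1, ?_⟩) ?_
  · obtain ⟨e, he⟩ := e
    induction e with
    | _ a b => exact (mem_edgeSet _).2 (D.back_adj ((mem_edgeSet _).1 he))
  · rintro ⟨e, he⟩ ⟨e', he'⟩ hee
    simp only [Subtype.mk.injEq] at hee ⊢
    induction e with
    | _ w x =>
      induction e' with
      | _ w' x' =>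
        rw [Sym2.map_pair_eq, Sym2.map_pair_eq, Sym2.eq_iff] at hee
        have hadj : G'.Adj w x := (mem_edgeSet _).1 he
        have hadj' : G'.Adj w' x' := (mem_edgeSet _).1 he'
        rcases hee with ⟨e1, e2⟩ | ⟨e1, e2⟩
        · obtain ⟨rfl, rfl⟩ := D.back_inj_pair hd hadj hadj' e1 e2
          rfl
        · obtain ⟨rfl, rfl⟩ := D.back_inj_pair hd hadj hadj'.symm e1 e2
          exact Sym2.eq_swap

/-- A nontrivial split preserves the absence of isolated vertices. -/
lemma no_isolated (hnt : D.IsNontrivial) (hmin : ∀ a : V, ∃ b, G.Adj a b) :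
    ∀ w : W, ∃ x, G'.Adj w x := by
  intro w
  by_cases hw : w = v₁ ∨ w = v₂
  · rcases hw with rfl | rfl
    · exact hnt.1
    · exact hnt.2
  · set a := D.keep.symm ⟨w, not_or.mp hw⟩ with ha
    have hwa : (D.keep a).1 = w := D.keep_symm_val hw
    obtain ⟨b, hb⟩ := hmin a.1
    by_cases hbv : b = v
    · rcases D.adj_cover a (hbv ▸ hb) with h | h
      · exact ⟨v₁, hwa ▸ h⟩
      · exact ⟨v₂, hwa ▸ h⟩
    · refine ⟨(D.keep ⟨b, hbv⟩).1, ?_⟩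
      rw [← hwa]
      exact (D.adj_keep a ⟨b, hbv⟩).mpr hb

/-- A split adds exactly one vertex. -/
lemma card_eq [Finite V] [Finite W] : Nat.card W = Nat.card V + 1 := by
  classical
  cases nonempty_fintype V
  cases nonempty_fintype W
  have h1 : Nat.card {u : V // u ≠ v} = Nat.card V - 1 := by
    rw [Nat.card_congr (Equiv.subtypeEquivRight
      (p := fun u : V => u ≠ v) (q := fun u : V => ¬ (u = v)) fun u => Iff.rfl)]
    simp only [Nat.card_eq_fintype_card]
    rw [Fintype.card_subtype_compl, Fintype.card_subtype_eq]
  have h2 : Nat.card {w : W // w ≠ v₁ ∧ w ≠ v₂} = Nat.card W - 2 := by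
    have e1 : {w : W // w ≠ v₁ ∧ w ≠ v₂} ≃ {w : W // ¬ (w = v₁ ∨ w = v₂)} :=
      Equiv.subtypeEquivRight (fun w => by tauto)
    have e2 : {w : W // w = v₁ ∨ w = v₂} ≃ ({v₁, v₂} : Set W) :=
      Equiv.subtypeEquivRight (fun w => by simp)
    have h3 : Nat.card {w : W // w = v₁ ∨ w = v₂} = 2 := by
      rw [Nat.card_congr e2, Nat.card_coe_set_eq, Set.ncard_pair D.ne]
    rw [Nat.card_congr e1]
    simp only [Nat.card_eq_fintype_card] at h3 ⊢
    rw [Fintype.card_subtype_compl, h3]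
  have h4 := Nat.card_congr D.keep
  have h5 : 1 ≤ Nat.card V := @Nat.card_pos V ⟨v⟩ _
  have h6 : 2 ≤ Nat.card W := by
    have : Nontrivial W := ⟨v₁, v₂, D.ne⟩
    exact Finite.one_lt_card
  omega

end VertexSplit

/-- The common final counting argument. -/
lemma no_embed_of_card_lt {α β : Type} [Fintype α] [Fintype β]
    (F : SimpleGraph α) (F' : SimpleGraph β)
    (hlt : Fintype.card α < Fintype.card β)
    (hE : Nat.card F'.edgeSet ≤ Nat.card F.edgeSet)
    (hmin : ∀ w : β, ∃ x, F'.Adj w x) :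
    ¬ ∃ f : α → β, Function.Injective f ∧ ∀ a b, F.Adj a b → F'.Adj (f a) (f b) := by
  rintro ⟨f, hfinj, hfadj⟩
  -- the induced map on edges
  set φ : F.edgeSet → F'.edgeSet := fun e =>
    ⟨Sym2.map f e.1, by
      obtain ⟨e, he⟩ := e
      induction e with
      | _ a b => exact (mem_edgeSet _).2 (hfadj a b ((mem_edgeSet _).1 he))⟩ with hφ
  have hφinj : Function.Injective φ := by
    rintro ⟨e, he⟩ ⟨e', he'⟩ h
    simp only [hφ, Subtype.mk.injEq] at h ⊢
    exact Sym2.map.injective hfinj h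
  have h1 : Nat.card F.edgeSet ≤ Nat.card F'.edgeSet :=
    Nat.card_le_card_of_injective φ hφinj
  have hbij : Function.Bijective φ :=
    (Nat.bijective_iff_injective_and_card φ).mpr ⟨hφinj, le_antisymm h1 hE⟩
  -- a vertex outside the range of f
  have hnsurj : ¬ Function.Surjective f := fun hs =>
    absurd (Fintype.card_le_of_surjective f hs) (not_le.mpr hlt)
  rw [Function.Surjective] at hnsurj
  push_neg at hnsurj
  obtain ⟨w, hw⟩ := hnsurj
  obtain ⟨x, hx⟩ := hmin w
  obtain ⟨⟨e, he⟩, hee⟩ := hbij.2 ⟨s(w, x), (mem_edgeSet _).2 hx⟩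
  simp only [hφ, Subtype.mk.injEq] at hee
  induction e with
  | _ a b =>
    rw [Sym2.map_pair_eq, Sym2.eq_iff] at hee
    rcases hee with ⟨h1, _⟩ | ⟨_, h2⟩
    · exact hw a h1
    · exact hw b h2

/-- If `F` is biconnected (connected, at least three vertices, and `F − v` connected for
every vertex `v`) and `F'` is obtained from `F` by at least one and at most two
non-trivial disjoint vertex splits, then `F` is not a subgraph of `F'`. -/
theorem biconnected_not_subgraph_after_splits {α β : Type} [Fintype α] [Fintype β]
    (F : SimpleGraph α) (F' : SimpleGraph β)
    (hconn : F.Connected) (hcard : 3 ≤ Fintype.card α)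
    (hbi : ∀ v : α, (F.induce {u | u ≠ v}).Connected)
    (hobt :
      (∃ (v : α) (v₁ v₂ : β) (D : VertexSplit F F' v v₁ v₂),
        D.IsDisjoint ∧ D.IsNontrivial) ∨
      (∃ (γ : Type) (_ : Fintype γ) (G₁ : SimpleGraph γ)
        (v : α) (v₁ v₂ : γ) (D₁ : VertexSplit F G₁ v v₁ v₂)
        (u : γ) (u₁ u₂ : β) (D₂ : VertexSplit G₁ F' u u₁ u₂),
        D₁.IsDisjoint ∧ D₁.IsNontrivial ∧ D₂.IsDisjoint ∧ D₂.IsNontrivial)) :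
    ¬ ∃ f : α → β, Function.Injective f ∧ ∀ a b, F.Adj a b → F'.Adj (f a) (f b) := by
  -- F has no isolated vertices
  have hminF : ∀ a : α, ∃ b, F.Adj a b := by
    intro a
    have : Nontrivial α := Fintype.one_lt_card_iff_nontrivial.mp (by omega)
    obtain ⟨b, hb⟩ := exists_ne a
    obtain ⟨p⟩ := hconn.preconnected a b
    cases p with
    | nil => exact absurd rfl hb.symm
    | cons h q => exact ⟨_, h⟩
  rcases hobt with ⟨v, v₁, v₂, D, hd, hnt⟩ |
    ⟨γ, _, G₁, v, v₁, v₂, D₁, u, u₁, u₂, D₂, hd₁, hnt₁, hd₂, hnt₂⟩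
  · refine no_embed_of_card_lt F F' ?_ (D.edge_card_le hd) (D.no_isolated hnt hminF)
    have := D.card_eq
    simp only [Nat.card_eq_fintype_card] at this
    omega
  · refine no_embed_of_card_lt F F' ?_
      (le_trans (D₂.edge_card_le hd₂) (D₁.edge_card_le hd₁))
      (D₂.no_isolated hnt₂ (D₁.no_isolated hnt₁ hminF)) 
    have h1 := D₁.card_eq
    have h2 := D₂.card_eq
    simp only [Nat.card_eq_fintype_card] at h1 h2
    omega
end

section
/- Let G be a finite simple graph that is the 2-subdivision of some cubic graph, let k ∈ ℕ, and let G* be obtained from G by adding, for each edge uv ∈ E(G), a new vertex w_{uv} together with the edges w_{uv}u and w_{uv}v (so that every edge of G becomes a triangle). Then G has a vertex cover of size at most k if and only if there exists a splitting sequence of at most k splits starting with G* and ending in a bipartite graph. -/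
open SimpleGraph

/-- The graph obtained from `G` by adding, for each edge `e = uv` of `G`, a new vertex
`w_e` adjacent to `u` and `v` (turning each edge into a triangle). -/
def addTriangles {V : Type} (G : SimpleGraph V) : SimpleGraph (V ⊕ G.edgeSet) :=
  SimpleGraph.fromRel (fun a b =>
    match a, b with
    | Sum.inl u, Sum.inl v => G.Adj u v
    | Sum.inl u, Sum.inr e => u ∈ (e.1 : Sym2 V)
    | _, _ => False)

/-! ### Auxiliary lemmas about `addTriangles` -/

section AT
variable {V : Type} {G : SimpleGraph V}

lemma addTriangles_adj_inl_inl {u v : V} :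
    (addTriangles G).Adj (Sum.inl u) (Sum.inl v) ↔ G.Adj u v := by
  rw [addTriangles, SimpleGraph.fromRel_adj]
  constructor
  · rintro ⟨-, h | h⟩
    · exact h
    · exact h.symm
  · intro h
    exact ⟨by simpa using h.ne, Or.inl h⟩

lemma addTriangles_adj_inl_inr {u : V} {e : G.edgeSet} :
    (addTriangles G).Adj (Sum.inl u) (Sum.inr e) ↔ u ∈ (e.1 : Sym2 V) := by
  rw [addTriangles, SimpleGraph.fromRel_adj]
  constructor
  · rintro ⟨-, h | h⟩
    · exact h
    · exact h.elim
  · intro h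
    exact ⟨by simp, Or.inl h⟩

lemma addTriangles_not_adj_inr_inr {e f : G.edgeSet} :
    ¬ (addTriangles G).Adj (Sum.inr e) (Sum.inr f) := by
  rw [addTriangles, SimpleGraph.fromRel_adj]
  rintro ⟨-, h | h⟩ <;> exact h

end AT

/-! ### Transfer of a vertex split along an isomorphism of the source graph -/

noncomputable def VertexSplit.ofIso {V V' W : Type*} {G : SimpleGraph V} {H : SimpleGraph V'}
    {G' : SimpleGraph W} (e : G ≃g H) {v : V'} {v₁ v₂ : W}
    (D : VertexSplit H G' v v₁ v₂) : VertexSplit G G' (e.symm v) v₁ v₂ where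
  keep := (e.toEquiv.subtypeEquiv (fun u => by
      constructor
      · intro h h'
        exact h ((RelIso.symm_apply_apply e u).symm.trans (congrArg e.symm h'))
      · intro h h'
        exact h ((congrArg e.toEquiv h').trans (RelIso.apply_symm_apply e v)))).trans D.keep
  ne := D.ne
  newNotAdj := D.newNotAdj
  adj_keep a b := by
    rw [show ((((e.toEquiv.subtypeEquiv _).trans D.keep) a) : W) =
      (D.keep ⟨e a.1, _⟩ : W) from rfl]
    rw [show ((((e.toEquiv.subtypeEquiv _).trans D.keep) b) : W) =
      (D.keep ⟨e b.1, _⟩ : W) from rfl]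
    rw [D.adj_keep]
    exact e.map_adj_iff
  adj_new₁ a h := by
    have := D.adj_new₁ ⟨e a.1, _⟩ h
    have h2 : H.Adj (e a.1) (e (e.symm v)) := by rwa [RelIso.apply_symm_apply]
    exact e.map_adj_iff.mp h2
  adj_new₂ a h := by
    have := D.adj_new₂ ⟨e a.1, _⟩ h
    have h2 : H.Adj (e a.1) (e (e.symm v)) := by rwa [RelIso.apply_symm_apply]
    exact e.map_adj_iff.mp h2
  adj_cover a h := by
    have h2 : H.Adj (e a.1) v := by
      have := e.map_adj_iff.mpr h
      rwa [RelIso.apply_symm_apply] at this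
    exact D.adj_cover ⟨e a.1, _⟩ h2


/-! ### The forward construction -/

section Forward

variable {V : Type} (G : SimpleGraph V)

/-- The target colour of an original vertex: vertices of `G` are coloured `false`,
triangle vertices are coloured `true`. -/
def C0 : V ⊕ G.edgeSet → Bool := Sum.elim (fun _ => false) (fun _ => true)

variable (n : ℕ) (s' : ℕ → V)

/-- `x` is a not-yet-split cover vertex at time `t`. -/
def pend (t : ℕ) (x : V ⊕ G.edgeSet) : Prop :=
  ∃ j, t ≤ j ∧ j < n ∧ x = Sum.inl (s' j)

open Classical in
/-- The set of colours available at a vertex of the `t`-th graph. -/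
noncomputable def Acol (t : ℕ) (w : (V ⊕ G.edgeSet) ⊕ Fin t) : Set Bool :=
  match w with
  | Sum.inl x => if pend G n s' t x then Set.univ else {C0 G x}
  | Sum.inr _ => {true}

/-- Projection to the original vertex set. -/
def piv (t : ℕ) : (V ⊕ G.edgeSet) ⊕ Fin t → V ⊕ G.edgeSet :=
  Sum.elim id (fun j => Sum.inl (s' j.1))

/-- The adjacency relation of the `t`-th graph in the splitting sequence. -/
def GamRel (t : ℕ) (a b : (V ⊕ G.edgeSet) ⊕ Fin t) : Prop :=
  (addTriangles G).Adj (piv G s' t a) (piv G s' t b) ∧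
    ∃ p ∈ Acol G n s' t a, ∃ q ∈ Acol G n s' t b, p ≠ q

/-- The `t`-th graph in the splitting sequence. -/
noncomputable def Gam (t : ℕ) : SimpleGraph ((V ⊕ G.edgeSet) ⊕ Fin t) where
  Adj := GamRel G n s' t
  symm := by
    constructor
    rintro a b ⟨h, p, hp, q, hq, hpq⟩
    exact ⟨h.symm, q, hq, p, hp, hpq.symm⟩
  loopless := by
    constructor
    rintro a ⟨h, -⟩
    exact (addTriangles G).loopless.irrefl _ h

lemma Gam_adj (t : ℕ) (a b : (V ⊕ G.edgeSet) ⊕ Fin t) :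
    (Gam G n s' t).Adj a b ↔ GamRel G n s' t a b := Iff.rfl

lemma Acol_nonempty (t : ℕ) (w : (V ⊕ G.edgeSet) ⊕ Fin t) :
    (Acol G n s' t w).Nonempty := by
  classical
  rcases w with x | j
  · by_cases h : pend G n s' t x <;> simp [Acol, h]
  · simp [Acol]

lemma false_mem_Acol_inl_inl (t : ℕ) (u : V) :
    false ∈ Acol G n s' t (Sum.inl (Sum.inl u)) := by
  classical
  by_cases h : pend G n s' t (Sum.inl u) <;> simp [Acol, h, C0]

lemma Acol_inl_inr (t : ℕ) (e : G.edgeSet) :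
    Acol G n s' t (Sum.inl (Sum.inr e)) = {true} := by
  classical
  have h : ¬ pend G n s' t (Sum.inr e) := by
    rintro ⟨j, -, -, h⟩
    exact absurd h (by simp)
  simp [Acol, h, C0]

lemma Acol_inr (t : ℕ) (j : Fin t) :
    Acol G n s' t (Sum.inr j) = {true} := by simp [Acol]

lemma Acol_univ_of_pend {t : ℕ} {x : V ⊕ G.edgeSet} (h : pend G n s' t x) :
    Acol G n s' t (Sum.inl x) = Set.univ := by
  classical
  simp [Acol, h]

lemma exists_colors_left {t : ℕ} {a b : (V ⊕ G.edgeSet) ⊕ Fin t}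
    (h : Acol G n s' t a = Set.univ) :
    ∃ p ∈ Acol G n s' t a, ∃ q ∈ Acol G n s' t b, p ≠ q := by
  obtain ⟨q, hq⟩ := Acol_nonempty G n s' t b
  exact ⟨!q, by simp [h], q, hq, by cases q <;> simp⟩

lemma exists_colors_right {t : ℕ} {a b : (V ⊕ G.edgeSet) ⊕ Fin t}
    (h : Acol G n s' t b = Set.univ) :
    ∃ p ∈ Acol G n s' t a, ∃ q ∈ Acol G n s' t b, p ≠ q := by
  obtain ⟨p, hp⟩ := Acol_nonempty G n s' t a
  exact ⟨p, hp, !p, by simp [h], by cases p <;> simp⟩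

end Forward

/-! ### The keep-equivalence for one split step -/

noncomputable def keepEquiv {X : Type*} (x₀ : X) (t : ℕ) :
    {u : X ⊕ Fin t // u ≠ Sum.inl x₀} ≃
    {w : X ⊕ Fin (t + 1) // w ≠ Sum.inl x₀ ∧ w ≠ Sum.inr (Fin.last t)} :=
  Equiv.ofBijective
    (fun u => ⟨Sum.map id Fin.castSucc u.1, by
      obtain ⟨x | j, hu⟩ := u
      · exact ⟨by simpa using hu, by simp⟩
      · exact ⟨by simp, by simpa using (Fin.castSucc_lt_last j).ne⟩⟩)
    (by
      constructor
      · intro a b h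
        apply Subtype.ext
        have h' : Sum.map id Fin.castSucc a.1 = Sum.map id Fin.castSucc b.1 :=
          congrArg Subtype.val h
        exact Function.Injective.sumMap Function.injective_id
          (Fin.castSucc_injective t) h'
      · rintro ⟨x | j, ⟨h1, h2⟩⟩
        · exact ⟨⟨Sum.inl x, fun e => h1 (by rw [Sum.inl.injEq] at e; rw [e])⟩, rfl⟩
        · have hj : j ≠ Fin.last t := fun e => h2 (congrArg Sum.inr e)
          exact ⟨⟨Sum.inr (j.castPred hj), by simp⟩,
            Subtype.ext (by simp [Fin.castSucc_castPred])⟩)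

lemma keepEquiv_coe {X : Type*} (x₀ : X) (t : ℕ) (u : {u : X ⊕ Fin t // u ≠ Sum.inl x₀}) :
    (keepEquiv x₀ t u : X ⊕ Fin (t + 1)) = Sum.map id Fin.castSucc u.1 := rfl

section StepLemmas

variable {V : Type} (G : SimpleGraph V) (n : ℕ) (s' : ℕ → V)

lemma piv_map (t : ℕ) (u : (V ⊕ G.edgeSet) ⊕ Fin t) :
    piv G s' (t + 1) (Sum.map id Fin.castSucc u) = piv G s' t u := by
  rcases u with x | j
  · rfl
  · simp [piv]

lemma pend_succ_iff {t : ℕ} {x : V ⊕ G.edgeSet} (hx : x ≠ Sum.inl (s' t)) :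
    pend G n s' (t + 1) x ↔ pend G n s' t x := by
  constructor
  · rintro ⟨j, h1, h2, h3⟩
    exact ⟨j, by omega, h2, h3⟩
  · rintro ⟨j, h1, h2, h3⟩
    rcases eq_or_lt_of_le h1 with rfl | hlt
    · exact absurd h3 hx
    · exact ⟨j, by omega, h2, h3⟩

lemma Acol_map {t : ℕ} {u : (V ⊕ G.edgeSet) ⊕ Fin t}
    (hu : u ≠ Sum.inl (Sum.inl (s' t))) :
    Acol G n s' (t + 1) (Sum.map id Fin.castSucc u) = Acol G n s' t u := by
  classical
  rcases u with x | j
  · have hx : x ≠ Sum.inl (s' t) := fun e => hu (congrArg Sum.inl e)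
    have : pend G n s' (t + 1) x ↔ pend G n s' t x := pend_succ_iff G n s' hx
    simp only [Sum.map_inl, id_eq, Acol]
    rw [if_congr this rfl rfl]
  · rfl

/-- The single split step: at time `t < n`, split the cover vertex `s' t`. -/
noncomputable def splitStep (t : ℕ) (ht : t < n) :
    VertexSplit (Gam G n s' t) (Gam G n s' (t + 1))
      (Sum.inl (Sum.inl (s' t))) (Sum.inl (Sum.inl (s' t))) (Sum.inr (Fin.last t)) where
  keep := keepEquiv (Sum.inl (s' t)) t
  ne := by simp
  newNotAdj := by
    rintro ⟨h, -⟩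
    exact (addTriangles G).loopless.irrefl _ h
  adj_keep a b := by
    rw [Gam_adj, Gam_adj, keepEquiv_coe, keepEquiv_coe]
    unfold GamRel
    rw [piv_map, piv_map, Acol_map G n s' a.2, Acol_map G n s' b.2]
  adj_new₁ a h := by
    obtain ⟨h1, -⟩ := h
    rw [keepEquiv_coe, piv_map] at h1
    refine ⟨h1, ?_⟩
    exact exists_colors_right G n s'
      (Acol_univ_of_pend G n s' ⟨t, le_refl t, ht, rfl⟩)
  adj_new₂ a h := by
    obtain ⟨h1, -⟩ := h
    rw [keepEquiv_coe, piv_map] at h1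
    refine ⟨h1, ?_⟩
    exact exists_colors_right G n s'
      (Acol_univ_of_pend G n s' ⟨t, le_refl t, ht, rfl⟩)
  adj_cover a h := by
    obtain ⟨h1, -⟩ := h
    have h1' : (addTriangles G).Adj
        (piv G s' (t + 1) (Sum.map id Fin.castSucc a.1)) (Sum.inl (s' t)) := by
      rwa [piv_map]
    obtain ⟨p, hp⟩ := Acol_nonempty G n s' (t + 1) (Sum.map id Fin.castSucc a.1)
    cases p with
    | false =>
      right
      rw [Gam_adj, keepEquiv_coe]
      exact ⟨h1', false, hp, true, by rw [Acol_inr]; simp, by simp⟩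
    | true =>
      left
      rw [Gam_adj, keepEquiv_coe]
      exact ⟨h1', true, hp, false, false_mem_Acol_inl_inl G n s' (t + 1) (s' t), by simp⟩

end StepLemmas

section IsoColor

variable {V : Type} (G : SimpleGraph V) (n : ℕ) (s' : ℕ → V)

/-- The original graph `G*` is isomorphic to the `0`-th graph of the sequence. -/
noncomputable def isoGam0 {S : Set V} (hcov : _root_.IsVertexCover G S)
    (hs : ∀ v ∈ S, ∃ j, j < n ∧ s' j = v) :
    addTriangles G ≃g Gam G n s' 0 :=
  ⟨(Equiv.sumEmpty (V ⊕ G.edgeSet) (Fin 0)).symm, by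
    intro a b
    show GamRel G n s' 0 (Sum.inl a) (Sum.inl b) ↔ (addTriangles G).Adj a b
    constructor
    · rintro ⟨h, -⟩
      exact h
    · intro h
      refine ⟨h, ?_⟩
      rcases a with u | e
      · rcases b with v | f
        · have hadj : G.Adj u v := addTriangles_adj_inl_inl.mp h
          rcases hcov hadj with hu | hv
          · obtain ⟨j, hj, hj'⟩ := hs u hu
            exact exists_colors_left G n s'
              (Acol_univ_of_pend G n s' ⟨j, Nat.zero_le j, hj, by rw [hj']⟩)
          · obtain ⟨j, hj, hj'⟩ := hs v hv
            exact exists_colors_right G n s'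
              (Acol_univ_of_pend G n s' ⟨j, Nat.zero_le j, hj, by rw [hj']⟩)
        · exact ⟨false, false_mem_Acol_inl_inl G n s' 0 u, true,
            by rw [Acol_inl_inr]; simp, by simp⟩
      · rcases b with v | f
        · exact ⟨true, by rw [Acol_inl_inr]; simp, false,
            false_mem_Acol_inl_inl G n s' 0 v, by simp⟩
        · exact absurd h addTriangles_not_adj_inr_inr⟩

/-- The final graph of the sequence is bipartite. -/
lemma Gam_colorable : (Gam G n s' n).Colorable 2 := by
  refine ⟨SimpleGraph.Coloring.mk
    (fun w => if Sum.elim (C0 G) (fun _ => true) w then 1 else 0) ?_⟩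
  rintro a b ⟨-, p, hp, q, hq, hne⟩
  have hA : ∀ w : (V ⊕ G.edgeSet) ⊕ Fin n,
      Acol G n s' n w = {Sum.elim (C0 G) (fun _ => true) w} := by
    classical
    rintro (x | j)
    · have hnp : ¬ pend G n s' n x := by
        rintro ⟨j, h1, h2, -⟩
        omega
      simp [Acol, hnp]
    · simp [Acol]
  rw [hA] at hp hq
  rw [Set.mem_singleton_iff] at hp hq
  subst hp; subst hq
  intro hcontra
  cases hs : Sum.elim (C0 G) (fun _ => true) a <;>
    cases ht : Sum.elim (C0 G) (fun _ => true) b <;>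
      simp only [hs, ht] at hne hcontra <;> simp_all

end IsoColor

/-! ### The backward direction -/

lemma backward_aux (ℓ : ℕ) (Gs : ℕ → FinGraph)
    (hstep : ∀ i < ℓ, (Gs i).Step (Gs (i + 1))) :
    ∃ (g : (Gs 0).V → (Gs ℓ).V) (Bad : Set (Gs 0).V),
      Bad.ncard ≤ ℓ ∧ Function.Injective g ∧
      ∀ x y, x ∉ Bad → y ∉ Bad → (Gs 0).G.Adj x y → (Gs ℓ).G.Adj (g x) (g y) := by
  induction ℓ with
  | zero => exact ⟨id, ∅, by simp, Function.injective_id, fun x y _ _ h => h⟩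
  | succ ℓ ih =>
    obtain ⟨g, Bad, hcard, hinj, hadj⟩ := ih (fun i hi => hstep i (Nat.lt_succ_of_lt hi))
    obtain ⟨v, v₁, v₂, ⟨D⟩⟩ := hstep ℓ (Nat.lt_succ_self ℓ)
    classical
    haveI := (Gs 0).fin
    refine ⟨fun x => if h : g x = v then v₁ else (D.keep ⟨g x, h⟩).1,
      Bad ∪ {x | g x = v}, ?_, ?_, ?_⟩
    · refine le_trans (Set.ncard_union_le _ _) ?_
      have h1 : {x | g x = v}.ncard ≤ 1 := by
        rcases Set.eq_empty_or_nonempty {x | g x = v} with he | ⟨x₀, hx₀⟩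
        · simp [he]
        · have hsingle : {x | g x = v} = {x₀} := by
            apply Set.eq_singleton_iff_unique_mem.mpr
            exact ⟨hx₀, fun y hy => hinj (hy.trans hx₀.symm)⟩
          simp [hsingle]
      omega
    · intro x y hxy
      dsimp only at hxy
      by_cases hx : g x = v
      · by_cases hy : g y = v
        · exact hinj (hx.trans hy.symm)
        · rw [dif_pos hx, dif_neg hy] at hxy
          exact absurd hxy.symm (D.keep ⟨g y, hy⟩).2.1
      · by_cases hy : g y = v
        · rw [dif_neg hx, dif_pos hy] at hxy
          exact absurd hxy (D.keep ⟨g x, hx⟩).2.1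
        · rw [dif_neg hx, dif_neg hy] at hxy
          have h2 := D.keep.injective (Subtype.ext hxy)
          have h3 : g x = g y := congrArg Subtype.val h2
          exact hinj h3
    · intro x y hx hy hxy
      have hx1 : x ∉ Bad := fun h => hx (Or.inl h)
      have hx2 : g x ≠ v := fun h => hx (Or.inr h)
      have hy1 : y ∉ Bad := fun h => hy (Or.inl h)
      have hy2 : g y ≠ v := fun h => hy (Or.inr h)
      dsimp only
      rw [dif_neg hx2, dif_neg hy2]
      exact (D.adj_keep ⟨g x, hx2⟩ ⟨g y, hy2⟩).mpr (hadj x y hx1 hy1 hxy)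


/-- Let `G` be the 2-subdivision of a cubic graph and let `G*` be obtained from `G` by
extending every edge to a triangle. Then `G` has a vertex cover of size at most `k` iff
at most `k` vertex splits can turn `G*` into a bipartite graph. -/
theorem vertexCover_iff_split_to_bipartite {V : Type} [Fintype V] (G : SimpleGraph V)
    (hsub : ∃ (V₀ : Type) (_ : Fintype V₀) (_ : LinearOrder V₀) (H : SimpleGraph V₀)
      (_ : DecidableRel H.Adj), (∀ v, H.degree v = 3) ∧ Nonempty (G ≃g subdivision H 2))
    (k : ℕ) :
    (∃ S : Set V, _root_.IsVertexCover G S ∧ S.ncard ≤ k) ↔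
    (∃ (ℓ : ℕ) (Gs : ℕ → FinGraph), ℓ ≤ k ∧
      Gs 0 = ⟨V ⊕ G.edgeSet, inferInstance, addTriangles G⟩ ∧
      (∀ i < ℓ, (Gs i).Step (Gs (i + 1))) ∧
      ((Gs ℓ).G).Colorable 2) := by
  clear hsub
  constructor
  · rintro ⟨S, hcov, hcard⟩
    by_cases hn : S.ncard = 0
    · -- empty cover: `G` has no edges, `G*` is edgeless
      have hS : S = ∅ := (Set.ncard_eq_zero S.toFinite).mp hn
      have hno : ∀ u v, ¬ G.Adj u v := by
        intro u v h
        rcases hcov h with h' | h' <;> simp [hS] at h'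
      have hempty : IsEmpty G.edgeSet := by
        refine ⟨fun e => ?_⟩
        obtain ⟨e', he'⟩ := e
        induction e' using Sym2.ind with
        | _ u v => exact hno u v (G.mem_edgeSet.mp he')
      have hnoadj : ∀ a b, ¬ (addTriangles G).Adj a b := by
        rintro (u | e) (v | f) hab
        · exact hno u v (addTriangles_adj_inl_inl.mp hab)
        · exact hempty.elim f
        · exact hempty.elim e
        · exact hempty.elim e
      exact ⟨0, fun _ => ⟨V ⊕ G.edgeSet, inferInstance, addTriangles G⟩, Nat.zero_le k,
        rfl, fun i hi => absurd hi (Nat.not_lt_zero i),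
        ⟨SimpleGraph.Coloring.mk (fun _ => 0) (fun h => absurd h (hnoadj _ _))⟩⟩
    · have hn' : 0 < S.ncard := Nat.pos_of_ne_zero hn
      set n := S.ncard with hndef
      have hcardS : Nat.card S = n := Nat.card_coe_set_eq S
      let e : S ≃ Fin n := Finite.equivFinOfCardEq hcardS
      let s' : ℕ → V := fun j => if h : j < n then (e.symm ⟨j, h⟩ : V) else (e.symm ⟨0, hn'⟩ : V)
      have hs : ∀ v ∈ S, ∃ j, j < n ∧ s' j = v := by
        intro v hv
        refine ⟨(e ⟨v, hv⟩).1, (e ⟨v, hv⟩).2, ?_⟩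
        simp only [s', dif_pos (e ⟨v, hv⟩).2, Fin.eta, Equiv.symm_apply_apply]
      refine ⟨n, fun i => if i = 0 then ⟨V ⊕ G.edgeSet, inferInstance, addTriangles G⟩
        else ⟨(V ⊕ G.edgeSet) ⊕ Fin i, inferInstance, Gam G n s' i⟩, hcard, if_pos rfl, ?_, ?_⟩
      · intro i hi
        dsimp only
        rw [if_neg (Nat.succ_ne_zero i)]
        cases i with
        | zero =>
          rw [if_pos rfl]
          exact ⟨_, _, _, ⟨VertexSplit.ofIso (isoGam0 G n s' hcov hs) (splitStep G n s' 0 hi)⟩⟩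
        | succ i =>
          rw [if_neg (Nat.succ_ne_zero i)]
          exact ⟨_, _, _, ⟨splitStep G n s' (i + 1) hi⟩⟩
      · dsimp only
        rw [if_neg hn]
        exact Gam_colorable G n s'
  · rintro ⟨ℓ, Gs, hk, h0, hstep, hcol⟩
    have aux := backward_aux ℓ Gs hstep
    rw [h0] at aux
    obtain ⟨g, Bad, hcard, -, hadj⟩ := aux
    obtain ⟨c⟩ := hcol
    classical
    let pick : V ⊕ G.edgeSet → V := Sum.elim id (fun e => (e.1.out).1)
    refine ⟨pick '' Bad, ?_, ?_⟩
    · intro u v huv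
      set ee : G.edgeSet := ⟨s(u, v), G.mem_edgeSet.mpr huv⟩ with hee
      by_cases h1 : Sum.inl u ∈ Bad
      · exact Or.inl ⟨Sum.inl u, h1, rfl⟩
      by_cases h2 : Sum.inl v ∈ Bad
      · exact Or.inr ⟨Sum.inl v, h2, rfl⟩
      by_cases h3 : Sum.inr ee ∈ Bad
      · have hm : (ee.1.out).1 ∈ (s(u, v) : Sym2 V) := Sym2.out_fst_mem _
        rcases Sym2.mem_iff.mp hm with h | h
        · exact Or.inl ⟨Sum.inr ee, h3, h⟩
        · exact Or.inr ⟨Sum.inr ee, h3, h⟩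
      · exfalso
        have t1 := hadj _ _ h1 h2 (addTriangles_adj_inl_inl.mpr huv)
        have t2 := hadj _ _ h1 h3 (addTriangles_adj_inl_inr.mpr (Sym2.mem_mk_left u v))
        have t3 := hadj _ _ h2 h3 (addTriangles_adj_inl_inr.mpr (Sym2.mem_mk_right u v))
        have c1 : c (g (Sum.inl u)) ≠ c (g (Sum.inl v)) := c.valid t1
        have c2 : c (g (Sum.inl u)) ≠ c (g (Sum.inr ee)) := c.valid t2
        have c3 : c (g (Sum.inl v)) ≠ c (g (Sum.inr ee)) := c.valid t3
        have e1 : (c (g (Sum.inl u))).1 ≠ (c (g (Sum.inl v))).1 := fun h => c1 (Fin.ext h)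
        have e2 : (c (g (Sum.inl u))).1 ≠ (c (g (Sum.inr ee))).1 := fun h => c2 (Fin.ext h)
        have e3 : (c (g (Sum.inl v))).1 ≠ (c (g (Sum.inr ee))).1 := fun h => c3 (Fin.ext h)
        have b1 := (c (g (Sum.inl u))).isLt
        have b2 := (c (g (Sum.inl v))).isLt
        have b3 := (c (g (Sum.inr ee))).isLt
        omega
    · calc (pick '' Bad).ncard ≤ Bad.ncard := Set.ncard_image_le (Set.toFinite Bad)
        _ ≤ ℓ := hcard
        _ ≤ k := hk
end

section
/- Let G be a finite simple graph that is the 2-subdivision of some cubic graph, let k ∈ ℕ, and let G* be obtained from G by adding, for each edge uv ∈ E(G), three new vertices c¹_{uv}, c²_{uv}, c³_{uv} together with the path u, c¹_{uv}, c²_{uv}, c³_{uv}, v (so that every edge of G becomes a 5-cycle). Then G has a vertex cover of size at most k if and only if there exists a splitting sequence of at most k splits starting with G* and ending in a perfect graph. -/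
open SimpleGraph

/-- The graph obtained from `G` by adding, for each edge `uv` of `G` (oriented via the
linear order), three new vertices `c¹, c², c³` and the path `u, c¹, c², c³, v`
(turning each edge into a 5-cycle). -/
def addC5s {V : Type} [LinearOrder V] (G : SimpleGraph V) :
    SimpleGraph (V ⊕ ({p : V × V // G.Adj p.1 p.2 ∧ p.1 < p.2} × Fin 3)) :=
  SimpleGraph.fromRel (fun a b =>
    match a, b with
    | Sum.inl u, Sum.inl v => G.Adj u v
    | Sum.inl u, Sum.inr (e, i) => (i.1 = 0 ∧ u = e.1.1) ∨ (i.1 = 2 ∧ u = e.1.2)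
    | Sum.inr (e, i), Sum.inr (f, j) => e = f ∧ i.1 + 1 = j.1
    | _, _ => False)

/-- A graph is perfect if every induced subgraph has chromatic number equal to its
clique number. -/
def IsPerfect {W : Type} (G : SimpleGraph W) : Prop :=
  ∀ s : Set W, (G.induce s).chromaticNumber = ((G.induce s).cliqueNum : ℕ∞)

namespace Splitting
variable {V : Type} [LinearOrder V] (G : SimpleGraph V) (s : ℕ → V)

abbrev Vs := V ⊕ ({p : V × V // G.Adj p.1 p.2 ∧ p.1 < p.2} × Fin 3)

def sW (n : ℕ) : Type := Vs G ⊕ {i : ℕ // i < n}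

def pj {n : ℕ} : sW G n → Vs G := Sum.elim id (fun i => Sum.inl (s i.1))

def cB : Vs G → Bool := Sum.elim (fun _ => true) (fun p => decide (p.2 = 1))

def colB {n : ℕ} : sW G n → Bool := Sum.elim (cB G) (fun _ => false)

def isSp (n : ℕ) (a : Vs G) : Prop := ∃ i, i < n ∧ Sum.inl (s i) = a

def ordR {n : ℕ} : sW G n → sW G n → Prop := fun w w' =>
  match w, w' with
  | Sum.inr j, Sum.inl a => ∀ i, i < n → Sum.inl (s i) = a → j.1 < i
  | _, _ => True

def Gn (n : ℕ) : SimpleGraph (sW G n) where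
  Adj w w' := (addC5s G).Adj (pj G s w) (pj G s w') ∧
    ((isSp G s n (pj G s w) ∨ isSp G s n (pj G s w')) → colB G w ≠ colB G w') ∧
    ordR G s w w' ∧ ordR G s w' w
  symm := ⟨by
    rintro w w' ⟨h1, h2, h3, h4⟩
    exact ⟨h1.symm, fun h => (h2 h.symm).symm, h4, h3⟩⟩
  loopless := ⟨fun w h => (addC5s G).loopless.irrefl _ h.1⟩

end Splitting

namespace Splitting
variable {V : Type} [LinearOrder V] (G : SimpleGraph V) (s : ℕ → V)

lemma gn_adj {n : ℕ} (w w' : sW G n) : (Gn G s n).Adj w w' ↔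
    ((addC5s G).Adj (pj G s w) (pj G s w') ∧
    ((isSp G s n (pj G s w) ∨ isSp G s n (pj G s w')) → colB G w ≠ colB G w') ∧
    ordR G s w w' ∧ ordR G s w' w) := Iff.rfl

def emb {n : ℕ} : sW G n → sW G (n + 1) :=
  Sum.elim Sum.inl (fun j => Sum.inr ⟨j.1, Nat.lt_succ_of_lt j.2⟩)

@[simp] lemma pj_emb {n : ℕ} (w : sW G n) : pj G s (emb G w) = pj G s w := by
  cases w <;> rfl

@[simp] lemma colB_emb {n : ℕ} (w : sW G n) : colB G (emb G w) = colB G w := by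
  cases w <;> rfl

variable {ℓ : ℕ}

lemma pj_ne (hinj : ∀ i j, i < ℓ → j < ℓ → s i = s j → i = j) {n : ℕ} (hn : n < ℓ) (w : sW G n) (hw : w ≠ Sum.inl (Sum.inl (s n))) :
    pj G s w ≠ Sum.inl (s n) := by
  cases w with
  | inl a =>
    intro h
    simp only [pj, Sum.elim_inl, id] at h
    exact hw (by rw [h])
  | inr j =>
    intro h
    simp only [pj, Sum.elim_inr, Sum.inl.injEq] at h
    have := hinj j.1 n (j.2.trans hn) hn h
    omega

lemma isSp_succ {n : ℕ} {a : Vs G} (ha : a ≠ Sum.inl (s n)) :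
    isSp G s (n + 1) a ↔ isSp G s n a := by
  constructor
  · rintro ⟨i, hi, he⟩
    rcases Nat.lt_succ_iff_lt_or_eq.1 hi with h | rfl
    · exact ⟨i, h, he⟩
    · exact absurd he.symm ha
  · rintro ⟨i, hi, he⟩
    exact ⟨i, Nat.lt_succ_of_lt hi, he⟩

lemma ordR_emb {n : ℕ} {w w' : sW G n} (hw' : pj G s w' ≠ Sum.inl (s n)) :
    ordR G s (emb G w) (emb G w') ↔ ordR G s w w' := by
  cases w with
  | inl a => cases w' <;> exact Iff.rfl
  | inr j =>
    cases w' with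
    | inl a =>
      simp only [ordR, emb, Sum.elim_inr, Sum.elim_inl]
      constructor
      · intro h i hi he
        exact h i (Nat.lt_succ_of_lt hi) he
      · intro h i hi he
        rcases Nat.lt_succ_iff_lt_or_eq.1 hi with h' | rfl
        · exact h i h' he
        · exact absurd he.symm (by simpa [pj] using hw')
    | inr j' => exact Iff.rfl

end Splitting

namespace Splitting
variable {V : Type} [LinearOrder V] (G : SimpleGraph V) (s : ℕ → V) {ℓ : ℕ}

lemma not_isSp (hinj : ∀ i j, i < ℓ → j < ℓ → s i = s j → i = j) {n : ℕ} (hn : n < ℓ) :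
    ¬ isSp G s n (Sum.inl (s n)) := by
  rintro ⟨i, hi, he⟩
  have : s i = s n := by injection he
  have := hinj i n (hi.trans hn) hn this
  omega

def keepEquiv (n : ℕ) :
    {u : sW G n // u ≠ Sum.inl (Sum.inl (s n))} ≃
    {w : sW G (n+1) // w ≠ Sum.inl (Sum.inl (s n)) ∧ w ≠ Sum.inr ⟨n, Nat.lt_succ_self n⟩} where
  toFun u := ⟨emb G u.1, by
    obtain ⟨u, hu⟩ := u
    cases u with
    | inl a =>
      have hu' : a ≠ Sum.inl (s n) := fun h => hu (by rw [h])
      exact ⟨fun h => hu' (Sum.inl.inj h), fun h => Sum.inl_ne_inr h⟩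
    | inr j =>
      refine ⟨fun h => Sum.inr_ne_inl h, fun h => ?_⟩
      have h3 : j.1 = n := congrArg Subtype.val (Sum.inr.inj h)
      have := j.2
      omega⟩
  invFun w := match w with
    | ⟨Sum.inl a, h⟩ => ⟨Sum.inl a, fun hc => h.1 (congrArg Sum.inl (Sum.inl.inj hc))⟩
    | ⟨Sum.inr j, h⟩ => ⟨Sum.inr ⟨j.1, by
        rcases Nat.lt_succ_iff_lt_or_eq.1 j.2 with h' | h'
        · exact h'
        · exact (h.2 (congrArg Sum.inr (Subtype.ext h'))).elim⟩, Sum.inr_ne_inl⟩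
  left_inv := by rintro ⟨(a | ⟨jv, hj⟩), hu⟩ <;> rfl
  right_inv := by rintro ⟨(a | ⟨jv, hj⟩), hw⟩ <;> rfl

end Splitting

namespace Splitting
variable {V : Type} [LinearOrder V] (G : SimpleGraph V) (s : ℕ → V) {ℓ : ℕ}

def step_split (hinj : ∀ i j, i < ℓ → j < ℓ → s i = s j → i = j) {n : ℕ} (hn : n < ℓ) :
    VertexSplit (Gn G s n) (Gn G s (n+1)) (Sum.inl (Sum.inl (s n)))
      (Sum.inl (Sum.inl (s n))) (Sum.inr ⟨n, Nat.lt_succ_self n⟩) where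
  keep := keepEquiv G s n
  ne := Sum.inl_ne_inr
  newNotAdj := by
    rintro ⟨h1, -⟩
    exact (addC5s G).loopless.irrefl _ h1
  adj_keep a b := by
    have ea := pj_ne G s hinj hn a.1 a.2
    have eb := pj_ne G s hinj hn b.1 b.2
    show (Gn G s (n+1)).Adj (emb G a.1) (emb G b.1) ↔ (Gn G s n).Adj a.1 b.1
    rw [gn_adj, gn_adj, pj_emb, pj_emb, colB_emb, colB_emb, isSp_succ G s ea,
      isSp_succ G s eb, ordR_emb G s eb, ordR_emb G s ea]
  adj_new₁ a := by
    intro h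
    replace h : (Gn G s (n+1)).Adj (emb G a.1) (Sum.inl (Sum.inl (s n))) := h
    obtain ⟨h1, h2, h3, h4⟩ := h
    rw [pj_emb] at h1
    have hcol : colB G a.1 ≠ colB G (Sum.inl (Sum.inl (s n)) : sW G n) := by
      have := h2 (Or.inr ⟨n, Nat.lt_succ_self n, rfl⟩)
      rwa [colB_emb] at this
    refine ⟨h1, fun _ => hcol, ?_, ?_⟩
    · cases ha : a.1 with
      | inl a' => trivial
      | inr j =>
        intro i hi he
        have : s i = s n := by injection he
        have := hinj i n (hi.trans hn) hn this
        omega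
    · cases a.1 <;> trivial
  adj_new₂ a := by
    intro h
    replace h : (Gn G s (n+1)).Adj (emb G a.1) (Sum.inr ⟨n, Nat.lt_succ_self n⟩) := h
    obtain ⟨h1, h2, h3, h4⟩ := h
    rw [pj_emb] at h1
    have hcol : colB G a.1 = true := by
      have := h2 (Or.inr ⟨n, Nat.lt_succ_self n, rfl⟩)
      rw [colB_emb] at this
      simpa [colB] using this
    refine ⟨h1, ?_, ?_, ?_⟩
    · rintro (⟨i, hi, he⟩ | hsp)
      · -- i < n, Sum.inl (s i) = pj a.1
        exfalso
        cases ha : a.1 with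
        | inr j => rw [ha] at hcol; simp [colB] at hcol
        | inl a' =>
          rw [ha] at he h4
          simp only [pj, Sum.elim_inl, id] at he
          have h5 : n < i := h4 i (Nat.lt_succ_of_lt hi) he
          omega
      · exact absurd hsp (not_isSp G s hinj hn)
    · cases ha : a.1 with
      | inl a' => trivial
      | inr j =>
        intro i hi he
        have : s i = s n := by injection he
        have := hinj i n (hi.trans hn) hn this
        omega
    · cases a.1 <;> trivial
  adj_cover a := by
    intro h
    obtain ⟨h1, h2, h3, h4⟩ := h
    cases hc : colB G a.1 with
    | false =>
      left
      show (Gn G s (n+1)).Adj (emb G a.1) (Sum.inl (Sum.inl (s n)))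
      refine ⟨by rwa [pj_emb], fun _ => by rw [colB_emb, hc]; simp [colB, cB], ?_, ?_⟩
      · cases ha : a.1 with
        | inl a' => trivial
        | inr j =>
          intro i hi he
          have hsi : s i = s n := by injection he
          have hi' : i ≤ n := Nat.lt_succ_iff.1 hi
          have := hinj i n (lt_of_le_of_lt hi' hn) hn hsi
          have := j.2
          show j.1 < i
          omega
      · cases a.1 <;> trivial
    | true =>
      right
      show (Gn G s (n+1)).Adj (emb G a.1) (Sum.inr ⟨n, Nat.lt_succ_self n⟩)
      refine ⟨by rwa [pj_emb], fun _ => by rw [colB_emb, hc]; simp [colB], ?_, ?_⟩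
      · cases a.1 <;> trivial
      · cases ha : a.1 with
        | inr j => trivial
        | inl a' =>
          intro i hi he
          exfalso
          rcases Nat.lt_succ_iff_lt_or_eq.1 hi with hi' | rfl
          · have : isSp G s n (pj G s a.1) := ⟨i, hi', by rw [ha]; exact he⟩
            have := h2 (Or.inl this)
            rw [hc] at this
            exact this rfl
          · exact a.2 (by rw [ha, ← he])
  


end Splitting

namespace Splitting
variable {V : Type} [LinearOrder V] (G : SimpleGraph V) (s : ℕ → V) {ℓ : ℕ}

instance : IsEmpty {i : ℕ // i < 0} := ⟨fun x => absurd x.2 (Nat.not_lt_zero _)⟩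

def e0 : addC5s G ≃g Gn G s 0 where
  toEquiv := (Equiv.sumEmpty (Vs G) {i : ℕ // i < 0}).symm
  map_rel_iff' := by
    intro a b
    show (Gn G s 0).Adj (Sum.inl a) (Sum.inl b) ↔ (addC5s G).Adj a b
    constructor
    · rintro ⟨h1, -⟩; exact h1
    · intro h
      refine ⟨h, fun hsp => ?_, trivial, trivial⟩
      rcases hsp with ⟨i, hi, -⟩ | ⟨i, hi, -⟩ <;> omega

def VertexSplit.precompIso {A B W : Type} {GA : SimpleGraph A} {GB : SimpleGraph B}
    {H : SimpleGraph W} {v : B} {v₁ v₂ : W} (e : GA ≃g GB) (v' : A) (hv : e v' = v)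
    (D : VertexSplit GB H v v₁ v₂) : VertexSplit GA H v' v₁ v₂ where
  keep := (Equiv.subtypeEquiv e.toEquiv (fun u => by
    subst hv
    exact ⟨fun h hc => h (e.toEquiv.injective hc), fun h hc => h (by subst hc; rfl)⟩)).trans D.keep
  ne := D.ne
  newNotAdj := D.newNotAdj
  adj_keep a b := by
    refine (D.adj_keep _ _).trans ?_
    exact e.map_adj_iff
  adj_new₁ a := by
    intro h
    have := D.adj_new₁ _ h
    subst hv
    exact e.map_adj_iff.1 this
  adj_new₂ a := by
    intro h
    have := D.adj_new₂ _ h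
    subst hv
    exact e.map_adj_iff.1 this
  adj_cover a := by
    intro h
    refine D.adj_cover _ ?_
    subst hv
    exact e.map_adj_iff.2 h

lemma colB_proper (hcov : _root_.IsVertexCover G (s '' Set.Iio ℓ)) {w w' : sW G ℓ}
    (h : (Gn G s ℓ).Adj w w') : colB G w ≠ colB G w' := by
  obtain ⟨h1, h2, h3, h4⟩ := h
  by_cases hsp : isSp G s ℓ (pj G s w) ∨ isSp G s ℓ (pj G s w')
  · exact h2 hsp
  push_neg at hsp
  obtain ⟨hs1, hs2⟩ := hsp
  cases w with
  | inr j => exact absurd ⟨j.1, j.2, rfl⟩ hs1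
  | inl a =>
    cases w' with
    | inr j => exact absurd ⟨j.1, j.2, rfl⟩ hs2
    | inl b =>
      rw [show pj G s (Sum.inl a) = a from rfl] at hs1 h1
      rw [show pj G s (Sum.inl b) = b from rfl] at hs2 h1
      rw [addC5s, fromRel_adj] at h1
      obtain ⟨hne, hr⟩ := h1
      show cB G a ≠ cB G b
      rcases a with u | ⟨e, i⟩ <;> rcases b with v | ⟨f, j⟩
      · have hadj : G.Adj u v := by
          rcases hr with h | h
          · exact h
          · exact h.symm
        rcases hcov hadj with ⟨x, hx, hxe⟩ | ⟨x, hx, hxe⟩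
        · exact absurd ⟨x, hx, by rw [hxe]⟩ hs1
        · exact absurd ⟨x, hx, by rw [hxe]⟩ hs2
      · have : j.1 = 0 ∨ j.1 = 2 := by
          rcases hr with (⟨h, -⟩ | ⟨h, -⟩) | h
          · exact Or.inl h
          · exact Or.inr h
          · exact absurd h not_false
        simp only [cB, Sum.elim_inl, Sum.elim_inr, ne_eq]
        rcases this with h | h <;> simp [Fin.ext_iff, h]
      · have : i.1 = 0 ∨ i.1 = 2 := by
          rcases hr with h | (⟨h, -⟩ | ⟨h, -⟩)
          · exact absurd h not_false
          · exact Or.inl h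
          · exact Or.inr h
        simp only [cB, Sum.elim_inl, Sum.elim_inr, ne_eq]
        rcases this with h | h <;> simp [Fin.ext_iff, h]
      · have : i.1 + 1 = j.1 ∨ j.1 + 1 = i.1 := by
          rcases hr with ⟨-, h⟩ | ⟨-, h⟩
          · exact Or.inl h
          · exact Or.inr h
        simp only [cB, Sum.elim_inr, ne_eq]
        fin_cases i <;> fin_cases j <;> simp_all

end Splitting

lemma chromEqClique {α : Type} [Finite α] (K : SimpleGraph α) (h : K.Colorable 2) :
    K.chromaticNumber = (K.cliqueNum : ℕ∞) := by
  classical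
  have : Fintype α := Fintype.ofFinite α
  obtain ⟨C⟩ := h
  have hb : ∀ n ∈ {n | ∃ s, K.IsNClique n s}, n ≤ 2 := by
    rintro n ⟨t, ht⟩
    by_contra hn
    push_neg at hn
    obtain ⟨x, hx, y, hy, z, hz, hxy, hxz, hyz⟩ := Finset.two_lt_card.1 (ht.2 ▸ hn)
    have d1 : C x ≠ C y := C.valid (ht.1 hx hy hxy)
    have d2 : C x ≠ C z := C.valid (ht.1 hx hz hxz)
    have d3 : C y ≠ C z := C.valid (ht.1 hy hz hyz)
    have : (C x).1 < 2 := (C x).2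
    have : (C y).1 < 2 := (C y).2
    have : (C z).1 < 2 := (C z).2
    have e1 : (C x).1 ≠ (C y).1 := fun he => d1 (Fin.ext he)
    have e2 : (C x).1 ≠ (C z).1 := fun he => d2 (Fin.ext he)
    have e3 : (C y).1 ≠ (C z).1 := fun he => d3 (Fin.ext he)
    omega
  have hbdd : BddAbove {n | ∃ s, K.IsNClique n s} := ⟨2, hb⟩
  have hne0 : (0 : ℕ) ∈ {n | ∃ s, K.IsNClique n s} := ⟨∅, isNClique_empty.2 rfl⟩
  by_cases hE : ∃ x y, K.Adj x y
  · obtain ⟨x, y, hxy⟩ := hE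
    have hpair : K.IsNClique 2 ({x, y} : Finset α) := by
      have h1 : K.IsNClique 1 ({y} : Finset α) := isNClique_singleton.2 rfl
      have := h1.insert (a := x) (by intro b hb'; simp at hb'; subst hb'; exact hxy)
      simpa using this
    have hω : K.cliqueNum = 2 := le_antisymm (csSup_le ⟨0, hne0⟩ hb)
      (le_csSup hbdd ⟨_, hpair⟩)
    have hχle : K.chromaticNumber ≤ 2 := by
      have := Colorable.chromaticNumber_le (n := 2) ⟨C⟩
      simpa using this
    have hχge : (2 : ℕ∞) ≤ K.chromaticNumber := by
      by_contra hlt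
      push_neg at hlt
      have h1 : K.chromaticNumber ≤ 1 := Order.le_of_lt_succ (by exact_mod_cast hlt)
      have : K.Colorable 1 := by
        have := (chromaticNumber_le_iff_colorable (n := 1)).1 (by exact_mod_cast h1)
        exact this
      obtain ⟨C1⟩ := this
      exact C1.valid hxy (Subsingleton.elim _ _)
    rw [hω]
    exact le_antisymm hχle (by exact_mod_cast hχge)
  · push_neg at hE
    have hbot : K = ⊥ := by ext a b; simp [hE a b]
    cases isEmpty_or_nonempty α with
    | inl hemp =>
      rw [K.chromaticNumber_eq_zero_of_isEmpty]
      have hω : K.cliqueNum = 0 := by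
        refine le_antisymm (csSup_le ⟨0, hne0⟩ ?_) (Nat.zero_le _)
        rintro n ⟨t, ht⟩
        have : t = ∅ := Finset.eq_empty_of_isEmpty t
        subst this
        simp [isNClique_empty.1 ht]
      rw [hω]; rfl
    | inr hne =>
      have hχ : K.chromaticNumber = 1 := by rw [hbot]; exact chromaticNumber_bot
      have hω : K.cliqueNum = 1 := by
        refine le_antisymm (csSup_le ⟨0, hne0⟩ ?_)
          (le_csSup hbdd ⟨{hne.some}, isNClique_singleton.2 rfl⟩)
        rintro n ⟨t, ht⟩
        by_contra hn
        push_neg at hn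
        obtain ⟨x, hx, y, hy, hxy⟩ := Finset.one_lt_card.1 (ht.2 ▸ hn)
        exact hE x y (ht.1 hx hy hxy)
      rw [hχ, hω]; rfl

lemma perfect_of_colorable_two {α : Type} [Finite α] (K : SimpleGraph α)
    (h : K.Colorable 2) : IsPerfect K := by
  intro s
  apply chromEqClique
  obtain ⟨C⟩ := h
  exact ⟨⟨fun x => C x.1, fun {a b} hab => C.valid hab⟩⟩

namespace Splitting
variable {V : Type} [LinearOrder V] (G : SimpleGraph V) (s : ℕ → V) {ℓ : ℕ}

lemma colorable_final (hcov : _root_.IsVertexCover G (s '' Set.Iio ℓ)) :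
    (Gn G s ℓ).Colorable 2 := by
  refine ⟨⟨fun w => if colB G w then 0 else 1, ?_⟩⟩
  intro a b hab
  have := colB_proper G s hcov hab
  cases hca : colB G a <;> cases hcb : colB G b <;> simp_all

end Splitting

namespace Splitting
variable {V : Type} [LinearOrder V]

instance instFinLt (n : ℕ) : Finite {i : ℕ // i < n} :=
  Finite.of_injective (fun j => (⟨j.1, j.2⟩ : Fin n))
    (fun a b h => Subtype.ext (by simpa [Fin.ext_iff] using h))

instance instFinsW [Finite V] (G : SimpleGraph V) (n : ℕ) : Finite (sW G n) := by
  unfold sW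
  infer_instance

lemma forward_aux [Finite V] (G : SimpleGraph V) (s0 : ℕ → V) (ℓ : ℕ)
    (hinj : ∀ i j, i < ℓ → j < ℓ → s0 i = s0 j → i = j)
    (hcov : _root_.IsVertexCover G (s0 '' Set.Iio ℓ)) :
    ∃ Gs : ℕ → FinGraph, Gs 0 = ⟨Vs G, inferInstance, addC5s G⟩ ∧
      (∀ i < ℓ, (Gs i).Step (Gs (i + 1))) ∧ IsPerfect ((Gs ℓ).G) := by
  refine ⟨fun n => match n with
    | 0 => ⟨Vs G, inferInstance, addC5s G⟩
    | (m+1) => ⟨sW G (m+1), inferInstance, Gn G s0 (m+1)⟩, rfl, ?_, ?_⟩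
  · intro i hi
    match i with
    | 0 =>
      exact ⟨Sum.inl (s0 0), Sum.inl (Sum.inl (s0 0)), Sum.inr ⟨0, Nat.lt_succ_self 0⟩,
        ⟨VertexSplit.precompIso (e0 G s0) (Sum.inl (s0 0)) rfl (step_split G s0 hinj hi)⟩⟩
    | (m+1) =>
      exact ⟨Sum.inl (Sum.inl (s0 (m+1))), Sum.inl (Sum.inl (s0 (m+1))),
        Sum.inr ⟨m+1, Nat.lt_succ_self _⟩, ⟨step_split G s0 hinj hi⟩⟩
  · match ℓ with
    | 0 =>
      exact perfect_of_colorable_two _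
        (Colorable.of_hom (e0 G s0).toHom (colorable_final G s0 hcov))
    | (m+1) =>
      exact perfect_of_colorable_two _ (colorable_final G s0 hcov)

lemma forward [Finite V] [Nonempty V] (G : SimpleGraph V) (k : ℕ) (S : Set V)
    (hS : _root_.IsVertexCover G S) (hcard : S.ncard ≤ k) :
    ∃ (ℓ : ℕ) (Gs : ℕ → FinGraph), ℓ ≤ k ∧
      Gs 0 = ⟨Vs G, inferInstance, addC5s G⟩ ∧
      (∀ i < ℓ, (Gs i).Step (Gs (i + 1))) ∧ IsPerfect ((Gs ℓ).G) := by
  classical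
  have hfin : S.Finite := Set.toFinite S
  set F := hfin.toFinset with hFdef
  have hF : F.card = S.ncard := (Set.ncard_eq_toFinset_card S hfin).symm
  let e := F.equivFin
  set s0 : ℕ → V := fun i => if h : i < F.card then (e.symm ⟨i, h⟩ : F).1
    else Classical.arbitrary V with hs0
  have hinj : ∀ i j, i < S.ncard → j < S.ncard → s0 i = s0 j → i = j := by
    intro i j hi hj hij
    rw [← hF] at hi hj
    simp only [hs0, dif_pos hi, dif_pos hj] at hij
    have := e.symm.injective (Subtype.ext hij)
    simpa [Fin.ext_iff] using this
  have himg : s0 '' Set.Iio S.ncard = S := by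
    apply Set.eq_of_subset_of_subset
    · rintro x ⟨i, hi, rfl⟩
      have hi' : i < F.card := by rw [hF]; exact hi
      simp only [hs0, dif_pos hi']
      have := (e.symm ⟨i, hi'⟩).2
      exact hfin.mem_toFinset.mp this
    · intro x hx
      have hx' : x ∈ F := hfin.mem_toFinset.mpr hx
      refine ⟨(e ⟨x, hx'⟩).1, by rw [← hF]; exact (e ⟨x, hx'⟩).2, ?_⟩
      have h2 : ((e ⟨x, hx'⟩) : Fin F.card).1 < F.card := (e ⟨x, hx'⟩).2
      simp only [hs0, dif_pos h2]
      have h3 : (⟨(e ⟨x, hx'⟩).1, h2⟩ : Fin F.card) = e ⟨x, hx'⟩ := Fin.ext rfl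
      rw [h3, Equiv.symm_apply_apply]
  obtain ⟨Gs, h0, hsteps, hperf⟩ := forward_aux G s0 S.ncard hinj (by rw [himg]; exact hS)
  exact ⟨S.ncard, Gs, hcard, h0, hsteps, hperf⟩

end Splitting

lemma back_lemma (ℓ : ℕ) :
    ∀ (Gs : ℕ → FinGraph), (∀ i < ℓ, (Gs i).Step (Gs (i + 1))) →
    ∀ {X Vstar E : Type} (end1 end2 : E → X) (orig : E → Fin 5 → Vstar)
      (pick : Vstar → X),
      (∀ e p, pick (orig e p) = end1 e ∨ pick (orig e p) = end2 e) →
      ∀ (W : E → Fin 5 → (Gs 0).V),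
      (∀ e p, (Gs 0).G.Adj (W e p) (W e (p + 1))) →
      (∀ e p q, q ≠ p + 1 → p ≠ q + 1 → p ≠ q → ¬ (Gs 0).G.Adj (W e p) (W e q)) →
      (∀ e p e' p', W e p = W e' p' → orig e p = orig e' p') →
      ∃ S : Finset X, S.card ≤ ℓ ∧ ∀ e : E,
        (∃ x ∈ S, x = end1 e ∨ x = end2 e) ∨
        ∃ W' : Fin 5 → (Gs ℓ).V, (∀ p, (Gs ℓ).G.Adj (W' p) (W' (p + 1))) ∧
          (∀ p q, q ≠ p + 1 → p ≠ q + 1 → p ≠ q → ¬ (Gs ℓ).G.Adj (W' p) (W' q)) := by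
  induction ℓ with
  | zero =>
    intro Gs _ X Vstar E end1 end2 orig pick Hpick W hadj hnadj hcons
    exact ⟨∅, le_refl _, fun e => Or.inr ⟨W e, hadj e, hnadj e⟩⟩
  | succ m IH =>
    intro Gs hstep X Vstar E end1 end2 orig pick Hpick W hadj hnadj hcons
    classical
    obtain ⟨v, v₁, v₂, ⟨D⟩⟩ := hstep 0 (Nat.succ_pos m)
    set Gs' : ℕ → FinGraph := fun i => Gs (i + 1) with hGs'
    have hstep' : ∀ i < m, (Gs' i).Step (Gs' (i + 1)) :=
      fun i hi => hstep (i + 1) (Nat.succ_lt_succ hi)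
    -- the subfamily of cycles not hit by the split
    let E' : Type := {e : E // ∀ p, W e p ≠ v}
    let W' : E' → Fin 5 → (Gs' 0).V := fun e p => (D.keep ⟨W e.1 p, e.2 p⟩).1
    have hadj' : ∀ e p, (Gs' 0).G.Adj (W' e p) (W' e (p + 1)) :=
      fun e p => (D.adj_keep _ _).2 (hadj e.1 p)
    have hnadj' : ∀ e p q, q ≠ p + 1 → p ≠ q + 1 → p ≠ q →
        ¬ (Gs' 0).G.Adj (W' e p) (W' e q) :=
      fun e p q h1 h2 h3 h => hnadj e.1 p q h1 h2 h3 ((D.adj_keep _ _).1 h)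
    have hcons' : ∀ e p e' p', W' e p = W' e' p' → orig e.1 p = orig e'.1 p' := by
      intro e p e' p' h
      apply hcons
      have := D.keep.injective (Subtype.ext h)
      exact congrArg Subtype.val this
    obtain ⟨S', hS'card, hS'⟩ := IH Gs' hstep' (fun e => end1 e.1) (fun e => end2 e.1)
      (fun e => orig e.1) pick (fun e p => Hpick e.1 p) W' hadj' hnadj' hcons'
    by_cases hhit : ∃ e p, W e p = v
    · obtain ⟨e₀, p₀, hp₀⟩ := hhit
      refine ⟨insert (pick (orig e₀ p₀)) S', ?_, ?_⟩
      · calc (insert (pick (orig e₀ p₀)) S').card ≤ S'.card + 1 := Finset.card_insert_le _ _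
          _ ≤ m + 1 := Nat.succ_le_succ hS'card
      · intro e
        by_cases he : ∀ p, W e p ≠ v
        · rcases hS' ⟨e, he⟩ with ⟨x, hx, hxe⟩ | hW
          · exact Or.inl ⟨x, Finset.mem_insert_of_mem hx, hxe⟩
          · exact Or.inr hW
        · push_neg at he
          obtain ⟨p, hp⟩ := he
          have : orig e p = orig e₀ p₀ := hcons e p e₀ p₀ (by rw [hp, hp₀])
          refine Or.inl ⟨pick (orig e₀ p₀), Finset.mem_insert_self _ _, ?_⟩
          rw [← this]
          exact Hpick e p
    · push_neg at hhit
      refine ⟨S', hS'card.trans (Nat.le_succ m), ?_⟩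
      intro e
      rcases hS' ⟨e, fun p => hhit e p⟩ with ⟨x, hx, hxe⟩ | hW
      · exact Or.inl ⟨x, hx, hxe⟩
      · exact Or.inr hW

lemma no_induced_C5 {α : Type} [Finite α] (K : SimpleGraph α) (hperf : IsPerfect K)
    (W' : Fin 5 → α) (hadj : ∀ p, K.Adj (W' p) (W' (p + 1)))
    (hnadj : ∀ p q, q ≠ p + 1 → p ≠ q + 1 → p ≠ q → ¬ K.Adj (W' p) (W' q)) : False := by
  classical
  set s : Set α := Set.range W' with hs
  have hmem : ∀ p, W' p ∈ s := fun p => ⟨p, rfl⟩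
  set Ki := K.induce s with hKi
  have hKiadj : ∀ p q, Ki.Adj ⟨W' p, hmem p⟩ ⟨W' q, hmem q⟩ ↔ K.Adj (W' p) (W' q) :=
    fun p q => Iff.rfl
  have hconsec : ∀ p q : Fin 5, K.Adj (W' p) (W' q) → q = p + 1 ∨ p = q + 1 := by
    intro p q h
    by_contra hc
    push_neg at hc
    have hpq : p ≠ q := fun he => K.loopless.irrefl _ (he ▸ h)
    exact hnadj p q hc.1 hc.2 hpq h
  -- cliqueNum of the induced graph is 2
  have hb : ∀ n ∈ {n | ∃ t, Ki.IsNClique n t}, n ≤ 2 := by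
    rintro n ⟨t, ht⟩
    by_contra hn
    push_neg at hn
    obtain ⟨x, hx, y, hy, z, hz, hxy, hxz, hyz⟩ := Finset.two_lt_card.1 (ht.2 ▸ hn)
    have axy : K.Adj x.1 y.1 := ht.1 hx hy hxy
    have axz : K.Adj x.1 z.1 := ht.1 hx hz hxz
    have ayz : K.Adj y.1 z.1 := ht.1 hy hz hyz
    obtain ⟨px, hpx⟩ := x.2
    obtain ⟨py, hpy⟩ := y.2
    obtain ⟨pz, hpz⟩ := z.2
    rw [← hpx, ← hpy] at axy
    rw [← hpx, ← hpz] at axz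
    rw [← hpy, ← hpz] at ayz
    have hpxy : px ≠ py := fun he => K.loopless.irrefl _ (he ▸ axy)
    have hpxz : px ≠ pz := fun he => K.loopless.irrefl _ (he ▸ axz)
    have hpyz : py ≠ pz := fun he => K.loopless.irrefl _ (he ▸ ayz)
    have c1 := hconsec _ _ axy
    have c2 := hconsec _ _ axz
    have c3 := hconsec _ _ ayz
    have key : ∀ px py pz : Fin 5, px ≠ py → px ≠ pz → py ≠ pz →
        (py = px + 1 ∨ px = py + 1) → (pz = px + 1 ∨ px = pz + 1) →
        (pz = py + 1 ∨ py = pz + 1) → False := by decide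
    exact key px py pz hpxy hpxz hpyz c1 c2 c3
  have hbdd : BddAbove {n | ∃ t, Ki.IsNClique n t} := ⟨2, hb⟩
  have hne0 : (0 : ℕ) ∈ {n | ∃ t, Ki.IsNClique n t} := ⟨∅, isNClique_empty.2 rfl⟩
  have hpair : Ki.IsNClique 2 ({⟨W' 0, hmem 0⟩, ⟨W' 1, hmem 1⟩} : Finset s) := by
    have h01 : Ki.Adj ⟨W' 0, hmem 0⟩ ⟨W' 1, hmem 1⟩ := by
      rw [hKiadj]
      simpa using hadj 0
    have h1 : Ki.IsNClique 1 ({⟨W' 1, hmem 1⟩} : Finset s) := isNClique_singleton.2 rfl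
    have := h1.insert (a := ⟨W' 0, hmem 0⟩)
      (by intro b hb'; simp at hb'; subst hb'; exact h01)
    simpa using this
  have hω : Ki.cliqueNum = 2 := le_antisymm (csSup_le ⟨0, hne0⟩ hb) (le_csSup hbdd ⟨_, hpair⟩)
  have hχ : Ki.chromaticNumber = 2 := by
    have := hperf s
    rw [← hKi] at this
    rw [this, hω]
    rfl
  have hcol : Ki.Colorable 2 := by
    rw [← chromaticNumber_le_iff_colorable (n := 2)]
    exact le_of_eq (by exact_mod_cast hχ)
  obtain ⟨C⟩ := hcol
  have hne : ∀ p : Fin 5, C ⟨W' p, hmem p⟩ ≠ C ⟨W' (p + 1), hmem (p + 1)⟩ := by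
    intro p
    apply C.valid
    rw [hKiadj]
    exact hadj p
  have h0 := hne 0
  have h1 := hne 1
  have h2 := hne 2
  have h3 := hne 3
  have h4 := hne 4
  have e40 : (4 : Fin 5) + 1 = 0 := rfl
  rw [e40] at h4
  have v0 : (C ⟨W' 0, hmem 0⟩).1 < 2 := (C _).2
  have v1 : (C ⟨W' 1, hmem 1⟩).1 < 2 := (C _).2
  have v2 : (C ⟨W' 2, hmem 2⟩).1 < 2 := (C _).2
  have v3 : (C ⟨W' 3, hmem 3⟩).1 < 2 := (C _).2
  have v4 : (C ⟨W' 4, hmem 4⟩).1 < 2 := (C _).2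
  have n0 : (C ⟨W' 0, hmem 0⟩).1 ≠ (C ⟨W' (0+1), hmem (0+1)⟩).1 := fun he => h0 (Fin.ext he)
  have n1 : (C ⟨W' 1, hmem 1⟩).1 ≠ (C ⟨W' (1+1), hmem (1+1)⟩).1 := fun he => h1 (Fin.ext he)
  have n2 : (C ⟨W' 2, hmem 2⟩).1 ≠ (C ⟨W' (2+1), hmem (2+1)⟩).1 := fun he => h2 (Fin.ext he)
  have n3 : (C ⟨W' 3, hmem 3⟩).1 ≠ (C ⟨W' (3+1), hmem (3+1)⟩).1 := fun he => h3 (Fin.ext he)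
  have n4 : (C ⟨W' 4, hmem 4⟩).1 ≠ (C ⟨W' 0, hmem 0⟩).1 := fun he => h4 (Fin.ext he)
  have r1 : ((0 : Fin 5) + 1) = 1 := rfl
  have r2 : ((1 : Fin 5) + 1) = 2 := rfl
  have r3 : ((2 : Fin 5) + 1) = 3 := rfl
  have r4 : ((3 : Fin 5) + 1) = 4 := rfl
  rw [r1] at n0
  rw [r2] at n1
  rw [r3] at n2
  rw [r4] at n3
  omega

namespace Splitting
variable {V : Type} [LinearOrder V] (G : SimpleGraph V)

def cyc (e : {p : V × V // G.Adj p.1 p.2 ∧ p.1 < p.2}) : Fin 5 → Vs G := fun p =>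
  match p with
  | ⟨0, _⟩ => Sum.inl e.1.1
  | ⟨1, _⟩ => Sum.inr (e, 0)
  | ⟨2, _⟩ => Sum.inr (e, 1)
  | ⟨3, _⟩ => Sum.inr (e, 2)
  | ⟨4, _⟩ => Sum.inl e.1.2

lemma cyc_adj (e : {p : V × V // G.Adj p.1 p.2 ∧ p.1 < p.2}) (p : Fin 5) :
    (addC5s G).Adj (cyc G e p) (cyc G e (p + 1)) := by
  have h1 := e.2.1
  have h2 : e.1.1 ≠ e.1.2 := ne_of_lt e.2.2
  fin_cases p <;>
    simp [cyc, addC5s, fromRel_adj, h1, h1.symm, h2, h2.symm, Fin.ext_iff, -Fin.val_eq_zero_iff]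

lemma cyc_nadj (e : {p : V × V // G.Adj p.1 p.2 ∧ p.1 < p.2}) (p q : Fin 5)
    (hq : q ≠ p + 1) (hp : p ≠ q + 1) (hpq : p ≠ q) :
    ¬ (addC5s G).Adj (cyc G e p) (cyc G e q) := by
  have h2 : e.1.1 ≠ e.1.2 := ne_of_lt e.2.2
  have h3 : e.1.2 ≠ e.1.1 := h2.symm
  fin_cases p <;> fin_cases q <;>
    simp_all [cyc, addC5s, fromRel_adj, Fin.ext_iff, h2, h3, -Fin.val_eq_zero_iff]

end Splitting

namespace Splitting
variable {V : Type} [LinearOrder V]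

def pick (G : SimpleGraph V) : Vs G → V := Sum.elim id (fun pr => pr.1.1.1)

lemma pick_cyc (G : SimpleGraph V) (e : {p : V × V // G.Adj p.1 p.2 ∧ p.1 < p.2})
    (p : Fin 5) : pick G (cyc G e p) = e.1.1 ∨ pick G (cyc G e p) = e.1.2 := by
  fin_cases p <;> simp [cyc, pick]

lemma backward [Finite V] (G : SimpleGraph V) (k ℓ : ℕ) (Gs : ℕ → FinGraph) (hk : ℓ ≤ k)
    (h0 : Gs 0 = ⟨Vs G, inferInstance, addC5s G⟩)
    (hstep : ∀ i < ℓ, (Gs i).Step (Gs (i + 1)))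
    (hperf : IsPerfect (Gs ℓ).G) :
    ∃ S : Set V, _root_.IsVertexCover G S ∧ S.ncard ≤ k := by
  classical
  let Gs' : ℕ → FinGraph := fun n => match n with
    | 0 => ⟨Vs G, inferInstance, addC5s G⟩
    | (m+1) => Gs (m+1)
  have hstep' : ∀ i < ℓ, (Gs' i).Step (Gs' (i + 1)) := by
    intro i hi
    match i with
    | 0 =>
      have h := hstep 0 hi
      rw [h0] at h
      exact h
    | (m+1) => exact hstep (m+1) hi
  have hperf' : IsPerfect (Gs' ℓ).G := by
    cases ℓ with
    | zero => rw [h0] at hperf; exact hperf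
    | succ m => exact hperf
  obtain ⟨S, hcard, hcov⟩ := back_lemma ℓ Gs' hstep'
    (fun e : {p : V × V // G.Adj p.1 p.2 ∧ p.1 < p.2} => e.1.1) (fun e => e.1.2)
    (cyc G) (pick G) (pick_cyc G) (cyc G) (cyc_adj G) (cyc_nadj G)
    (fun _ _ _ _ h => h)
  refine ⟨↑S, ?_, ?_⟩
  · intro u v huv
    rcases lt_trichotomy u v with h | h | h
    · rcases hcov ⟨(u, v), huv, h⟩ with ⟨x, hx, hxe | hxe⟩ | ⟨W', hW1, hW2⟩
      · exact Or.inl (by rw [show u = x from hxe.symm]; exact hx)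
      · exact Or.inr (by rw [show v = x from hxe.symm]; exact hx)
      · haveI := (Gs' ℓ).fin
        exact absurd (no_induced_C5 (Gs' ℓ).G hperf' W' hW1 hW2) not_false
    · exact absurd h huv.ne
    · rcases hcov ⟨(v, u), huv.symm, h⟩ with ⟨x, hx, hxe | hxe⟩ | ⟨W', hW1, hW2⟩
      · exact Or.inr (by rw [show v = x from hxe.symm]; exact hx)
      · exact Or.inl (by rw [show u = x from hxe.symm]; exact hx)
      · haveI := (Gs' ℓ).fin
        exact absurd (no_induced_C5 (Gs' ℓ).G hperf' W' hW1 hW2) not_false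
  · rw [Set.ncard_coe_finset]
    exact hcard.trans hk

end Splitting

/-- Let `G` be the 2-subdivision of a cubic graph and let `G*` be obtained from `G` by
extending every edge to a 5-cycle. Then `G` has a vertex cover of size at most `k` iff
at most `k` vertex splits can turn `G*` into a perfect graph. -/
theorem vertexCover_iff_split_to_perfect {V : Type} [Fintype V] [LinearOrder V]
    (G : SimpleGraph V)
    (hsub : ∃ (V₀ : Type) (_ : Fintype V₀) (_ : LinearOrder V₀) (H : SimpleGraph V₀)
      (_ : DecidableRel H.Adj), (∀ v, H.degree v = 3) ∧ Nonempty (G ≃g subdivision H 2))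
    (k : ℕ) :
    (∃ S : Set V, _root_.IsVertexCover G S ∧ S.ncard ≤ k) ↔
    (∃ (ℓ : ℕ) (Gs : ℕ → FinGraph), ℓ ≤ k ∧
      Gs 0 = ⟨V ⊕ ({p : V × V // G.Adj p.1 p.2 ∧ p.1 < p.2} × Fin 3), inferInstance,
        addC5s G⟩ ∧
      (∀ i < ℓ, (Gs i).Step (Gs (i + 1))) ∧
      IsPerfect ((Gs ℓ).G)) := by
  classical
  constructor
  · rintro ⟨S, hS, hcard⟩
    cases isEmpty_or_nonempty V with
    | inl hemp =>
      refine ⟨0, fun _ => ⟨Splitting.Vs G, inferInstance, addC5s G⟩, Nat.zero_le _, rfl,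
        fun i hi => absurd hi (Nat.not_lt_zero _), ?_⟩
      apply perfect_of_colorable_two
      haveI : IsEmpty (Splitting.Vs G) :=
        ⟨fun x => by rcases x with a | ⟨⟨⟨a, b⟩, -⟩, -⟩ <;> exact isEmptyElim a⟩
      exact ⟨⟨fun x => isEmptyElim x, fun {a b} _ => isEmptyElim a⟩⟩
    | inr hne =>
      obtain ⟨ℓ, Gs, h1, h2, h3, h4⟩ := Splitting.forward G k S hS hcard
      exact ⟨ℓ, Gs, h1, h2, h3, h4⟩
  · rintro ⟨ℓ, Gs, hk, h0, hstep, hperf⟩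
    exact Splitting.backward G k ℓ Gs hk h0 hstep hperf
end
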